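/- arXiv:math/9201247 — 8 statements merged into one kernel-verified Lean document; each statement's English description precedes it below -/
import Mathlib

section
/- Let β be a limit ordinal that has |β| pairwise disjoint cofinal subsets. Then for every strictly increasing sequence ⟨σ_ξ : ξ < β⟩ of ordinals with supremum α, ∏_{ξ<β} ℵ_{σ_ξ} = ℵ_α^{|β|}. -/
open Cardinal Ordinal

universe u
universe v

theorem aux_prod_comp_le {ι κ : Type u} (g : κ → ι) (hg : Function.Injective g)
    (f : ι → Cardinal.{v}) (hf : ∀ i, f i ≠ 0) :
    Cardinal.prod (fun j => f (g j)) ≤ Cardinal.prod f := by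
  have hne : ∀ i, Nonempty (f i).out := fun i =>
    Cardinal.mk_ne_zero_iff.1 (by rw [Cardinal.mk_out]; exact hf i)
  have h1 : Cardinal.prod (fun j => f (g j)) = #(Π j, (f (g j)).out) := by
    rw [Cardinal.mk_pi]; simp only [Cardinal.mk_out]
  have h2 : Cardinal.prod f = #(Π i, (f i).out) := by
    rw [Cardinal.mk_pi]; simp only [Cardinal.mk_out]
  rw [h1, h2]
  have e : #(Π j, (f (g j)).out) = #(Π i : Set.range g, (f i.1).out) :=
    Cardinal.mk_congr
      (Equiv.piCongrLeft (fun i : Set.range g => (f i.1).out) (Equiv.ofInjective g hg))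
  rw [e]
  classical
  refine ⟨⟨fun x i => if h : i ∈ Set.range g then x ⟨i, h⟩ else Classical.choice (hne i), ?_⟩⟩
  intro x y hxy
  funext s
  have := congrFun hxy s.1
  simpa [dif_pos s.2] using this

theorem aux_le_prod {ι : Type u} (f : ι → Cardinal.{v}) (hf : ∀ i, f i ≠ 0) (j : ι) :
    Cardinal.lift.{u} (f j) ≤ Cardinal.prod f := by
  have := aux_prod_comp_le (fun _ : PUnit.{u + 1} => j) (fun _ _ _ => rfl) f hf
  simpa [Cardinal.prod_const] using this

theorem aux_prod_sigma {ι : Type u} {A : ι → Type u} (f : Sigma A → Cardinal.{v}) :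
    Cardinal.prod f = Cardinal.prod (fun i => Cardinal.prod (fun a : A i => f ⟨i, a⟩)) := by
  have e : #(Π p : Sigma A, ((f p).out)) = #(Π i, Π a : A i, ((f ⟨i, a⟩).out)) :=
    Cardinal.mk_congr (Equiv.piCurry fun i a => (f ⟨i, a⟩).out)
  simp only [Cardinal.mk_pi, Cardinal.mk_out] at e
  exact e


/-- Let `β` be a limit ordinal that has `|β|` pairwise disjoint cofinal
subsets. Then for every strictly increasing sequence `⟨σ_ξ : ξ < β⟩` of ordinals with
supremum `α`, `∏_{ξ<β} ℵ_{σ_ξ} = ℵ_α ^ |β|`. -/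
theorem prod_aleph_eq_aleph_pow_of_disjoint_cofinal (β : Ordinal.{u}) (hβ : Order.IsSuccLimit β)
    (T : Set.Iio β.card.ord → Set Ordinal.{u})
    (hTsub : ∀ i, T i ⊆ Set.Iio β)
    (hTcof : ∀ i, ∀ η < β, ∃ ξ ∈ T i, η ≤ ξ)
    (hTdisj : ∀ i j, i ≠ j → Disjoint (T i) (T j))
    (σ : Ordinal.{u} → Ordinal.{u})
    (hσ : ∀ ξ η : Ordinal.{u}, ξ < η → η < β → σ ξ < σ η)
    (α : Ordinal.{u}) (hα : α = ⨆ ξ : Set.Iio β, σ ξ.1) :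
    Cardinal.prod (fun ξ : Set.Iio β => ℵ_ (σ ξ.1)) =
      Cardinal.lift.{u + 1} ((ℵ_ α) ^ β.card) := by
  have hσle : ∀ ξ η : Ordinal.{u}, η < β → ξ ≤ η → σ ξ ≤ σ η := by
    intro ξ η hη hle
    rcases lt_or_eq_of_le hle with h | h
    · exact (hσ ξ η h hη).le
    · exact h ▸ le_rfl
  have hle : ∀ ξ : Set.Iio β, σ ξ.1 ≤ α := by
    intro ξ; rw [hα]; exact Ordinal.le_iSup (fun ξ : Set.Iio β => σ ξ.1) ξ
  have hαpos : 0 < α :=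
    lt_of_le_of_lt (zero_le (a := σ 0))
      ((hσ 0 1 zero_lt_one (Ordinal.one_lt_of_isSuccLimit hβ)).trans_le (hle ⟨1, Ordinal.one_lt_of_isSuccLimit hβ⟩))
  have hαlim : Order.IsSuccLimit α := by
    rw [Ordinal.isSuccLimit_iff, Order.isSuccPrelimit_iff_succ_lt]
    refine ⟨hαpos.ne', fun γ hγ => ?_⟩
    rw [hα] at hγ
    obtain ⟨ξ, hγξ⟩ := Ordinal.lt_iSup_iff.1 hγ
    have hsucc : Order.succ ξ.1 < β := hβ.succ_lt ξ.2
    calc Order.succ γ ≤ σ ξ.1 := Order.succ_le_of_lt hγξ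
      _ < σ (Order.succ ξ.1) := hσ _ _ (Order.lt_succ ξ.1) hsucc
      _ ≤ α := hle ⟨_, hsucc⟩
  -- upper bound
  have hupper : Cardinal.prod (fun ξ : Set.Iio β => ℵ_ (σ ξ.1)) ≤
      Cardinal.lift.{u + 1, u} ((ℵ_ α) ^ β.card) := by
    calc Cardinal.prod (fun ξ : Set.Iio β => ℵ_ (σ ξ.1))
        ≤ Cardinal.prod (fun _ : Set.Iio β => (ℵ_ α : Cardinal.{u})) :=
          Cardinal.prod_le_prod (fun ξ : Set.Iio β => (ℵ_ (σ ξ.1) : Cardinal.{u}))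
            (fun _ => (ℵ_ α : Cardinal.{u})) fun ξ => aleph_le_aleph.2 (hle ξ)
      _ = Cardinal.lift.{u + 1, u} ((ℵ_ α) ^ β.card) := by
          rw [Cardinal.prod_const, Ordinal.mk_Iio_ordinal, Cardinal.lift_id'.{u, u + 1},
            Cardinal.lift_power]
  -- key per-piece lower bound
  have key : ∀ i : Set.Iio β.card.ord, Cardinal.lift.{u + 1, u} (ℵ_ α) ≤
      Cardinal.prod (fun ξ : ↥(T i) => (ℵ_ (σ ξ.1) : Cardinal.{u})) := by
    intro i
    have hbdd : BddAbove (Set.range fun γ : Set.Iio α => (ℵ_ γ.1 : Cardinal.{u})) :=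
      ⟨ℵ_ α, by rintro x ⟨γ, rfl⟩; exact aleph_le_aleph.2 γ.2.le⟩
    rw [aleph_limit hαlim, Cardinal.lift_iSup hbdd]
    refine ciSup_le' ?_
    intro γ
    have hγα : γ.1 < ⨆ ξ : Set.Iio β, σ ξ.1 := by rw [← hα]; exact γ.2
    obtain ⟨ξ, hγξ⟩ := Ordinal.lt_iSup_iff.1 hγα
    obtain ⟨η, hηT, hξη⟩ := hTcof i ξ.1 ξ.2
    have hηβ : η < β := hTsub i hηT
    have h1 : (ℵ_ γ.1 : Cardinal.{u}) ≤ ℵ_ (σ η) :=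
      aleph_le_aleph.2 ((hγξ.trans_le (hσle ξ.1 η hηβ hξη)).le)
    exact le_trans (Cardinal.lift_le.2 h1)
      (aux_le_prod (fun ξ : ↥(T i) => (ℵ_ (σ ξ.1) : Cardinal.{u}))
        (fun _ => (aleph_pos _).ne') ⟨η, hηT⟩)
  -- lower bound
  have hlower : Cardinal.lift.{u + 1, u} ((ℵ_ α) ^ β.card) ≤
      Cardinal.prod (fun ξ : Set.Iio β => ℵ_ (σ ξ.1)) := by
    have e1 : Cardinal.lift.{u + 1, u} ((ℵ_ α) ^ β.card) =
        Cardinal.prod (fun _ : Set.Iio β.card.ord => Cardinal.lift.{u + 1, u} (ℵ_ α)) := by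
      rw [Cardinal.prod_const', Ordinal.mk_Iio_ordinal, Cardinal.card_ord,
        Cardinal.lift_power]
    rw [e1]
    have hg : Function.Injective (fun p : Σ i : Set.Iio β.card.ord, ↥(T i) =>
        (⟨p.2.1, hTsub p.1 p.2.2⟩ : Set.Iio β)) := by
      rintro ⟨i, x⟩ ⟨j, y⟩ hpq
      have h2 : x.1 = y.1 := congrArg Subtype.val hpq
      have h1 : i = j := by
        by_contra hne
        exact Set.disjoint_left.1 (hTdisj i j hne) x.2 (h2 ▸ y.2)
      subst h1
      simp [Subtype.ext h2]
    calc Cardinal.prod (fun _ : Set.Iio β.card.ord => Cardinal.lift.{u + 1, u} (ℵ_ α))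
        ≤ Cardinal.prod (fun i : Set.Iio β.card.ord =>
            Cardinal.prod (fun ξ : ↥(T i) => (ℵ_ (σ ξ.1) : Cardinal.{u}))) :=
          Cardinal.prod_le_prod (fun _ : Set.Iio β.card.ord => Cardinal.lift.{u + 1, u} (ℵ_ α))
            (fun i : Set.Iio β.card.ord =>
              Cardinal.prod (fun ξ : ↥(T i) => (ℵ_ (σ ξ.1) : Cardinal.{u}))) key
      _ = Cardinal.prod (fun p : Σ i : Set.Iio β.card.ord, ↥(T i) =>
            (ℵ_ (σ p.2.1) : Cardinal.{u})) :=
          (aux_prod_sigma.{u + 1, u} (fun p : Σ i : Set.Iio β.card.ord, ↥(T i) =>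
            (ℵ_ (σ p.2.1) : Cardinal.{u}))).symm
      _ ≤ Cardinal.prod (fun ξ : Set.Iio β => ℵ_ (σ ξ.1)) :=
          aux_prod_comp_le _ hg (fun ξ : Set.Iio β => ℵ_ (σ ξ.1))
            (fun _ => (aleph_pos _).ne')
  exact le_antisymm hupper hlower
end

section
/- Let γ be an ordinal such that ℵ_γ is a singular cardinal of cofinality ℵ₁, ℵ_γ > ℵ_{ω₁}^{ℵ₁}, and ℵ_γ^{ℵ₁} > ℵ_{γ+ω}^{ℵ₀}. Then ∏_{ξ<ω₁} ℵ_ξ · ∏_{n<ω} ℵ_{γ+n} = ℵ_{ω₁}^{ℵ₁} · ℵ_{γ+ω}^{ℵ₀} < ℵ_{γ+ω}^{ℵ₁}; in particular the increasing sequence ⟨ℵ_ξ : ξ < ω₁⟩ followed by ⟨ℵ_{γ+n} : n < ω⟩, of length ω₁ + ω, is a counterexample to Tarski's conjecture. -/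
open Cardinal Ordinal

universe u
universe w v

open Set

set_option maxHeartbeats 1000000

lemma lift_le_prod {ι : Type w} (f : ι → Cardinal.{v}) (h : ∀ j, f j ≠ 0) (i : ι) :
    Cardinal.lift.{w} (f i) ≤ Cardinal.prod f := by
  classical
  have hne : ∀ j, Nonempty (f j).out := fun j => mk_ne_zero_iff.1 (by rw [mk_out]; exact h j)
  rw [Cardinal.prod, ← mk_out (f i), ← mk_uLift]
  refine ⟨⟨fun x j => if hj : j = i then (hj ▸ x.down) else (hne j).some, fun x y hxy => ?_⟩⟩
  have h2 := congrFun hxy i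
  simp only [dif_pos] at h2
  exact ULift.ext _ _ h2

lemma prod_fiberwise' {ι K : Type w} (f : ι → Cardinal.{v}) (p : ι → K) :
    Cardinal.prod (fun k => Cardinal.prod (fun i : {i // p i = k} => f i.1)) = Cardinal.prod f := by
  have h1 : ∀ k, Cardinal.prod (fun i : {i // p i = k} => f i.1)
      = #(Π i : {i // p i = k}, (f i.1).out) := by
    intro k; rw [mk_pi]; simp [mk_out]
  simp_rw [h1]
  rw [← mk_pi]
  conv_rhs => rw [Cardinal.prod]
  apply mk_congr
  exact ((Equiv.piCurry fun k (i : {i // p i = k}) => (f i.1).out).symm.trans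
    (Equiv.piCongrLeft (fun i => (f i).out) (Equiv.sigmaFiberEquiv p)))

lemma master {ι : Type w} (f : ι → Cardinal.{v}) (c : Cardinal.{v})
    (hι : ℵ₀ ≤ #ι) (hub : ∀ i, f i ≤ c)
    (H : ∀ A : Set ι, #A = #ι → Cardinal.lift.{w} c ≤ Cardinal.prod (fun i : A => f i.1)) :
    Cardinal.prod f = Cardinal.lift.{w} c ^ Cardinal.lift.{v} #ι := by
  apply le_antisymm
  · calc Cardinal.prod f ≤ Cardinal.prod (fun _ : ι => c) :=
          Cardinal.prod_le_prod _ _ hub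
      _ = Cardinal.lift.{w} c ^ Cardinal.lift.{v} #ι := Cardinal.prod_const ι c
  · have hmul : #(ι × ι) = #ι := by
      rw [mk_prod]
      simpa using Cardinal.mul_eq_self hι
    obtain ⟨e⟩ := Cardinal.eq.1 hmul.symm
    set p : ι → ι := fun i => (e i).1 with hp
    have hA : ∀ k, #{i : ι // p i = k} = #ι := by
      intro k
      refine mk_congr ⟨fun i => (e i.1).2, fun y => ⟨e.symm (k, y), by simp [hp]⟩, ?_, ?_⟩
      · rintro ⟨i, hi⟩
        simp only [hp] at hi
        apply Subtype.ext
        show (e.symm (k, (e i).2) : ι) = i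
        rw [← hi]
        exact e.symm_apply_apply i
      · intro y
        simp [hp]
    have hconst : Cardinal.prod (fun _ : ι => Cardinal.lift.{w} c)
        = Cardinal.lift.{w} c ^ Cardinal.lift.{v} #ι := by
      rw [Cardinal.prod_const]
      congr 1
      · exact Cardinal.lift_lift c
      · exact congrFun Cardinal.lift_umax.{w,v} #ι
    calc Cardinal.lift.{w} c ^ Cardinal.lift.{v} #ι
        = Cardinal.prod (fun _ : ι => Cardinal.lift.{w} c) := hconst.symm
      _ ≤ Cardinal.prod (fun k => Cardinal.prod (fun i : {i // p i = k} => f i.1)) := by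
          refine Cardinal.prod_le_prod _ _ fun k => ?_
          exact H {i | p i = k} (hA k)
      _ = Cardinal.prod f := prod_fiberwise' f p

open Set
lemma prod_aleph_omega1 :
    Cardinal.prod (fun ξ : Set.Iio (ω₁ : Ordinal.{u}) => ℵ_ ξ.1)
      = Cardinal.lift.{u+1} ((ℵ_ (ω₁ : Ordinal.{u})) ^ (ℵ₁ : Cardinal.{u})) := by
  have hmk : #(Set.Iio (ω₁ : Ordinal.{u})) = Cardinal.lift.{u+1} (ℵ₁ : Cardinal.{u}) := by
    rw [Ordinal.mk_Iio_ordinal, Ordinal.card_omega]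
  have h := master.{u+1, u} (fun ξ : Set.Iio (ω₁ : Ordinal.{u}) => ℵ_ ξ.1) (ℵ_ (ω₁ : Ordinal.{u}))
    (by rw [hmk]; simpa using aleph0_le_aleph 1)
    (fun ξ => aleph_le_aleph.2 ξ.2.le)
    ?_
  · rw [h, hmk, Cardinal.lift_power, Cardinal.lift_lift]
  · intro A hA
    rw [hmk] at hA
    have hbdd : BddAbove (range fun a : Set.Iio (ω₁ : Ordinal.{u}) => ℵ_ a.1) := by
      refine ⟨ℵ_ ω₁, ?_⟩
      rintro _ ⟨a, rfl⟩
      exact aleph_le_aleph.2 a.2.le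
    rw [aleph_limit (isSuccLimit_omega 1), Cardinal.lift_iSup hbdd]
    have : Nonempty (Set.Iio (ω₁ : Ordinal.{u})) := ⟨⟨0, omega_pos 1⟩⟩
    refine ciSup_le fun ξ => ?_
    have hex : ∃ i : A, ξ.1 ≤ (i : Set.Iio (ω₁ : Ordinal.{u})).1 := by
      by_contra h'
      push_neg at h'
      have hinj : #A ≤ #(Set.Iio ξ.1) := by
        refine ⟨⟨fun i => ⟨i.1.1, h' i⟩, fun i j hij => ?_⟩⟩
        simp only [Subtype.mk.injEq] at hij
        exact Subtype.ext (Subtype.ext (Subtype.mk.inj hij))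
      rw [hA, Ordinal.mk_Iio_ordinal, Cardinal.lift_le] at hinj
      have hlt : ξ.1.card < ℵ₁ := by
        rw [← Cardinal.lt_ord, ord_aleph]
        exact ξ.2
      exact hlt.not_ge hinj
    obtain ⟨i, hi⟩ := hex
    calc Cardinal.lift.{u+1} (ℵ_ ξ.1) ≤ Cardinal.lift.{u+1} (ℵ_ (i : Set.Iio (ω₁ : Ordinal.{u})).1) :=
          Cardinal.lift_le.2 (aleph_le_aleph.2 hi)
      _ ≤ Cardinal.prod (fun i : A => ℵ_ (i : Set.Iio (ω₁ : Ordinal.{u})).1) :=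
          lift_le_prod.{u+1,u} (fun i : A => ℵ_ (i : Set.Iio (ω₁ : Ordinal.{u})).1)
            (fun j => (aleph_pos _).ne') i

lemma prod_aleph_nat (γ : Ordinal.{u}) :
    Cardinal.prod (fun n : ℕ => ℵ_ (γ + n)) = (ℵ_ (γ + ω)) ^ (ℵ₀ : Cardinal.{u}) := by
  have h := master.{0, u} (fun n : ℕ => ℵ_ (γ + (n : Ordinal.{u}))) (ℵ_ (γ + ω))
    (by simp)
    (fun n => aleph_le_aleph.2 (add_le_add_right (nat_lt_omega0 n).le γ))
    ?_
  · rw [h]; simp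
  · intro A hA
    have hAinf : A.Infinite := by
      rw [← Set.infinite_coe_iff, Cardinal.infinite_iff, hA]
      simp
    have hbdd : BddAbove (range fun a : Set.Iio (γ + ω) => ℵ_ a.1) := by
      refine ⟨ℵ_ (γ + ω), ?_⟩
      rintro _ ⟨a, rfl⟩
      exact aleph_le_aleph.2 a.2.le
    rw [aleph_limit (isSuccLimit_add γ isSuccLimit_omega0), Cardinal.lift_iSup hbdd]
    have : Nonempty (Set.Iio (γ + ω)) := ⟨⟨γ, by simpa using omega0_pos⟩⟩
    refine ciSup_le fun a => ?_
    obtain ⟨b, hb, hab⟩ := ((isNormal_add_right γ).lt_iff_exists_lt isSuccLimit_omega0).1 a.2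
    obtain ⟨n, rfl⟩ := lt_omega0.1 hb
    obtain ⟨m, hmA, hnm⟩ := hAinf.exists_gt n
    calc Cardinal.lift.{0} (ℵ_ a.1) ≤ Cardinal.lift.{0} (ℵ_ (γ + m)) := by
          refine Cardinal.lift_le.2 (aleph_le_aleph.2 (hab.le.trans ?_))
          exact add_le_add_right (by exact_mod_cast Nat.cast_le.2 hnm.le) γ
      _ ≤ Cardinal.prod (fun i : A => ℵ_ (γ + (i.1 : Ordinal.{u}))) :=
          lift_le_prod.{0,u} (fun i : A => ℵ_ (γ + (i.1 : Ordinal.{u})))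
            (fun j => (aleph_pos _).ne') ⟨m, hmA⟩


lemma prod_split (γ : Ordinal.{u}) (σ : Ordinal.{u} → Ordinal.{u})
    (h1 : ∀ ξ < (ω₁ : Ordinal.{u}), σ ξ = ξ)
    (h2 : ∀ n : ℕ, σ ((ω₁ : Ordinal.{u}) + n) = γ + n) :
    Cardinal.prod (fun ξ : Set.Iio ((ω₁ : Ordinal.{u}) + ω) => ℵ_ (σ ξ.1)) =
      Cardinal.prod (fun ξ : Set.Iio (ω₁ : Ordinal.{u}) => ℵ_ ξ.1) *
        Cardinal.lift.{u+1} (Cardinal.prod fun n : ℕ => ℵ_ (γ + n)) := by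
  set g : (Set.Iio (ω₁ : Ordinal.{u})) ⊕ ℕ → Set.Iio ((ω₁ : Ordinal.{u}) + ω) :=
    fun s => Sum.rec (fun a => ⟨a.1, lt_of_lt_of_le a.2 (le_self_add (a := ω₁) (b := ω))⟩)
      (fun n => ⟨ω₁ + n, add_lt_add_right (nat_lt_omega0 n) ω₁⟩) s with hg
  have hginj : Function.Injective g := by
    rintro (a | n) (b | m) hab
    all_goals simp only [hg, Subtype.mk.injEq] at hab
    · exact congrArg Sum.inl (Subtype.ext (Subtype.mk.inj hab))
    · exact absurd (congrArg Subtype.val hab) (ne_of_lt (lt_of_lt_of_le a.2 (le_self_add (a := ω₁) (b := (m : Ordinal.{u})))))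
    · exact absurd (congrArg Subtype.val hab).symm (ne_of_lt (lt_of_lt_of_le b.2 (le_self_add (a := ω₁) (b := (n : Ordinal.{u})))))
    · have hnm : (n : Ordinal.{u}) = m := (add_left_cancel_iff (a := ω₁)).1 (congrArg Subtype.val hab)
      exact congrArg Sum.inr (by exact_mod_cast hnm)
  have hgsurj : Function.Surjective g := by
    rintro ⟨ξ, hξ⟩
    rcases lt_or_ge ξ ω₁ with h | h
    · exact ⟨Sum.inl ⟨ξ, h⟩, rfl⟩
    · obtain ⟨n, hn⟩ := lt_omega0.1 (sub_lt_of_lt_add hξ omega0_pos)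
      refine ⟨Sum.inr n, ?_⟩
      simp only [hg]
      apply Subtype.ext
      show (ω₁ : Ordinal.{u}) + (n : Ordinal.{u}) = ξ
      rw [← hn]
      exact Ordinal.add_sub_cancel_of_le h
  set e : (Set.Iio (ω₁ : Ordinal.{u})) ⊕ ℕ ≃ Set.Iio ((ω₁ : Ordinal.{u}) + ω) :=
    Equiv.ofBijective g ⟨hginj, hgsurj⟩ with he
  have L : Cardinal.prod (fun ξ : Set.Iio ((ω₁ : Ordinal.{u}) + ω) => ℵ_ (σ ξ.1))
      = #(Π ξ : Set.Iio ((ω₁ : Ordinal.{u}) + ω), (ℵ_ (σ ξ.1)).out) := by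
    rw [mk_pi]; simp [mk_out]
  have R1 : Cardinal.prod (fun ξ : Set.Iio (ω₁ : Ordinal.{u}) => ℵ_ ξ.1)
      = #(Π a : Set.Iio (ω₁ : Ordinal.{u}), (ℵ_ a.1).out) := by
    rw [mk_pi]; simp [mk_out]
  have R2 : Cardinal.prod (fun n : ℕ => ℵ_ (γ + n))
      = #(Π n : ℕ, (ℵ_ (γ + (n : Ordinal.{u}))).out) := by
    rw [mk_pi]; simp [mk_out]
  have E : (Π ξ : Set.Iio ((ω₁ : Ordinal.{u}) + ω), (ℵ_ (σ ξ.1)).out) ≃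
      (Π a : Set.Iio (ω₁ : Ordinal.{u}), (ℵ_ a.1).out) ×
        (Π n : ℕ, (ℵ_ (γ + (n : Ordinal.{u}))).out) :=
    (Equiv.piCongrLeft' _ e.symm).trans <| (Equiv.sumPiEquivProdPi _).trans <|
      Equiv.prodCongr
        (Equiv.piCongrRight fun a => Equiv.cast
          (congrArg (fun o => (ℵ_ o).out) (h1 a.1 a.2)))
        (Equiv.piCongrRight fun n => Equiv.cast
          (congrArg (fun o => (ℵ_ o).out) (h2 n)))
  calc #(Π ξ : Set.Iio ((ω₁ : Ordinal.{u}) + ω), (ℵ_ (σ ξ.1)).out)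
      = #((Π a : Set.Iio (ω₁ : Ordinal.{u}), (ℵ_ a.1).out) ×
          (Π n : ℕ, (ℵ_ (γ + (n : Ordinal.{u}))).out)) := mk_congr E
    _ = Cardinal.lift.{u} #(Π a : Set.Iio (ω₁ : Ordinal.{u}), (ℵ_ a.1).out) *
          Cardinal.lift.{u+1} #(Π n : ℕ, (ℵ_ (γ + (n : Ordinal.{u}))).out) := mk_prod _ _
    _ = #(Π a : Set.Iio (ω₁ : Ordinal.{u}), (ℵ_ a.1).out) *
          Cardinal.lift.{u+1} #(Π n : ℕ, (ℵ_ (γ + (n : Ordinal.{u}))).out) := by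
        rw [Cardinal.lift_id'.{u,u+1}]



/-- Let `γ` be an ordinal such that `ℵ_γ` is a singular cardinal of
cofinality `ℵ₁`, `ℵ_γ > ℵ_{ω₁} ^ ℵ₁`, and `ℵ_γ ^ ℵ₁ > ℵ_{γ+ω} ^ ℵ₀`.  Then
`∏_{ξ<ω₁} ℵ_ξ ⬝ ∏_{n<ω} ℵ_{γ+n} = ℵ_{ω₁}^{ℵ₁} ⬝ ℵ_{γ+ω}^{ℵ₀} < ℵ_{γ+ω}^{ℵ₁}`; in
particular the sequence `⟨ℵ_ξ : ξ < ω₁⟩` followed by `⟨ℵ_{γ+n} : n < ω⟩`, of length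
`ω₁ + ω`, is a counterexample to Tarski's conjecture. -/
theorem tarski_counterexample_of_singular (γ : Ordinal.{u})
    (hcof : (ℵ_ γ).ord.cof = ℵ₁) (hsing : ℵ₁ < ℵ_ γ)
    (hbig : (ℵ_ ω₁) ^ (ℵ₁ : Cardinal.{u}) < ℵ_ γ)
    (hpow : (ℵ_ (γ + ω)) ^ (ℵ₀ : Cardinal.{u}) < (ℵ_ γ) ^ (ℵ₁ : Cardinal.{u})) :
    (Cardinal.prod (fun ξ : Set.Iio (ω₁ : Ordinal.{u}) => ℵ_ ξ.1) *
        Cardinal.lift.{u + 1} (Cardinal.prod fun n : ℕ => ℵ_ (γ + n)) =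
      Cardinal.lift.{u + 1} ((ℵ_ ω₁) ^ (ℵ₁ : Cardinal.{u}) *
        (ℵ_ (γ + ω)) ^ (ℵ₀ : Cardinal.{u}))) ∧
    (ℵ_ ω₁) ^ (ℵ₁ : Cardinal.{u}) * (ℵ_ (γ + ω)) ^ (ℵ₀ : Cardinal.{u}) <
      (ℵ_ (γ + ω)) ^ (ℵ₁ : Cardinal.{u}) ∧
    (∀ σ : Ordinal.{u} → Ordinal.{u},
      (∀ ξ < (ω₁ : Ordinal.{u}), σ ξ = ξ) →
      (∀ n : ℕ, σ ((ω₁ : Ordinal.{u}) + n) = γ + n) →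
        (∀ ξ η : Ordinal.{u}, ξ < η → η < (ω₁ : Ordinal.{u}) + ω → σ ξ < σ η) ∧
        (⨆ ξ : Set.Iio ((ω₁ : Ordinal.{u}) + ω), σ ξ.1) = γ + ω ∧
        Cardinal.prod (fun ξ : Set.Iio ((ω₁ : Ordinal.{u}) + ω) => ℵ_ (σ ξ.1)) <
          Cardinal.lift.{u + 1} ((ℵ_ (γ + ω)) ^ ((ω₁ : Ordinal.{u}) + ω).card)) := by
  have h1ℵ₁ : (1 : Cardinal.{u}) ≤ ℵ₁ := one_le_aleph0.trans (aleph0_le_aleph 1)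
  have hω₁γ : (ω₁ : Ordinal.{u}) < γ :=
    aleph_lt_aleph.1 ((self_le_power _ h1ℵ₁).trans_lt hbig)
  have part2 : (ℵ_ ω₁) ^ (ℵ₁ : Cardinal.{u}) * (ℵ_ (γ + ω)) ^ (ℵ₀ : Cardinal.{u}) <
      (ℵ_ (γ + ω)) ^ (ℵ₁ : Cardinal.{u}) := by
    have hinf : ℵ₀ ≤ (ℵ_ (γ + ω)) ^ (ℵ₁ : Cardinal.{u}) :=
      (aleph0_le_aleph _).trans (self_le_power _ h1ℵ₁)
    have ha : (ℵ_ ω₁) ^ (ℵ₁ : Cardinal.{u}) < (ℵ_ (γ + ω)) ^ (ℵ₁ : Cardinal.{u}) :=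
      hbig.trans_le ((aleph_le_aleph.2 (le_self_add (a := γ) (b := ω))).trans (self_le_power _ h1ℵ₁))
    have hb : (ℵ_ (γ + ω)) ^ (ℵ₀ : Cardinal.{u}) < (ℵ_ (γ + ω)) ^ (ℵ₁ : Cardinal.{u}) :=
      hpow.trans_le (power_le_power_right (aleph_le_aleph.2 (le_self_add (a := γ) (b := ω))))
    exact Cardinal.mul_lt_of_lt hinf ha hb
  have hcard : ((ω₁ : Ordinal.{u}) + ω).card = (ℵ₁ : Cardinal.{u}) := by
    rw [Ordinal.card_add, Ordinal.card_omega, card_omega0]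
    exact Cardinal.add_eq_left (aleph0_le_aleph 1) (aleph0_le_aleph 1)
  refine ⟨?_, part2, ?_⟩
  · rw [prod_aleph_omega1, prod_aleph_nat, ← Cardinal.lift_mul]
  · intro σ h1 h2
    have hmono : ∀ ξ η : Ordinal.{u}, ξ < η → η < (ω₁ : Ordinal.{u}) + ω → σ ξ < σ η := by
      intro ξ η hlt hη
      rcases lt_or_ge η ω₁ with hη' | hη'
      · rw [h1 ξ (hlt.trans hη'), h1 η hη']
        exact hlt
      · obtain ⟨n, hn⟩ := lt_omega0.1 (sub_lt_of_lt_add hη omega0_pos)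
        have hηeq : η = (ω₁ : Ordinal.{u}) + n := by
          rw [← hn, Ordinal.add_sub_cancel_of_le hη']
        rcases lt_or_ge ξ ω₁ with hξ' | hξ'
        · rw [h1 ξ hξ', hηeq, h2 n]
          exact lt_of_lt_of_le (hξ'.trans hω₁γ) (le_self_add (a := γ) (b := (n : Ordinal.{u})))
        · obtain ⟨m, hm⟩ := lt_omega0.1 (sub_lt_of_lt_add (hlt.trans hη) omega0_pos)
          have hξeq : ξ = (ω₁ : Ordinal.{u}) + m := by
            rw [← hm, Ordinal.add_sub_cancel_of_le hξ']
          have hmn : (m : Ordinal.{u}) < n := by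
            rw [hξeq, hηeq] at hlt
            exact (add_lt_add_iff_left _).1 hlt
          rw [hξeq, hηeq, h2 m, h2 n]
          exact add_lt_add_right hmn γ
    have hbd : ∀ ξ : Set.Iio ((ω₁ : Ordinal.{u}) + ω), σ ξ.1 ≤ γ + ω := by
      rintro ⟨ξ, hξ⟩
      show σ ξ ≤ γ + ω
      rcases lt_or_ge ξ ω₁ with h | h
      · rw [h1 ξ h]
        exact ((h.trans hω₁γ).trans_le (le_self_add (a := γ) (b := ω))).le
      · obtain ⟨n, hn⟩ := lt_omega0.1 (sub_lt_of_lt_add hξ omega0_pos)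
        have : ξ = (ω₁ : Ordinal.{u}) + n := by
          rw [← hn, Ordinal.add_sub_cancel_of_le h]
        rw [this, h2 n]
        exact (add_lt_add_right (nat_lt_omega0 n) γ).le
    have hBdd : BddAbove (Set.range fun ξ : Set.Iio ((ω₁ : Ordinal.{u}) + ω) => σ ξ.1) := by
      refine ⟨γ + ω, ?_⟩
      rintro _ ⟨ξ, rfl⟩
      exact hbd ξ
    have hne : Nonempty (Set.Iio ((ω₁ : Ordinal.{u}) + ω)) :=
      ⟨⟨0, (omega_pos 1).trans_le (le_self_add (a := ω₁) (b := ω))⟩⟩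
    have hsup : (⨆ ξ : Set.Iio ((ω₁ : Ordinal.{u}) + ω), σ ξ.1) = γ + ω := by
      apply le_antisymm
      · exact ciSup_le hbd
      · refine le_of_forall_lt fun b hb => ?_
        obtain ⟨c, hc, hbc⟩ := ((isNormal_add_right γ).lt_iff_exists_lt isSuccLimit_omega0).1 hb
        obtain ⟨n, rfl⟩ := lt_omega0.1 hc
        have hmem : (ω₁ : Ordinal.{u}) + n < (ω₁ : Ordinal.{u}) + ω :=
          add_lt_add_right (nat_lt_omega0 n) ω₁
        have : γ + n ≤ ⨆ ξ : Set.Iio ((ω₁ : Ordinal.{u}) + ω), σ ξ.1 := by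
          have := le_ciSup hBdd (⟨(ω₁ : Ordinal.{u}) + n, hmem⟩ : Set.Iio ((ω₁ : Ordinal.{u}) + ω))
          rwa [h2 n] at this
        exact hbc.trans_le this
    refine ⟨hmono, hsup, ?_⟩
    rw [prod_split γ σ h1 h2, prod_aleph_omega1, prod_aleph_nat, ← Cardinal.lift_mul, hcard]
    exact Cardinal.lift_lt.2 part2
end

section
/- Let β be a limit ordinal, κ = |β|, and let ⟨σ_ξ : ξ < β⟩ be a strictly increasing sequence of ordinals with supremum α such that ∏_{ξ<β} ℵ_{σ_ξ} < ℵ_α^{κ}. Then cf(β) < κ < β, and there exists an ordinal γ < α such that ℵ_γ^{κ} > ℵ_α. -/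
set_option maxHeartbeats 1000000


open Cardinal Ordinal

universe u

section Aux

/-- A single factor is at most the product, if all factors are nonzero. -/
private theorem le_prod_aux {ι : Type u} (f : ι → Cardinal.{u}) (h1 : ∀ i, f i ≠ 0) (i₀ : ι) :
    f i₀ ≤ Cardinal.prod f := by
  classical
  have hd : ∀ i, Nonempty (f i).out := fun i =>
    Cardinal.mk_ne_zero_iff.1 (by rw [mk_out]; exact h1 i)
  have : Cardinal.prod f = #(Π i, (f i).out) := rfl
  rw [this, ← mk_out (f i₀)]
  exact ⟨⟨Function.update (fun i => (hd i).some) i₀,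
    Function.update_injective (β := fun i => (f i).out) (fun i => (hd i).some) i₀⟩⟩

/-- `(∏ f) ^ c = ∏ (f i ^ c)`. -/
private theorem prod_power_aux {ι : Type u} (f : ι → Cardinal.{u}) (c : Cardinal.{u}) :
    (Cardinal.prod f) ^ c = Cardinal.prod (fun i => f i ^ c) := by
  have h1 : Cardinal.prod f = #(Π i, (f i).out) := rfl
  calc (Cardinal.prod f) ^ c = #(Π i, (f i).out) ^ #(c.out) := by rw [h1, mk_out]
    _ = #(c.out → Π i, (f i).out) := Cardinal.power_def _ _
    _ = #(Π i, c.out → (f i).out) := mk_congr (Equiv.piComm _)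
    _ = Cardinal.prod (fun i => #(c.out → (f i).out)) := mk_pi _
    _ = Cardinal.prod (fun i => f i ^ c) := by
        refine congrArg Cardinal.prod (funext fun i => ?_)
        conv_rhs => rw [← mk_out (f i), ← mk_out c, Cardinal.power_def]

/-- Product over a sigma type is the iterated product. -/
private theorem prod_sigma_aux {ι : Type u} {F : ι → Type u} (g : (Σ j, F j) → Cardinal.{u}) :
    Cardinal.prod g =
      Cardinal.prod (fun j => Cardinal.prod (fun x : F j => g ⟨j, x⟩)) := by
  have h1 : Cardinal.prod g = #(Π p : Σ j, F j, (g p).out) := rfl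
  calc Cardinal.prod g = #(Π p : Σ j, F j, (g p).out) := rfl
    _ = #(Π j, Π x : F j, (g ⟨j, x⟩).out) := mk_congr (Equiv.piCurry fun a b => (g ⟨a, b⟩).out)
    _ = Cardinal.prod (fun j => #(Π x : F j, (g ⟨j, x⟩).out)) := mk_pi _
    _ = Cardinal.prod (fun j => Cardinal.prod (fun x : F j => g ⟨j, x⟩)) := by
        refine congrArg Cardinal.prod (funext fun j => ?_)
        rw [mk_pi]
        exact congrArg Cardinal.prod (funext fun x => mk_out _)

/-- Reindexing a product along an equivalence. -/
private theorem prod_reindex_aux {ι ι' : Type u} (e : ι ≃ ι') (f : ι' → Cardinal.{u}) :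
    Cardinal.prod (fun i => f (e i)) = Cardinal.prod f :=
  mk_congr (Equiv.piCongrLeft (fun i' => (f i').out) e)

/-- A product over a subfamily (indexed in a lower universe) is at most the whole product. -/
private theorem lift_prod_le_prod_aux {ι : Type u} {ι' : Type (u + 1)} (f : ι' → Cardinal.{u})
    (h1 : ∀ j, f j ≠ 0) (m : ι → ι') (hm : Function.Injective m) :
    Cardinal.lift.{u + 1} (Cardinal.prod (fun i => f (m i))) ≤ Cardinal.prod f := by
  classical
  have hd : ∀ j, Nonempty (f j).out := fun j =>
    Cardinal.mk_ne_zero_iff.1 (by rw [mk_out]; exact h1 j)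
  set S : Set ι' := Set.range m with hS
  -- the left product is (up to lift) the product over `S`
  have hleft : Cardinal.lift.{u + 1} (Cardinal.prod (fun i => f (m i)))
      = #(Π a : S, (f a.1).out) := by
    have h2 : Cardinal.prod (fun i => f (m i)) = #(Π i : ι, (f (m i)).out) := rfl
    have e : (Π i : ι, (f (m i)).out) ≃ (Π a : S, (f a.1).out) :=
      Equiv.piCongrLeft (fun a : S => (f a.1).out) (Equiv.ofInjective m hm)
    have h6 := Cardinal.lift_mk_eq'.2 ⟨e⟩
    rw [Cardinal.lift_id'.{u, u + 1}] at h6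
    rw [h2, h6]
  -- the whole product splits as a product over `S` times a product over `Sᶜ`
  have hsplit : Cardinal.prod f
      = #(Π a : S, (f a.1).out) * #(Π b : ↥Sᶜ, (f b.1).out) := by
    have h3 : Cardinal.prod f = #(Π j : ι', (f j).out) := rfl
    have e1 : (Π j : ι', (f j).out) ≃ Π p : ↥S ⊕ ↥Sᶜ, (f (Equiv.Set.sumCompl S p)).out :=
      (Equiv.piCongrLeft (fun j => (f j).out) (Equiv.Set.sumCompl S)).symm
    have e2 : (Π p : ↥S ⊕ ↥Sᶜ, (f (Equiv.Set.sumCompl S p)).out)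
        ≃ (Π a : S, (f (Equiv.Set.sumCompl S (Sum.inl a))).out)
          × (Π b : ↥Sᶜ, (f (Equiv.Set.sumCompl S (Sum.inr b))).out) :=
      Equiv.sumPiEquivProdPi _
    have h4 : ∀ a : S, Equiv.Set.sumCompl S (Sum.inl a) = a.1 := fun a => by simp
    have h5 : ∀ b : ↥Sᶜ, Equiv.Set.sumCompl S (Sum.inr b) = b.1 := fun b => by simp
    have e3 : (Π a : S, (f (Equiv.Set.sumCompl S (Sum.inl a))).out) ≃ (Π a : S, (f a.1).out) :=
      Equiv.piCongrRight fun a => Equiv.cast (congrArg (fun t => (f t).out) (h4 a))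
    have e4 : (Π b : ↥Sᶜ, (f (Equiv.Set.sumCompl S (Sum.inr b))).out)
        ≃ (Π b : ↥Sᶜ, (f b.1).out) :=
      Equiv.piCongrRight fun b => Equiv.cast (congrArg (fun t => (f t).out) (h5 b))
    rw [h3, mk_congr ((e1.trans e2).trans (Equiv.prodCongr e3 e4)), mk_prod]
    simp only [Cardinal.lift_id]
  have hne : (1 : Cardinal) ≤ #(Π b : ↥Sᶜ, (f b.1).out) := by
    rw [Cardinal.one_le_iff_ne_zero, Cardinal.mk_ne_zero_iff]
    exact ⟨fun b => (hd b.1).some⟩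
  calc Cardinal.lift.{u + 1} (Cardinal.prod (fun i => f (m i)))
      = #(Π a : S, (f a.1).out) * 1 := by rw [hleft, mul_one]
    _ ≤ #(Π a : S, (f a.1).out) * #(Π b : ↥Sᶜ, (f b.1).out) := by
        exact mul_le_mul_right hne _
    _ = Cardinal.prod f := hsplit.symm

end Aux

section Main

variable {β : Ordinal.{u}} {σ : Ordinal.{u} → Ordinal.{u}} {α : Ordinal.{u}}

private theorem bdd_aux (β : Ordinal.{u}) (σ : Ordinal.{u} → Ordinal.{u}) :
    BddAbove (Set.range fun ξ : Set.Iio β => σ ξ.1) := by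
  have : Small.{u} (Set.range fun ξ : Set.Iio β => σ ξ.1) := small_range _
  exact Ordinal.bddAbove_of_small

private theorem sigma_lt_aux (hβ : Order.IsSuccLimit β)
    (hσ : ∀ ξ η : Ordinal.{u}, ξ < η → η < β → σ ξ < σ η)
    (hα : α = ⨆ ξ : Set.Iio β, σ ξ.1) : ∀ ξ, ξ < β → σ ξ < α := by
  intro ξ hξ
  have h1 : σ ξ < σ (Order.succ ξ) := hσ _ _ (Order.lt_succ ξ) (hβ.succ_lt hξ)
  have h2 : σ (Order.succ ξ) ≤ α := by
    rw [hα]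
    exact le_ciSup (bdd_aux β σ) (⟨Order.succ ξ, hβ.succ_lt hξ⟩ : Set.Iio β)
  exact h1.trans_le h2

private theorem alpha_limit_aux (hβ : Order.IsSuccLimit β)
    (hσ : ∀ ξ η : Ordinal.{u}, ξ < η → η < β → σ ξ < σ η)
    (hα : α = ⨆ ξ : Set.Iio β, σ ξ.1) : Order.IsSuccLimit α := by
  have hne : Nonempty (Set.Iio β) := ⟨⟨0, hβ.pos⟩⟩
  rw [Ordinal.isSuccLimit_iff, Order.isSuccPrelimit_iff_succ_lt]
  constructor
  · exact ((zero_le (a := σ 0)).trans_lt (sigma_lt_aux hβ hσ hα 0 hβ.pos)).ne'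
  · intro a ha
    rw [hα] at ha
    obtain ⟨ξ, hξ⟩ := (lt_ciSup_iff (bdd_aux β σ)).1 ha
    exact (Order.succ_le_of_lt hξ).trans_lt (sigma_lt_aux hβ hσ hα ξ.1 ξ.2)

/-- If the image of `c` is unbounded in `β`, then `ℵ_α ≤ ∏ ℵ_(σ (c i))`. -/
private theorem aleph_le_prod_aux (hβ : Order.IsSuccLimit β)
    (hσ : ∀ ξ η : Ordinal.{u}, ξ < η → η < β → σ ξ < σ η)
    (hα : α = ⨆ ξ : Set.Iio β, σ ξ.1)
    {ι : Type u} (c : ι → Ordinal.{u}) (hcβ : ∀ i, c i < β)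
    (hub : ∀ x, x < β → ∃ i, x ≤ c i) :
    ℵ_ α ≤ Cardinal.prod (fun i => ℵ_ (σ (c i))) := by
  have hαlim := alpha_limit_aux hβ hσ hα
  have : Nonempty (Set.Iio α) := ⟨⟨0, hαlim.pos⟩⟩
  have : Nonempty (Set.Iio β) := ⟨⟨0, hβ.pos⟩⟩
  rw [aleph_limit hαlim]
  refine ciSup_le' ?_
  intro a
  have ha : a.1 < ⨆ ξ : Set.Iio β, σ ξ.1 := by rw [← hα]; exact a.2
  obtain ⟨ξ, hξ⟩ := (lt_ciSup_iff (bdd_aux β σ)).1 ha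
  obtain ⟨i, hi⟩ := hub ξ.1 ξ.2
  have hσle : σ ξ.1 ≤ σ (c i) := by
    rcases eq_or_lt_of_le hi with h | h
    · rw [h]
    · exact (hσ _ _ h (hcβ i)).le
  calc ℵ_ a.1 ≤ ℵ_ (σ (c i)) := aleph_le_aleph.2 (hξ.le.trans hσle)
    _ ≤ Cardinal.prod (fun i => ℵ_ (σ (c i))) :=
        le_prod_aux _ (fun i => (aleph_pos _).ne') i

/-- Key lemma: a family of size `ν` all of whose full-size subfamilies are unbounded in `β`
forces `ℵ_α ^ ν ≤ ∏_{ξ<β} ℵ_(σ ξ)`. -/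
private theorem key_aux (hβ : Order.IsSuccLimit β)
    (hσ : ∀ ξ η : Ordinal.{u}, ξ < η → η < β → σ ξ < σ η)
    (hα : α = ⨆ ξ : Set.Iio β, σ ξ.1)
    {ι : Type u} (c : ι → Ordinal.{u}) (hcinj : Function.Injective c)
    (hcβ : ∀ i, c i < β) (hinf : ℵ₀ ≤ #ι)
    (hH : ∀ T : Set ι, #(↥T) = #ι → ∀ x, x < β → ∃ i ∈ T, x ≤ c i) :
    Cardinal.lift.{u + 1} ((ℵ_ α) ^ #ι) ≤
      Cardinal.prod (fun ξ : Set.Iio β => ℵ_ (σ ξ.1)) := by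
  classical
  -- an equivalence `ι ≃ ι × ι`
  have hmul : #(ι × ι) = #ι := by
    rw [mk_prod, Cardinal.lift_id, mul_eq_self hinf]
  obtain ⟨E⟩ := Cardinal.eq.1 hmul.symm
  set π : ι → ι := fun x => (E x).1 with hπ
  set T : ι → Set ι := fun j => {x | π x = j} with hT
  -- each fiber has full size
  have hTcard : ∀ j, #(↥(T j)) = #ι := by
    intro j
    refine mk_congr ?_
    exact
      { toFun := fun x => (E x.1).2
        invFun := fun y => ⟨E.symm (j, y), by simp [T, π]⟩
        left_inv := fun x => by
          obtain ⟨x, hx⟩ := x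
          have hx' : (E x).1 = j := hx
          refine Subtype.ext ?_
          simp only
          rw [← hx']
          simp
        right_inv := fun y => by simp }
  -- each fiber product dominates `ℵ_α`
  have StepA : ∀ j, ℵ_ α ≤ Cardinal.prod (fun x : ↥(T j) => ℵ_ (σ (c x.1))) := by
    intro j
    refine aleph_le_prod_aux hβ hσ hα (fun x : ↥(T j) => c x.1) (fun x => hcβ x.1) ?_
    intro x hx
    obtain ⟨i, hiT, hi⟩ := hH (T j) (hTcard j) x hx
    exact ⟨⟨i, hiT⟩, hi⟩
  have hchain : (ℵ_ α) ^ #ι ≤ Cardinal.prod (fun i => ℵ_ (σ (c i))) := by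
    calc (ℵ_ α) ^ #ι = Cardinal.prod (fun _ : ι => ℵ_ α) := (prod_const' ι _).symm
      _ ≤ Cardinal.prod (fun j : ι => Cardinal.prod (fun x : ↥(T j) => ℵ_ (σ (c x.1)))) :=
          prod_le_prod _ _ StepA
      _ = Cardinal.prod (fun p : Σ j, ↥(T j) => ℵ_ (σ (c p.2.1))) :=
          (prod_sigma_aux (F := fun j => ↥(T j)) (fun p => ℵ_ (σ (c p.2.1)))).symm
      _ = Cardinal.prod (fun i => ℵ_ (σ (c i))) := by
          have h := prod_reindex_aux (Equiv.sigmaFiberEquiv π) (fun i => ℵ_ (σ (c i)))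
          exact h
  calc Cardinal.lift.{u + 1} ((ℵ_ α) ^ #ι)
      ≤ Cardinal.lift.{u + 1} (Cardinal.prod (fun i => ℵ_ (σ (c i)))) :=
        Cardinal.lift_le.2 hchain
    _ ≤ Cardinal.prod (fun ξ : Set.Iio β => ℵ_ (σ ξ.1)) := by
        refine lift_prod_le_prod_aux (fun ξ : Set.Iio β => ℵ_ (σ ξ.1))
          (fun ξ => (aleph_pos _).ne') (fun i => ⟨c i, hcβ i⟩) ?_
        intro a b hab
        exact hcinj (congrArg Subtype.val hab)

/-- Cardinality bound for "bounded" subsets of `o.ToType`. -/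
private theorem card_bounded_aux (o : Ordinal.{u}) (b : Ordinal.{u})
    (T : Set o.ToType) (hT : ∀ i ∈ T, ((Ordinal.ToType.mk (o := o)).symm i : Ordinal.{u}) < b) :
    #(↥T) ≤ b.card := by
  have hemb : Nonempty (↥T ↪ ↥(Set.Iio b)) :=
    ⟨Function.Embedding.codRestrict _
      ((Function.Embedding.subtype _).trans
        ((Ordinal.ToType.mk (o := o)).symm.toEquiv.toEmbedding.trans (Function.Embedding.subtype _)))
      (fun i => hT i.1 i.2)⟩
  have h3 : Cardinal.lift.{u + 1} #(↥T) ≤ Cardinal.lift.{u} #(↥(Set.Iio b)) :=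
    Cardinal.lift_mk_le'.2 hemb
  rw [Cardinal.lift_id'.{u, u + 1}, Ordinal.mk_Iio_ordinal] at h3
  exact Cardinal.lift_le.1 h3

end Main

/-- Let `β` be a limit ordinal, `κ = |β|`, and let `⟨σ_ξ : ξ < β⟩` be a
strictly increasing sequence of ordinals with supremum `α` such that
`∏_{ξ<β} ℵ_{σ_ξ} < ℵ_α ^ κ`.  Then `cf(β) < κ < β`, and there exists an ordinal `γ < α`
such that `ℵ_γ ^ κ > ℵ_α`. -/
theorem cof_lt_card_and_exists_gamma (β : Ordinal.{u}) (hβ : Order.IsSuccLimit β)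
    (κ : Cardinal.{u}) (hκ : κ = β.card)
    (σ : Ordinal.{u} → Ordinal.{u})
    (hσ : ∀ ξ η : Ordinal.{u}, ξ < η → η < β → σ ξ < σ η)
    (α : Ordinal.{u}) (hα : α = ⨆ ξ : Set.Iio β, σ ξ.1)
    (hlt : Cardinal.prod (fun ξ : Set.Iio β => ℵ_ (σ ξ.1)) <
      Cardinal.lift.{u + 1} ((ℵ_ α) ^ κ)) :
    β.cof < κ ∧ κ.ord < β ∧ ∃ γ : Ordinal.{u}, γ < α ∧ ℵ_ α < (ℵ_ γ) ^ κ := by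
  classical
  have hcofinf : ℵ₀ ≤ β.cof := aleph0_le_cof.2 hβ
  have hcofκ : β.cof ≤ κ := hκ ▸ cof_le_card β
  have hκinf : ℵ₀ ≤ κ := hcofinf.trans hcofκ
  -- the fundamental sequence machinery for instantiation (I1)
  obtain ⟨f, hf⟩ := exists_fundamental_sequence β
  set tt : (β.cof.ord).ToType → ↥(Set.Iio (β.cof.ord)) := fun i => (Ordinal.ToType.mk (o := (β.cof.ord))).symm i with htt
  set c₁ : (β.cof.ord).ToType → Ordinal.{u} := fun i => f (tt i).1 (tt i).2 with hc₁
  have hc₁β : ∀ i, c₁ i < β := fun i => hf.lt (tt i).2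
  have hc₁inj : Function.Injective c₁ := by
    intro x y hxy
    have h1 : (tt x).1 = (tt y).1 := by
      rcases lt_trichotomy ((tt x).1) ((tt y).1) with h | h | h
      · exact absurd hxy (hf.2.1 (tt x).2 (tt y).2 h).ne
      · exact h
      · exact absurd hxy.symm (hf.2.1 (tt y).2 (tt x).2 h).ne
    have h2 : tt x = tt y := Subtype.ext h1
    exact (Ordinal.ToType.mk (o := (β.cof.ord))).symm.injective h2
  have hcard₁ : #(β.cof.ord).ToType = β.cof := by rw [mk_toType, card_ord]
  have hub₁ : ∀ x, x < β → ∃ b, ∃ hb : b < (β.cof.ord), x ≤ f b hb := by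
    intro x hx
    have := hf.blsub_eq
    rw [← this] at hx
    obtain ⟨b, hb, hxb⟩ := Ordinal.lt_blsub_iff.1 hx
    exact ⟨b, hb, hxb⟩
  have hH₁ : ∀ T : Set (β.cof.ord).ToType, #(↥T) = #(β.cof.ord).ToType → ∀ x, x < β → ∃ i ∈ T, x ≤ c₁ i := by
    intro T hTcard x hx
    by_contra hcon
    push_neg at hcon
    obtain ⟨b₀, hb₀, hxb₀⟩ := hub₁ x hx
    have hbound : ∀ i ∈ T, ((tt i : ↥(Set.Iio (β.cof.ord))) : Ordinal) < b₀ := by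
      intro i hi
      by_contra hge
      push_neg at hge
      have hmono : f b₀ hb₀ ≤ f (tt i).1 (tt i).2 := hf.monotone hb₀ (tt i).2 hge
      exact absurd (hxb₀.trans hmono) (hcon i hi).not_ge
    have h4 : #(↥T) ≤ b₀.card := card_bounded_aux (β.cof.ord) b₀ T hbound
    have h5 : b₀.card < β.cof := Cardinal.lt_ord.1 hb₀
    rw [hTcard, hcard₁] at h4
    exact absurd (h4.trans_lt h5) (lt_irrefl _)
  have hkey₁ := key_aux hβ hσ hα c₁ hc₁inj hc₁β (by rw [hcard₁]; exact hcofinf) hH₁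
  rw [hcard₁] at hkey₁
  -- (1) cf β < κ
  have h1 : β.cof < κ := by
    rcases lt_or_eq_of_le hcofκ with h | h
    · exact h
    · exfalso
      rw [h] at hkey₁
      exact absurd (hkey₁.trans_lt hlt) (lt_irrefl _)
  -- (2) κ.ord < β
  have h2 : κ.ord < β := by
    rcases lt_or_eq_of_le (hκ ▸ ord_card_le β) with h | h
    · exact h
    · exfalso
      -- instantiation (I2): `β` itself is an initial ordinal
      set tt₂ : β.ToType → ↥(Set.Iio β) := fun i => (Ordinal.ToType.mk (o := β)).symm i with htt₂
      set c₂ : β.ToType → Ordinal.{u} := fun i => (tt₂ i).1 with hc₂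
      have hc₂β : ∀ i, c₂ i < β := fun i => (tt₂ i).2
      have hc₂inj : Function.Injective c₂ := by
        intro x y hxy
        exact (Ordinal.ToType.mk (o := β)).symm.injective (Subtype.ext hxy)
      have hcard₂ : #β.ToType = κ := by rw [mk_toType, hκ]
      have hH₂ : ∀ T : Set β.ToType, #(↥T) = #β.ToType → ∀ x, x < β → ∃ i ∈ T, x ≤ c₂ i := by
        intro T hTcard x hx
        by_contra hcon
        push_neg at hcon
        have hbound : ∀ i ∈ T, ((tt₂ i : ↥(Set.Iio β)) : Ordinal) < x := fun i hi => hcon i hi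
        have h4 : #(↥T) ≤ x.card := card_bounded_aux β x T hbound
        have h5 : x.card < κ := by
          rw [← h] at hx
          exact Cardinal.lt_ord.1 hx
        rw [hTcard, hcard₂] at h4
        exact absurd (h4.trans_lt h5) (lt_irrefl _)
      have hkey₂ := key_aux hβ hσ hα c₂ hc₂inj hc₂β (by rw [hcard₂]; exact hκinf) hH₂
      rw [hcard₂] at hkey₂
      exact absurd (hkey₂.trans_lt hlt) (lt_irrefl _)
  -- (3) existence of γ
  have h3 : ∃ γ : Ordinal.{u}, γ < α ∧ ℵ_ α < (ℵ_ γ) ^ κ := by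
    by_contra hcon
    push_neg at hcon
    -- so `ℵ_γ ^ κ ≤ ℵ_α` for all `γ < α`
    have hγ : ∀ γ, γ < α → (ℵ_ γ) ^ κ ≤ ℵ_ α := fun γ hγα => hcon γ hγα
    -- deduce `ℵ_α ^ κ ≤ ℵ_α ^ cf β`
    have hg : ℵ_ α ≤ Cardinal.prod (fun i : (β.cof.ord).ToType => ℵ_ (σ (c₁ i))) := by
      refine aleph_le_prod_aux hβ hσ hα c₁ hc₁β ?_
      intro x hx
      obtain ⟨b, hb, hxb⟩ := hub₁ x hx
      refine ⟨Ordinal.ToType.mk (o := (β.cof.ord)) ⟨b, hb⟩, ?_⟩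
      have : tt (Ordinal.ToType.mk (o := (β.cof.ord)) ⟨b, hb⟩) = ⟨b, hb⟩ := by
        rw [htt]; simp
      rw [hc₁]
      simp only [this]
      exact hxb
    have hpow : (ℵ_ α) ^ κ ≤ (ℵ_ α) ^ β.cof := by
      calc (ℵ_ α) ^ κ ≤ (Cardinal.prod (fun i : (β.cof.ord).ToType => ℵ_ (σ (c₁ i)))) ^ κ :=
            power_le_power_right hg
        _ = Cardinal.prod (fun i : (β.cof.ord).ToType => (ℵ_ (σ (c₁ i))) ^ κ) := prod_power_aux _ _
        _ ≤ Cardinal.prod (fun _ : (β.cof.ord).ToType => ℵ_ α) := by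
            refine prod_le_prod _ _ ?_
            intro i
            exact hγ _ (sigma_lt_aux hβ hσ hα _ (hc₁β i))
        _ = (ℵ_ α) ^ #(β.cof.ord).ToType := prod_const' _ _
        _ = (ℵ_ α) ^ β.cof := by rw [hcard₁]
    have : Cardinal.lift.{u + 1} ((ℵ_ α) ^ κ) ≤
        Cardinal.prod (fun ξ : Set.Iio β => ℵ_ (σ ξ.1)) :=
      (Cardinal.lift_le.2 hpow).trans hkey₁
    exact absurd (this.trans_lt hlt) (lt_irrefl _)
  exact ⟨h1, h2, h3⟩
end

section
/- Let β be the least limit ordinal for which there exists a strictly increasing sequence ⟨σ_ξ : ξ < β⟩ of ordinals with supremum α such that ∏_{ξ<β} ℵ_{σ_ξ} < ℵ_α^{|β|}. Then β = κ + ω, where κ = |β| is an uncountable cardinal. -/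
open Cardinal Ordinal Set

universe u v

namespace LeastCE

theorem prod_reindex {ι ι' : Type u} (f : ι → Cardinal.{v}) (e : ι' ≃ ι) :
    Cardinal.prod (fun i' => f (e i')) = Cardinal.prod f :=
  mk_congr (Equiv.piCongrLeft (fun i => (f i).out) e)

theorem prod_sum {ι κ : Type u} (f : ι ⊕ κ → Cardinal.{v}) :
    Cardinal.prod f =
      Cardinal.prod (fun i => f (Sum.inl i)) * Cardinal.prod (fun k => f (Sum.inr k)) := by
  have h := mk_congr (Equiv.sumPiEquivProdPi (fun s => (f s).out))
  rw [Cardinal.prod, h, mk_prod, Cardinal.lift_id, Cardinal.lift_id]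
  rfl

theorem one_le_prod {ι : Type u} (f : ι → Cardinal.{v}) (hf : ∀ i, 1 ≤ f i) :
    1 ≤ Cardinal.prod f := by
  have h := Cardinal.prod_le_prod (fun _ : ι => 1) f hf
  rwa [Cardinal.prod_const, Cardinal.lift_one, Cardinal.one_power] at h

theorem prod_comp_le {ι κ : Type u} (f : ι → Cardinal.{v}) (hf : ∀ i, 1 ≤ f i)
    (g : κ → ι) (hg : Function.Injective g) :
    Cardinal.prod (fun k => f (g k)) ≤ Cardinal.prod f := by
  classical
  rw [← prod_reindex f (Equiv.Set.sumCompl (Set.range g)), prod_sum]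
  have h1 : Cardinal.prod (fun k => f (g k)) =
      Cardinal.prod (fun i : Set.range g =>
        f ((Equiv.Set.sumCompl (Set.range g)) (Sum.inl i))) := by
    rw [← prod_reindex (fun i : Set.range g =>
      f ((Equiv.Set.sumCompl (Set.range g)) (Sum.inl i))) (Equiv.ofInjective g hg)]
    congr 1
  rw [h1]
  exact le_mul_of_one_le_right (zero_le) (one_le_prod _ (fun i => hf _))

theorem lift_le_prod {ι : Type u} (f : ι → Cardinal.{v}) (hf : ∀ i, 1 ≤ f i) (i0 : ι) :
    Cardinal.lift.{u} (f i0) ≤ Cardinal.prod f := by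
  have h := prod_comp_le f hf (fun _ : PUnit.{u+1} => i0) (fun a b _ => Subsingleton.elim a b)
  rwa [Cardinal.prod_const, Cardinal.mk_punit, Cardinal.lift_one, Cardinal.power_one] at h

theorem prod_rect {J K : Type u} (f : J × K → Cardinal.{v}) :
    Cardinal.prod f = Cardinal.prod (fun j => Cardinal.prod (fun k => f (j, k))) := by
  have e : (∀ p : J × K, (f p).out) ≃ (∀ j, ∀ k, (f (j, k)).out) :=
    ((Equiv.piCongrLeft (fun p => (f p).out) (Equiv.sigmaEquivProd J K)).symm).trans
      (Equiv.piCurry fun j k => (f (j, k)).out)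
  rw [Cardinal.prod, mk_congr e, mk_pi]
  congr 1

theorem prod_power {ι : Type u} (f : ι → Cardinal.{u}) (c : Cardinal.{u}) :
    (Cardinal.prod f) ^ c = Cardinal.prod (fun i => f i ^ c) := by
  induction c using Cardinal.inductionOn with
  | _ γ =>
    have h1 : (Cardinal.prod f) ^ (#γ) = #(γ → ∀ i, (f i).out) := by
      rw [Cardinal.prod, Cardinal.power_def]
    rw [h1, mk_congr (Equiv.piComm (fun (_ : γ) (i : ι) => (f i).out)), mk_pi]
    congr 1
    funext i
    rw [← Cardinal.power_def, mk_out]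

theorem card_bddAbove {ι : Type v} [Small.{u} ι] (f : ι → Cardinal.{u}) :
    BddAbove (Set.range f) := by
  have h : Set.range f = Set.range (f ∘ (equivShrink ι).symm) :=
    ((equivShrink ι).symm.surjective.range_comp f).symm
  rw [h]
  exact Cardinal.bddAbove_range _

theorem aleph_le_iSup {ι : Type v} [Nonempty ι] [Small.{u} ι] (x : ι → Ordinal.{u}) :
    ℵ_ (⨆ i, x i) ≤ ⨆ i, ℵ_ (x i) := by
  have hb := card_bddAbove (fun i => ℵ_ (x i))
  have hs : ℵ₀ ≤ ⨆ i, ℵ_ (x i) :=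
    le_trans (aleph0_le_aleph _) (le_ciSup hb (Classical.arbitrary ι))
  obtain ⟨y, hy⟩ := Cardinal.mem_range_aleph_iff.mpr hs
  rw [← hy, aleph_le_aleph]
  refine ciSup_le' fun i => ?_
  rw [← aleph_le_aleph, hy]
  exact le_ciSup hb i

theorem one_le_aleph (o : Ordinal.{u}) : (1 : Cardinal.{u}) ≤ ℵ_ o :=
  Cardinal.one_lt_aleph0.le.trans (aleph0_le_aleph o)

theorem slice_unbounded {ν : Cardinal.{u}} (g : Set.Iio ν.ord → Set.Iio ν.ord)
    (hg : Function.Injective g) (x : Set.Iio ν.ord) :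
    ∃ k, x.1 ≤ (g k).1 := by
  by_contra hcon
  push_neg at hcon
  have hinj : Function.Injective (fun k => (⟨(g k).1, hcon k⟩ : Set.Iio x.1)) := by
    intro a b hab
    have h2 : (g a).1 = (g b).1 := Subtype.mk_eq_mk.mp hab
    exact hg (Subtype.ext h2)
  have hle := Cardinal.mk_le_of_injective hinj
  rw [Ordinal.mk_Iio_ordinal, Ordinal.mk_Iio_ordinal, Cardinal.lift_le, Cardinal.card_ord] at hle
  exact (lt_irrefl ν) (lt_of_le_of_lt hle (Cardinal.lt_ord.mp x.2))

theorem sup_eq_of_cofinal {b α : Ordinal.{u}} {σ : Ordinal.{u} → Ordinal.{u}}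
    (hmono : ∀ ξ η : Ordinal.{u}, ξ ≤ η → η < b → σ ξ ≤ σ η)
    (hα : α = ⨆ ξ : Set.Iio b, σ ξ.1)
    {K : Type (u+1)} [Small.{u} K] [Nonempty K] (y : K → Set.Iio b)
    (hy : ∀ x : Set.Iio b, ∃ k, x.1 ≤ (y k).1) :
    (⨆ k, σ (y k).1) = α := by
  apply le_antisymm
  · refine ciSup_le' fun k => ?_
    rw [hα]
    exact Ordinal.le_iSup (fun ξ : Set.Iio b => σ ξ.1) (y k)
  · rw [hα]
    refine ciSup_le' fun ξ => ?_
    obtain ⟨k, hk⟩ := hy ξ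
    exact le_trans (hmono _ _ hk (y k).2) (Ordinal.le_iSup (fun k => σ (y k).1) k)

theorem rect_ge {b α : Ordinal.{u}} {σ : Ordinal.{u} → Ordinal.{u}}
    (hmono : ∀ ξ η : Ordinal.{u}, ξ ≤ η → η < b → σ ξ ≤ σ η)
    (hα : α = ⨆ ξ : Set.Iio b, σ ξ.1)
    (ν : Cardinal.{u}) (hν : ℵ₀ ≤ ν)
    (p : Set.Iio ν.ord × Set.Iio ν.ord → Set.Iio b)
    (hp : ∀ j (x : Set.Iio b), ∃ k, x.1 ≤ (p (j, k)).1) :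
    Cardinal.lift.{u+1} ((ℵ_ α) ^ ν) ≤ Cardinal.prod (fun q => ℵ_ (σ (p q).1)) := by
  have hνpos : (0 : Ordinal.{u}) < ν.ord := by
    have h1 := Cardinal.ord_le_ord.mpr hν
    rw [Cardinal.ord_aleph0] at h1
    exact lt_of_lt_of_le Ordinal.omega0_pos h1
  have hne : Nonempty (Set.Iio ν.ord) := ⟨⟨0, hνpos⟩⟩
  rw [prod_rect]
  have hslice : ∀ j, Cardinal.lift.{u+1} (ℵ_ α) ≤
      Cardinal.prod (fun k => ℵ_ (σ (p (j, k)).1)) := by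
    intro j
    have hsup := sup_eq_of_cofinal hmono hα (fun k => p (j, k)) (hp j)
    calc Cardinal.lift.{u+1} (ℵ_ α)
        = Cardinal.lift.{u+1} (ℵ_ (⨆ k, σ (p (j, k)).1)) := by rw [hsup]
      _ ≤ Cardinal.lift.{u+1} (⨆ k, ℵ_ (σ (p (j, k)).1)) :=
          Cardinal.lift_le.mpr (aleph_le_iSup _)
      _ = ⨆ k, Cardinal.lift.{u+1} (ℵ_ (σ (p (j, k)).1)) :=
          Cardinal.lift_iSup (card_bddAbove _)
      _ ≤ _ := ciSup_le' fun k => lift_le_prod _ (fun k' => one_le_aleph _) k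
  have h2 := Cardinal.prod_le_prod _ _ hslice
  refine le_trans ?_ h2
  rw [Cardinal.prod_const, Ordinal.mk_Iio_ordinal, Cardinal.card_ord, Cardinal.lift_power,
    Cardinal.lift_id, Cardinal.lift_lift]

theorem add_omega0_le {b x : Ordinal.{u}} (hb : Order.IsSuccLimit b) (hx : x < b) : x + ω ≤ b := by
  rw [Ordinal.add_le_iff_of_isSuccLimit Ordinal.isSuccLimit_omega0]
  intro c hc
  obtain ⟨n, rfl⟩ := Ordinal.lt_omega0.mp hc
  have h : ∀ n : ℕ, x + (n : Ordinal.{u}) < b := by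
    intro n
    induction n with
    | zero => simpa using hx
    | succ m ih =>
        have : x + ((m + 1 : ℕ) : Ordinal.{u}) = Order.succ (x + m) := by
          push_cast
          rw [← add_assoc, Ordinal.add_one_eq_succ]
        rw [this]
        exact hb.succ_lt ih
  exact (h n).le


theorem candidate_pack {β m lo : Ordinal.{u}} {σ : Ordinal.{u} → Ordinal.{u}}
    (hinc : ∀ ξ η : Ordinal.{u}, ξ < η → η < β → σ ξ < σ η)
    (d : Ordinal.{u} → Ordinal.{u})
    (hd_lt : ∀ {x : Ordinal.{u}}, x < lo → d x < β)
    (hd_ge : ∀ {x : Ordinal.{u}}, x < lo → m ≤ d x)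
    (hd_smono : ∀ {x y : Ordinal.{u}}, x < y → y < lo → d x < d y)
    (hmβ : m < β)
    {i : Ordinal.{u}} (hi : ∀ {x : Ordinal.{u}}, x < ω → i + x < lo) :
    ∃ τ : Ordinal.{u} → Ordinal.{u},
      (∀ ξ η : Ordinal.{u}, ξ < η → η < m + ω → τ ξ < τ η) ∧
      (∀ ξ : Ordinal.{u}, ξ < m → τ ξ = σ ξ) ∧
      (∀ n : ℕ, τ (m + (n : Ordinal.{u})) = σ (d (i + (n : Ordinal.{u})))) ∧
      ((⨆ ξ : Set.Iio (m + ω), τ ξ.1) = ⨆ n : ℕ, σ (d (i + (n : Ordinal.{u})))) := by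
  classical
  have heval_tail : ∀ n : ℕ,
      (if m + (n : Ordinal.{u}) < m then σ (m + (n : Ordinal.{u}))
        else σ (d (i + (m + (n : Ordinal.{u}) - m)))) = σ (d (i + (n : Ordinal.{u}))) := by
    intro n
    rw [if_neg (not_lt.mpr (le_self_add)), Ordinal.add_sub_cancel]
  refine ⟨fun ξ => if ξ < m then σ ξ else σ (d (i + (ξ - m))), ?_, ?_, ?_, ?_⟩
  · intro ξ η hξη hηlt
    show (if ξ < m then σ ξ else σ (d (i + (ξ - m)))) <
      (if η < m then σ η else σ (d (i + (η - m))))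
    by_cases hη : η < m
    · rw [if_pos hη, if_pos (lt_trans hξη hη)]
      exact hinc _ _ hξη (lt_trans hη hmβ)
    · rw [if_neg hη]
      have hηω : η - m < ω := Ordinal.sub_lt_of_lt_add hηlt Ordinal.omega0_pos
      have hηd : i + (η - m) < lo := hi hηω
      by_cases hξ : ξ < m
      · rw [if_pos hξ]
        exact hinc _ _ (lt_of_lt_of_le hξ (hd_ge hηd)) (hd_lt hηd)
      · rw [if_neg hξ]
        have hm_ξ : m ≤ ξ := not_lt.mp hξ
        have hm_η : m ≤ η := not_lt.mp hη
        have hsub : ξ - m < η - m := by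
          have h1 : m + (ξ - m) < m + (η - m) := by
            rw [Ordinal.add_sub_cancel_of_le hm_ξ, Ordinal.add_sub_cancel_of_le hm_η]
            exact hξη
          exact (add_lt_add_iff_left m).mp h1
        have h2 : i + (ξ - m) < i + (η - m) := (add_lt_add_iff_left i).mpr hsub
        exact hinc _ _ (hd_smono h2 hηd) (hd_lt hηd)
  · intro ξ hξ
    exact if_pos hξ
  · exact heval_tail
  · apply le_antisymm
    · refine ciSup_le' fun ξ => ?_
      show (if ξ.1 < m then σ ξ.1 else σ (d (i + (ξ.1 - m)))) ≤ _
      by_cases hξ : ξ.1 < m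
      · rw [if_pos hξ]
        refine le_trans ?_ (Ordinal.le_iSup (fun n : ℕ => σ (d (i + (n : Ordinal.{u})))) 0)
        have h0 : i + ((0 : ℕ) : Ordinal.{u}) < lo := hi (by
          rw [Nat.cast_zero]; exact Ordinal.omega0_pos)
        rcases eq_or_lt_of_le (le_trans hξ.le (hd_ge h0)) with heq | hlt'
        · exact le_of_eq (congrArg σ heq)
        · exact (hinc _ _ hlt' (hd_lt h0)).le
      · rw [if_neg hξ]
        have hξω : ξ.1 - m < ω := Ordinal.sub_lt_of_lt_add ξ.2 Ordinal.omega0_pos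
        obtain ⟨n, hn⟩ := Ordinal.lt_omega0.mp hξω
        rw [hn]
        exact Ordinal.le_iSup (fun n : ℕ => σ (d (i + (n : Ordinal.{u})))) n
    · refine ciSup_le' fun n => ?_
      have hmem : m + (n : Ordinal.{u}) < m + ω :=
        (add_lt_add_iff_left m).mpr (Ordinal.nat_lt_omega0 n)
      refine le_trans (le_of_eq (heval_tail n).symm)
        (Ordinal.le_iSup (fun ξ : Set.Iio (m + ω) =>
          if ξ.1 < m then σ ξ.1 else σ (d (i + (ξ.1 - m)))) ⟨m + (n : Ordinal.{u}), hmem⟩)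

theorem cand_prod_le {m : Ordinal.{u}} (τ : Ordinal.{u} → Ordinal.{u}) (a0 ai : Ordinal.{u})
    (hhead : ∀ ξ : Set.Iio m, τ ξ.1 ≤ a0)
    (htail : ∀ n : ℕ, τ (m + (n : Ordinal.{u})) ≤ ai) :
    Cardinal.prod (fun ξ : Set.Iio (m + ω) => ℵ_ (τ ξ.1)) ≤
      Cardinal.lift.{u+1} ((ℵ_ a0) ^ m.card * (ℵ_ ai) ^ ℵ₀) := by
  classical
  have hinl : ∀ ξ : Set.Iio m, ξ.1 < m + ω :=
    fun ξ => lt_of_lt_of_le ξ.2 (le_self_add)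
  have hinr : ∀ n : ℕ, m + (n : Ordinal.{u}) < m + ω :=
    fun n => (add_lt_add_iff_left m).mpr (Ordinal.nat_lt_omega0 n)
  have hbij : Function.Bijective
      (Sum.elim (fun ξ : Set.Iio m => (⟨ξ.1, hinl ξ⟩ : Set.Iio (m + ω)))
        (fun n : ULift.{u+1} ℕ =>
          (⟨m + (n.down : Ordinal.{u}), hinr n.down⟩ : Set.Iio (m + ω)))) := by
    constructor
    · intro s t hst
      match s, t with
      | Sum.inl ξ, Sum.inl η =>
          have : ξ.1 = η.1 := Subtype.mk_eq_mk.mp hst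
          rw [Subtype.ext this]
      | Sum.inl ξ, Sum.inr n =>
          have h2 : ξ.1 = m + (n.down : Ordinal.{u}) := Subtype.mk_eq_mk.mp hst
          exact absurd (h2 ▸ ξ.2) (not_lt.mpr (le_self_add : m ≤ m + (n.down : Ordinal.{u})))
      | Sum.inr n, Sum.inl ξ =>
          have h2 : m + (n.down : Ordinal.{u}) = ξ.1 := Subtype.mk_eq_mk.mp hst
          exact absurd (h2 ▸ ξ.2) (not_lt.mpr (le_self_add : m ≤ m + (n.down : Ordinal.{u})))
      | Sum.inr n, Sum.inr k =>
          have h2 : m + (n.down : Ordinal.{u}) = m + (k.down : Ordinal.{u}) :=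
            Subtype.mk_eq_mk.mp hst
          have h3 : (n.down : Ordinal.{u}) = (k.down : Ordinal.{u}) := (add_left_cancel_iff (a := m)).mp h2
          have h4 : n.down = k.down := by exact_mod_cast h3
          rw [show n = ⟨n.down⟩ from rfl, h4]
    · intro x
      by_cases hx : x.1 < m
      · exact ⟨Sum.inl ⟨x.1, hx⟩, rfl⟩
      · have hsub : x.1 - m < ω := Ordinal.sub_lt_of_lt_add x.2 Ordinal.omega0_pos
        obtain ⟨n, hn⟩ := Ordinal.lt_omega0.mp hsub
        refine ⟨Sum.inr ⟨n⟩, ?_⟩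
        apply Subtype.ext
        show m + (n : Ordinal.{u}) = x.1
        rw [← hn]
        exact Ordinal.add_sub_cancel_of_le (not_lt.mp hx)
        
  rw [← prod_reindex (fun ξ : Set.Iio (m + ω) => ℵ_ (τ ξ.1)) (Equiv.ofBijective _ hbij),
    prod_sum]
  have hh : Cardinal.prod (fun ξ : Set.Iio m => ℵ_ (τ ξ.1)) ≤
      Cardinal.lift.{u+1} ((ℵ_ a0) ^ m.card) := by
    refine le_trans (Cardinal.prod_le_prod _ (fun _ => ℵ_ a0)
      (fun ξ => aleph_le_aleph.mpr (hhead ξ))) ?_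
    rw [Cardinal.prod_const, Ordinal.mk_Iio_ordinal, Cardinal.lift_power, Cardinal.lift_lift]
  have ht : Cardinal.prod (fun n : ULift.{u+1} ℕ => ℵ_ (τ (m + (n.down : Ordinal.{u})))) ≤
      Cardinal.lift.{u+1} ((ℵ_ ai) ^ ℵ₀) := by
    refine le_trans (Cardinal.prod_le_prod _ (fun _ => ℵ_ ai)
      (fun n => aleph_le_aleph.mpr (htail n.down))) ?_
    rw [Cardinal.prod_const, Cardinal.lift_power]
    simp [Cardinal.mk_uLift]
  calc Cardinal.prod (fun ξ : Set.Iio m => ℵ_ (τ ξ.1)) *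
        Cardinal.prod (fun n : ULift.{u+1} ℕ => ℵ_ (τ (m + (n.down : Ordinal.{u})))) ≤
      Cardinal.lift.{u+1} ((ℵ_ a0) ^ m.card) * Cardinal.lift.{u+1} ((ℵ_ ai) ^ ℵ₀) :=
        mul_le_mul' hh ht
    _ = _ := (Cardinal.lift_mul _ _).symm


end LeastCE

open LeastCE in
/-- Let `β` be the least limit ordinal for which there exists a strictly
increasing sequence `⟨σ_ξ : ξ < β⟩` of ordinals with supremum `α` such that
`∏_{ξ<β} ℵ_{σ_ξ} < ℵ_α ^ |β|`.  Then `β = κ + ω`, where `κ = |β|` is an uncountable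
cardinal. -/
theorem least_counterexample_eq_card_add_omega (β : Ordinal.{u})
    (hleast : IsLeast
      { b : Ordinal.{u} | Order.IsSuccLimit b ∧
        ∃ (σ : Ordinal.{u} → Ordinal.{u}) (α : Ordinal.{u}),
          (∀ ξ η : Ordinal.{u}, ξ < η → η < b → σ ξ < σ η) ∧
          α = (⨆ ξ : Set.Iio b, σ ξ.1) ∧
          Cardinal.prod (fun ξ : Set.Iio b => ℵ_ (σ ξ.1)) <
            Cardinal.lift.{u + 1} ((ℵ_ α) ^ b.card) } β) :
    β = β.card.ord + ω ∧ ℵ₀ < β.card := by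
  classical
  obtain ⟨⟨hβlim, σ, α, hinc, hα, hlt⟩, hlb⟩ := hleast
  have hmono : ∀ ξ η : Ordinal.{u}, ξ ≤ η → η < β → σ ξ ≤ σ η := by
    intro ξ η h hb
    rcases eq_or_lt_of_le h with rfl | h'
    · exact le_rfl
    · exact (hinc _ _ h' hb).le
  have hμinf : ℵ₀ ≤ β.card := Ordinal.aleph0_le_card.mpr (Ordinal.omega0_le_of_isSuccLimit hβlim)
  have hlinf : ℵ₀ ≤ β.cof := Ordinal.aleph0_le_cof.mpr hβlim
  have hlleμ : β.cof ≤ β.card := Ordinal.cof_le_card β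
  have homle : (ω : Ordinal.{u}) ≤ β.cof.ord := by
    have h1 := Cardinal.ord_le_ord.mpr hlinf
    rwa [Cardinal.ord_aleph0] at h1
  have hlopos : (0 : Ordinal.{u}) < β.cof.ord := lt_of_lt_of_le Ordinal.omega0_pos homle
  have hprinc : ∀ {x y : Ordinal.{u}}, x < β.cof.ord → y < β.cof.ord → x + y < β.cof.ord :=
    fun hx hy => Ordinal.isPrincipal_add_ord hlinf hx hy
  have hcex : ∃ c : Ordinal.{u} → Ordinal.{u},
      (∀ {x : Ordinal.{u}}, x < β.cof.ord → c x < β) ∧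
      (∀ {x y : Ordinal.{u}}, x < y → y < β.cof.ord → c x < c y) ∧
      (∀ x, x < β → ∃ j, j < β.cof.ord ∧ x ≤ c j) := by
    obtain ⟨fs, hfs⟩ := Ordinal.exists_fundamental_sequence β
    refine ⟨fun x => if h' : x < β.cof.ord then fs x h' else 0, ?_, ?_, ?_⟩
    · intro x h
      show (if h' : x < β.cof.ord then fs x h' else 0) < β
      rw [dif_pos h]
      exact hfs.lt h
    · intro x y hxy h
      show (if h' : x < β.cof.ord then fs x h' else 0) <
        (if h' : y < β.cof.ord then fs y h' else 0)
      rw [dif_pos h, dif_pos (lt_trans hxy h)]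
      exact hfs.2.1 _ _ hxy
    · intro x hx
      have hx' : x < Ordinal.blsub β.cof.ord fs := by rw [hfs.blsub_eq]; exact hx
      obtain ⟨j, hj, hle⟩ := Ordinal.lt_blsub_iff.mp hx'
      refine ⟨j, hj, ?_⟩
      show x ≤ (if h' : j < β.cof.ord then fs j h' else 0)
      rwa [dif_pos hj]
  obtain ⟨c, hc_lt, hc_smono, hc_cof⟩ := hcex
  have hc_mono : ∀ {x y : Ordinal.{u}}, x ≤ y → y < β.cof.ord → c x ≤ c y := by
    intro x y hxy h
    rcases eq_or_lt_of_le hxy with rfl | h'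
    · exact le_rfl
    · exact (hc_smono h' h).le
  have hEex : ∀ ν : Cardinal.{u}, ℵ₀ ≤ ν →
      Nonempty ((Set.Iio ν.ord × Set.Iio ν.ord) ≃ Set.Iio ν.ord) := by
    intro ν hν
    apply Cardinal.eq.mp
    rw [mk_prod, Ordinal.mk_Iio_ordinal, Cardinal.card_ord]
    simp only [Cardinal.lift_id, ← Cardinal.lift_mul, Cardinal.mul_eq_self hν]
  obtain ⟨El⟩ := hEex β.cof hlinf
  obtain ⟨Eμ⟩ := hEex β.card hμinf
  have hslice_inj : ∀ (ν : Cardinal.{u}) (E : (Set.Iio ν.ord × Set.Iio ν.ord) ≃ Set.Iio ν.ord)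
      (j : Set.Iio ν.ord), Function.Injective (fun k => E (j, k)) := by
    intro ν E j a b hab
    have h2 := E.injective hab
    exact (Prod.ext_iff.mp h2).2
  -- first lower bound : lift (ℵ_α ^ cof) ≤ full product
  have h_tail0 : Cardinal.lift.{u+1} ((ℵ_ α) ^ β.cof) ≤
      Cardinal.prod (fun ξ : Set.Iio β => ℵ_ (σ ξ.1)) := by
    have hp0inj : Function.Injective
        (fun q : Set.Iio β.cof.ord × Set.Iio β.cof.ord =>
          (⟨c (El q).1, hc_lt (El q).2⟩ : Set.Iio β)) := by
      intro a b hab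
      have h2 : c (El a).1 = c (El b).1 := Subtype.mk_eq_mk.mp hab
      have h3 : (El a).1 = (El b).1 := by
        by_contra hne
        rcases lt_or_gt_of_ne hne with h4 | h4
        · exact absurd h2 (ne_of_lt (hc_smono h4 (El b).2))
        · exact absurd h2.symm (ne_of_lt (hc_smono h4 (El a).2))
      exact El.injective (Subtype.ext h3)
    refine le_trans (rect_ge hmono hα β.cof hlinf
      (fun q => ⟨c (El q).1, hc_lt (El q).2⟩) ?_) (prod_comp_le _ (fun _ => one_le_aleph _) _ hp0inj)
    intro j x
    obtain ⟨j', hj', hxj'⟩ := hc_cof x.1 x.2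
    obtain ⟨k, hk⟩ := slice_unbounded (fun k => El (j, k)) (hslice_inj _ El j) ⟨j', hj'⟩
    exact ⟨k, le_trans hxj' (hc_mono hk (El (j, k)).2)⟩
  have hlltμ : β.cof < β.card := by
    by_contra hcon
    push_neg at hcon
    have h1 : Cardinal.lift.{u+1} ((ℵ_ α) ^ β.card) ≤
        Cardinal.lift.{u+1} ((ℵ_ α) ^ β.cof) := by
      apply Cardinal.lift_le.mpr
      exact Cardinal.power_le_power_left
        (ne_of_gt (lt_of_lt_of_le zero_lt_one (one_le_aleph α))) hcon
    exact absurd hlt (not_lt.mpr (le_trans h1 h_tail0))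
  have hμbig : ℵ₀ < β.card := lt_of_le_of_lt hlinf hlltμ
  have hμoleβ : β.card.ord ≤ β := Cardinal.ord_card_le β
  have hβne : β.card.ord ≠ β := by
    intro h
    have hpinj : Function.Injective
        (fun q : Set.Iio β.card.ord × Set.Iio β.card.ord =>
          (⟨(Eμ q).1, lt_of_lt_of_le (Eμ q).2 (le_of_eq h)⟩ : Set.Iio β)) := by
      intro a b hab
      have h2 : (Eμ a).1 = (Eμ b).1 := Subtype.mk_eq_mk.mp hab
      exact Eμ.injective (Subtype.ext h2)
    have hge := le_trans (rect_ge hmono hα β.card hμinf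
        (fun q => ⟨(Eμ q).1, lt_of_lt_of_le (Eμ q).2 (le_of_eq h)⟩) ?_)
      (prod_comp_le (fun ξ : Set.Iio β => ℵ_ (σ ξ.1)) (fun _ => one_le_aleph _) _ hpinj)
    · exact absurd hlt (not_lt.mpr hge)
    · intro j x
      obtain ⟨k, hk⟩ := slice_unbounded (fun k => Eμ (j, k)) (hslice_inj _ Eμ j)
        ⟨x.1, by rw [h]; exact x.2⟩
      exact ⟨k, hk⟩
  have hμoltβ : β.card.ord < β := lt_of_le_of_ne hμoleβ hβne
  have hμωle : β.card.ord + ω ≤ β := add_omega0_le hβlim hμoltβ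
  rcases eq_or_lt_of_le hμωle with heq | hlt2
  · exact ⟨heq.symm, hμbig⟩
  exfalso
  obtain ⟨i0, hi0lt, hi0⟩ := hc_cof β.card.ord hμoltβ
  have hshift : ∀ {x : Ordinal.{u}}, x < β.cof.ord → i0 + 1 + x < β.cof.ord := by
    intro x hx
    exact hprinc (hprinc hi0lt (lt_of_lt_of_le Ordinal.one_lt_omega0 homle)) hx
  have hD_lt : ∀ {x : Ordinal.{u}}, x < β.cof.ord → c (i0 + 1 + x) < β :=
    fun hx => hc_lt (hshift hx)
  have hD_ge : ∀ {x : Ordinal.{u}}, x < β.cof.ord → β.card.ord ≤ c (i0 + 1 + x) := by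
    intro x hx
    refine le_trans hi0 (le_of_lt (hc_smono ?_ (hshift hx)))
    calc i0 < i0 + 1 := by rw [Ordinal.add_one_eq_succ]; exact Order.lt_succ i0
      _ ≤ i0 + 1 + x := le_self_add
  have hD_smono : ∀ {x y : Ordinal.{u}}, x < y → y < β.cof.ord →
      c (i0 + 1 + x) < c (i0 + 1 + y) :=
    fun hxy hy => hc_smono ((add_lt_add_iff_left (i0 + 1)).mpr hxy) (hshift hy)
  have hD_cof : ∀ x, x < β → ∃ j, j < β.cof.ord ∧ x ≤ c (i0 + 1 + j) := by
    intro x hx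
    obtain ⟨j, hj, hle⟩ := hc_cof x hx
    exact ⟨j, hj, le_trans hle (hc_mono (le_add_self) (hshift hj))⟩
  have hA_le : ∀ {i : Ordinal.{u}}, i < β.cof.ord →
      (⨆ n : ℕ, σ (c (i0 + 1 + (i + (n : Ordinal.{u}))))) ≤ α := by
    intro i hi
    refine ciSup_le' fun n => ?_
    rw [hα]
    exact Ordinal.le_iSup (fun ξ : Set.Iio β => σ ξ.1)
      ⟨c (i0 + 1 + (i + n)), hD_lt (hprinc hi (lt_of_lt_of_le (Ordinal.nat_lt_omega0 n) homle))⟩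
  have hsupA : (⨆ i : Set.Iio β.cof.ord,
      ⨆ n : ℕ, σ (c (i0 + 1 + (i.1 + (n : Ordinal.{u}))))) = α := by
    apply le_antisymm
    · exact ciSup_le' fun i => hA_le i.2
    · rw [hα]
      refine ciSup_le' fun ξ => ?_
      obtain ⟨j, hj, hle⟩ := hD_cof ξ.1 ξ.2
      have h1 : σ ξ.1 ≤ σ (c (i0 + 1 + (j + ((0 : ℕ) : Ordinal.{u})))) := by
        rw [Nat.cast_zero, add_zero]
        exact hmono _ _ hle (hD_lt hj)
      refine le_trans h1 ?_
      refine le_trans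
        (Ordinal.le_iSup (fun n : ℕ => σ (c (i0 + 1 + (j + (n : Ordinal.{u}))))) 0) ?_
      exact Ordinal.le_iSup (fun i : Set.Iio β.cof.ord =>
        ⨆ n : ℕ, σ (c (i0 + 1 + (i.1 + (n : Ordinal.{u}))))) ⟨j, hj⟩
  have hcard : (β.card.ord + ω).card = β.card := by
    rw [Ordinal.card_add, Cardinal.card_ord, Ordinal.card_omega0]
    exact Cardinal.add_eq_left hμinf hμinf
  have hfail : ∀ i : Set.Iio β.cof.ord,
      (ℵ_ (⨆ n : ℕ, σ (c (i0 + 1 + (i.1 + (n : Ordinal.{u})))))) ^ β.card ≤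
        (ℵ_ (⨆ ξ : Set.Iio β.card.ord, σ ξ.1)) ^ β.card * (ℵ_ α) ^ ℵ₀ := by
    intro i
    by_contra hcon
    push_neg at hcon
    obtain ⟨τ, hτinc, hτhead, hτtail, hτsup⟩ := candidate_pack (i := i.1) hinc
      (fun x => c (i0 + 1 + x)) hD_lt hD_ge hD_smono hμoltβ
      (fun {x} hx => hprinc i.2 (lt_of_lt_of_le hx homle))
    have hmemb : β ≤ β.card.ord + ω := by
      apply hlb
      refine ⟨Ordinal.isSuccLimit_add _ Ordinal.isSuccLimit_omega0, τ, _, hτinc, rfl, ?_⟩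
      rw [hτsup, hcard]
      refine lt_of_le_of_lt (cand_prod_le τ (⨆ ξ : Set.Iio β.card.ord, σ ξ.1)
        (⨆ n : ℕ, σ (c (i0 + 1 + (i.1 + (n : Ordinal.{u}))))) ?_ ?_) ?_
      · intro ξ
        rw [hτhead ξ.1 ξ.2]
        exact Ordinal.le_iSup (fun ξ : Set.Iio β.card.ord => σ ξ.1) ξ
      · intro n
        rw [hτtail n]
        exact Ordinal.le_iSup
          (fun n : ℕ => σ (c (i0 + 1 + (i.1 + (n : Ordinal.{u}))))) n
      · rw [Cardinal.card_ord, Cardinal.lift_lt]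
        refine lt_of_le_of_lt (mul_le_mul_right (Cardinal.power_le_power_right
          (aleph_le_aleph.mpr (hA_le i.2))) _) hcon
    exact absurd hmemb (not_le.mpr hlt2)
  have hch1 : Cardinal.lift.{u+1} (ℵ_ α) ≤
      Cardinal.prod (fun i : Set.Iio β.cof.ord =>
        Cardinal.lift.{u+1} (ℵ_ (⨆ n : ℕ, σ (c (i0 + 1 + (i.1 + (n : Ordinal.{u}))))))) := by
    have hne : Nonempty (Set.Iio β.cof.ord) := ⟨⟨0, hlopos⟩⟩
    calc Cardinal.lift.{u+1} (ℵ_ α)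
        = Cardinal.lift.{u+1} (ℵ_ (⨆ i : Set.Iio β.cof.ord,
            ⨆ n : ℕ, σ (c (i0 + 1 + (i.1 + (n : Ordinal.{u})))))) := by rw [hsupA]
      _ ≤ Cardinal.lift.{u+1} (⨆ i : Set.Iio β.cof.ord, ℵ_ (⨆ n : ℕ,
            σ (c (i0 + 1 + (i.1 + (n : Ordinal.{u})))))) :=
          Cardinal.lift_le.mpr (aleph_le_iSup _)
      _ = ⨆ i : Set.Iio β.cof.ord, Cardinal.lift.{u+1} (ℵ_ (⨆ n : ℕ,
            σ (c (i0 + 1 + (i.1 + (n : Ordinal.{u})))))) := Cardinal.lift_iSup (card_bddAbove _)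
      _ ≤ _ := by
          refine ciSup_le' fun i => ?_
          have h2 := lift_le_prod (fun i : Set.Iio β.cof.ord =>
            Cardinal.lift.{u+1} (ℵ_ (⨆ n : ℕ, σ (c (i0 + 1 + (i.1 + (n : Ordinal.{u})))))))
            (fun i => by simpa using Cardinal.lift_le.mpr (one_le_aleph _)) i
          rwa [Cardinal.lift_id] at h2
  have hch2 : Cardinal.lift.{u+1} ((ℵ_ α) ^ β.card) ≤
      Cardinal.lift.{u+1} ((ℵ_ (⨆ ξ : Set.Iio β.card.ord, σ ξ.1)) ^ β.card *
        (ℵ_ α) ^ β.cof) := by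
    have h1 := Cardinal.power_le_power_right (c := Cardinal.lift.{u+1} β.card) hch1
    rw [prod_power] at h1
    have h2 : Cardinal.prod (fun i : Set.Iio β.cof.ord =>
          Cardinal.lift.{u+1} (ℵ_ (⨆ n : ℕ, σ (c (i0 + 1 + (i.1 + (n : Ordinal.{u})))))) ^
            Cardinal.lift.{u+1} β.card) ≤
        Cardinal.prod (fun _ : Set.Iio β.cof.ord =>
          Cardinal.lift.{u+1} ((ℵ_ (⨆ ξ : Set.Iio β.card.ord, σ ξ.1)) ^ β.card *
            (ℵ_ α) ^ ℵ₀)) := by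
      refine Cardinal.prod_le_prod _ _ fun i => ?_
      rw [← Cardinal.lift_power]
      exact Cardinal.lift_le.mpr (hfail i)
    have h3 : Cardinal.prod (fun _ : Set.Iio β.cof.ord =>
          Cardinal.lift.{u+1} ((ℵ_ (⨆ ξ : Set.Iio β.card.ord, σ ξ.1)) ^ β.card *
            (ℵ_ α) ^ ℵ₀)) =
        Cardinal.lift.{u+1} (((ℵ_ (⨆ ξ : Set.Iio β.card.ord, σ ξ.1)) ^ β.card *
            (ℵ_ α) ^ ℵ₀) ^ β.cof) := by
      rw [Cardinal.prod_const, Ordinal.mk_Iio_ordinal, Cardinal.card_ord,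
        Cardinal.lift_power, Cardinal.lift_id, Cardinal.lift_lift]
    have harith : (((ℵ_ (⨆ ξ : Set.Iio β.card.ord, σ ξ.1)) ^ β.card *
          (ℵ_ α) ^ ℵ₀) ^ β.cof) =
        (ℵ_ (⨆ ξ : Set.Iio β.card.ord, σ ξ.1)) ^ β.card * (ℵ_ α) ^ β.cof := by
      rw [Cardinal.mul_power, ← Cardinal.power_mul, ← Cardinal.power_mul,
        Cardinal.mul_eq_left hμinf hlltμ.le
          (ne_of_gt (lt_of_lt_of_le Cardinal.aleph0_pos hlinf)),
        Cardinal.mul_eq_right hlinf hlinf Cardinal.aleph0_ne_zero]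
    calc Cardinal.lift.{u+1} ((ℵ_ α) ^ β.card)
        = Cardinal.lift.{u+1} (ℵ_ α) ^ Cardinal.lift.{u+1} β.card := Cardinal.lift_power _ _
      _ ≤ _ := le_trans h1 (le_trans h2
          (le_of_eq (h3.trans (congrArg Cardinal.lift.{u+1} harith))))
  have hlow : Cardinal.lift.{u+1}
      ((ℵ_ (⨆ ξ : Set.Iio β.card.ord, σ ξ.1)) ^ β.card * (ℵ_ α) ^ β.cof) ≤
      Cardinal.prod (fun ξ : Set.Iio β => ℵ_ (σ ξ.1)) := by
    have hGinj : Function.Injective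
        (Sum.elim (fun q : Set.Iio β.card.ord × Set.Iio β.card.ord =>
            (⟨(Eμ q).1, lt_trans (Eμ q).2 hμoltβ⟩ : Set.Iio β))
          (fun q : Set.Iio β.cof.ord × Set.Iio β.cof.ord =>
            (⟨c (i0 + 1 + (El q).1), hD_lt (El q).2⟩ : Set.Iio β))) := by
      intro s t hst
      match s, t with
      | Sum.inl q, Sum.inl r =>
          have h2 : (Eμ q).1 = (Eμ r).1 := Subtype.mk_eq_mk.mp hst
          rw [Eμ.injective (Subtype.ext h2)]
      | Sum.inl q, Sum.inr r =>
          have h2 : (Eμ q).1 = c (i0 + 1 + (El r).1) := Subtype.mk_eq_mk.mp hst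
          exact absurd h2 (ne_of_lt (lt_of_lt_of_le (Eμ q).2 (hD_ge (El r).2)))
      | Sum.inr q, Sum.inl r =>
          have h2 : c (i0 + 1 + (El q).1) = (Eμ r).1 := Subtype.mk_eq_mk.mp hst
          exact absurd h2.symm (ne_of_lt (lt_of_lt_of_le (Eμ r).2 (hD_ge (El q).2)))
      | Sum.inr q, Sum.inr r =>
          have h2 : c (i0 + 1 + (El q).1) = c (i0 + 1 + (El r).1) := Subtype.mk_eq_mk.mp hst
          have h3 : (El q).1 = (El r).1 := by
            by_contra hne
            rcases lt_or_gt_of_ne hne with h4 | h4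
            · exact absurd h2 (ne_of_lt (hD_smono h4 (El r).2))
            · exact absurd h2.symm (ne_of_lt (hD_smono h4 (El q).2))
          rw [El.injective (Subtype.ext h3)]
    refine le_trans ?_ (prod_comp_le (fun ξ : Set.Iio β => ℵ_ (σ ξ.1))
      (fun _ => one_le_aleph _) _ hGinj)
    rw [prod_sum, Cardinal.lift_mul]
    refine mul_le_mul' ?_ ?_
    · refine rect_ge (fun ξ η h hb => hmono ξ η h (lt_trans hb hμoltβ)) rfl β.card hμinf Eμ ?_
      intro j x
      exact slice_unbounded (fun k => Eμ (j, k)) (hslice_inj _ Eμ j) x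
    · refine rect_ge hmono hα β.cof hlinf
        (fun q => ⟨c (i0 + 1 + (El q).1), hD_lt (El q).2⟩) ?_
      intro j x
      obtain ⟨j', hj', hxj'⟩ := hD_cof x.1 x.2
      obtain ⟨k, hk⟩ := slice_unbounded (fun k => El (j, k)) (hslice_inj _ El j) ⟨j', hj'⟩
      refine ⟨k, le_trans hxj' ?_⟩
      rcases eq_or_lt_of_le hk with heq | hlt'
      · exact le_of_eq (congrArg (fun z => c (i0 + 1 + z)) heq)
      · exact (hD_smono hlt' (El (j, k)).2).le
  exact absurd hlt (not_lt.mpr (le_trans hch2 hlow))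
end

section
/- If Tarski's conjecture fails, then there exist an uncountable regular cardinal κ and an ordinal γ such that ℵ_γ has cofinality κ, γ > κ, for every ν < γ one has ℵ_ν^{κ} < ℵ_γ, and ℵ_γ^{κ} > ℵ_{γ+ω}^{ℵ₀}. -/
open Cardinal Ordinal Set

universe u v w

set_option maxHeartbeats 1000000
set_option synthInstance.maxHeartbeats 400000

namespace TarskiAux

noncomputable def outEquiv {c : Cardinal.{v}} {α : Type v} (h : c = #α) : c.out ≃ α :=
  Classical.choice (Cardinal.eq.mp (by rw [mk_out, h]))

theorem lift_le_prod {ι : Type v} (f : ι → Cardinal.{w}) (hf : ∀ i, f i ≠ 0) (i₀ : ι) :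
    Cardinal.lift.{v} (f i₀) ≤ Cardinal.prod f := by
  classical
  have hne : ∀ i, Nonempty (f i).out := fun i => mk_ne_zero_iff.1 (by rw [mk_out]; exact hf i)
  have d : ∀ i, (f i).out := fun i => Classical.choice (hne i)
  rw [← Cardinal.mk_out (f i₀), ← Cardinal.mk_uLift, Cardinal.prod, Cardinal.le_def]
  refine ⟨⟨fun x => Function.update d i₀ x.down, fun x y h => ?_⟩⟩
  have := Function.update_injective d i₀ h
  exact congrArg ULift.up this

theorem prod_le_prod_of_pieces {ι K : Type v} (f : ι → Cardinal.{w}) (hf : ∀ i, f i ≠ 0)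
    (A : K → Set ι) (hd : ∀ k k', k ≠ k' → ∀ i, i ∈ A k → i ∉ A k')
    (g : K → Cardinal.{max v w})
    (hg : ∀ k, g k ≤ Cardinal.prod (fun x : A k => f x.1)) :
    Cardinal.prod g ≤ Cardinal.prod f := by
  classical
  have hne : ∀ i, Nonempty (f i).out := fun i => mk_ne_zero_iff.1 (by rw [mk_out]; exact hf i)
  have d : ∀ i, (f i).out := fun i => Classical.choice (hne i)
  refine (Cardinal.prod_le_prod _ _ hg).trans ?_
  have e1 : Cardinal.prod (fun k => Cardinal.prod fun x : A k => f x.1)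
      = #(∀ k, ∀ x : A k, (f x.1).out) := by
    rw [Cardinal.prod]
    exact Cardinal.mk_congr (Equiv.piCongrRight fun k => outMkEquiv)
  rw [e1, Cardinal.prod, Cardinal.le_def]
  refine ⟨⟨fun F i => if h : ∃ k, i ∈ A k then F h.choose ⟨i, h.choose_spec⟩ else d i,
    fun F G hFG => ?_⟩⟩
  funext k x
  have hx : ∃ k', (x : ι) ∈ A k' := ⟨k, x.2⟩
  have hk : hx.choose = k := by
    by_contra hne'
    exact hd _ _ hne' _ hx.choose_spec x.2
  have hcf := congrFun hFG x.1
  simp only [dif_pos hx] at hcf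
  have gen : ∀ (H : ∀ k, ∀ x : A k, (f x.1).out) (k' : K) (e : k' = k) (h' : (x : ι) ∈ A k'),
      H k' ⟨x.1, h'⟩ = H k x := by
    rintro H k' rfl h'
    obtain ⟨xv, hxv⟩ := x
    rfl
  rw [gen F _ hk, gen G _ hk] at hcf
  exact hcf

theorem prod_power {ι : Type v} (f : ι → Cardinal.{v}) (c : Cardinal.{v}) :
    (Cardinal.prod f) ^ c = Cardinal.prod (fun i => f i ^ c) := by
  conv_lhs => rw [← Cardinal.mk_out c, Cardinal.prod, Cardinal.power_def]
  rw [Cardinal.prod]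
  refine Cardinal.mk_congr ?_
  refine (Equiv.piComm fun a i => (f i).out).trans ?_
  exact Equiv.piCongrRight fun i =>
    (outEquiv (α := c.out → (f i).out) (by rw [← Cardinal.power_def, mk_out, mk_out])).symm

theorem prod_sum {K₁ K₂ : Type v} (g : K₁ ⊕ K₂ → Cardinal.{v}) :
    Cardinal.prod g = Cardinal.prod (fun k => g (.inl k)) * Cardinal.prod (fun k => g (.inr k)) := by
  rw [Cardinal.prod, Cardinal.prod, Cardinal.prod,
    Cardinal.mk_congr (Equiv.sumPiEquivProdPi fun k => (g k).out),
    Cardinal.mk_prod, Cardinal.lift_id, Cardinal.lift_id]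


theorem lift_aleph_le_prod {ι : Type v} (τ : ι → Ordinal.{u}) (α' : Ordinal.{u})
    (hα' : Order.IsSuccLimit α') (h : ∀ ν < α', ∃ i, ν < τ i) :
    Cardinal.lift.{v} (ℵ_ α') ≤ Cardinal.prod (fun i => ℵ_ (τ i)) := by
  have hne : Nonempty (Iio α') := ⟨⟨0, hα'.pos⟩⟩
  have hbdd : BddAbove (Set.range fun a : Iio α' => ℵ_ a.1) := by
    refine ⟨ℵ_ α', ?_⟩
    rintro x ⟨a, rfl⟩
    exact aleph_le_aleph.2 a.2.le
  rw [aleph_limit hα', Cardinal.lift_iSup hbdd]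
  refine ciSup_le' fun a => ?_
  obtain ⟨i, hi⟩ := h a.1 a.2
  calc Cardinal.lift.{v} (ℵ_ a.1) ≤ Cardinal.lift.{v} (ℵ_ (τ i)) :=
        Cardinal.lift_le.2 (aleph_le_aleph.2 hi.le)
  _ ≤ _ := lift_le_prod _ (fun j => (aleph_pos (τ j)).ne') i

theorem mk_Ico_ordinal (a b : Ordinal.{u}) :
    #(Set.Ico a b) = Cardinal.lift.{u+1} ((b - a).card) := by
  rw [← Ordinal.mk_Iio_ordinal]
  refine Cardinal.mk_congr ⟨fun x => ⟨x.1 - a, ?_⟩, fun j => ⟨a + j.1, ?_, ?_⟩, fun x => ?_, fun j => ?_⟩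
  · have : a + (x.1 - a) < b := by rw [Ordinal.add_sub_cancel_of_le x.2.1]; exact x.2.2
    exact Ordinal.lt_sub.2 this
  · exact le_self_add
  · exact Ordinal.lt_sub.1 j.2
  · exact Subtype.ext (Ordinal.add_sub_cancel_of_le x.2.1)
  · exact Subtype.ext (Ordinal.add_sub_cancel a j.1)

theorem self_le_of_strictMonoOn {σ : Ordinal.{u} → Ordinal.{u}} {β : Ordinal.{u}}
    (hm : ∀ ξ η, ξ < η → η < β → σ ξ < σ η) : ∀ ξ < β, ξ ≤ σ ξ := by
  intro ξ
  induction ξ using Ordinal.induction with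
  | h ξ IH =>
    intro hξ
    refine le_of_forall_lt fun c hc => ?_
    exact lt_of_le_of_lt (IH c hc (hc.trans hξ)) (hm c ξ hc hξ)

theorem isLimit_iSup_sigma {σ : Ordinal.{u} → Ordinal.{u}} {β θ : Ordinal.{u}}
    (hm : ∀ ξ η, ξ < η → η < β → σ ξ < σ η) (hθ : Order.IsSuccLimit θ) (hθβ : θ ≤ β) :
    Order.IsSuccLimit (⨆ ξ : Set.Iio θ, σ ξ.1) := by
  have hsle : ∀ ξ (h : ξ < θ), σ ξ ≤ ⨆ ξ : Set.Iio θ, σ ξ.1 := fun ξ h =>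
    Ordinal.le_iSup (fun ξ : Set.Iio θ => σ ξ.1) ⟨ξ, h⟩
  have hkey : ∀ x < (⨆ ξ : Set.Iio θ, σ ξ.1), Order.succ x < (⨆ ξ : Set.Iio θ, σ ξ.1) := by
    intro x hx
    obtain ⟨⟨ξ, hξ⟩, hxξ⟩ := Ordinal.lt_iSup_iff.1 hx
    have h1 : ξ + 1 < θ := hθ.succ_lt hξ
    have h2 : σ ξ < σ (ξ + 1) := hm ξ (ξ + 1) (lt_add_one ξ) (h1.trans_le hθβ)
    calc Order.succ x ≤ σ ξ := Order.succ_le_of_lt hxξ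
    _ < σ (ξ + 1) := h2
    _ ≤ _ := hsle _ h1
  refine Ordinal.isSuccLimit_iff.2 ⟨?_, Order.isSuccPrelimit_of_succ_lt hkey⟩
  have hpos : (0 : Ordinal.{u}) < ⨆ ξ : Set.Iio θ, σ ξ.1 := by
    have h1 : (1 : Ordinal) < θ := Ordinal.one_lt_of_isSuccLimit hθ
    calc (0 : Ordinal.{u}) ≤ σ 0 := zero_le
    _ < σ 1 := hm 0 1 zero_lt_one (h1.trans_le hθβ)
    _ ≤ _ := hsle 1 h1
  exact hpos.ne'

theorem card_le_aleph (o : Ordinal.{u}) : o.card ≤ ℵ_ o := by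
  have h : ∀ o : Ordinal.{u}, o ≤ (ℵ_ o).ord := by
    intro o
    induction o using Ordinal.induction with
    | h o IH =>
      refine le_of_forall_lt fun a ha => ?_
      exact lt_of_le_of_lt (IH a ha) (Cardinal.ord_lt_ord.2 (aleph_lt_aleph.2 ha))
  calc o.card ≤ (ℵ_ o).ord.card := Ordinal.card_le_card (h o)
  _ = ℵ_ o := Cardinal.card_ord _

theorem le_iSup_sigma {σ : Ordinal.{u} → Ordinal.{u}} {β θ : Ordinal.{u}}
    (hm : ∀ ξ η, ξ < η → η < β → σ ξ < σ η) (hθ : Order.IsSuccLimit θ) (hθβ : θ ≤ β) :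
    θ ≤ ⨆ ξ : Set.Iio θ, σ ξ.1 := by
  refine le_of_forall_lt fun a ha => ?_
  have h1 : a + 1 < θ := hθ.succ_lt ha
  calc a < a + 1 := lt_add_one a
  _ ≤ σ (a + 1) := self_le_of_strictMonoOn hm _ (h1.trans_le hθβ)
  _ ≤ _ := Ordinal.le_iSup (fun ξ : Set.Iio θ => σ ξ.1) ⟨a + 1, h1⟩


theorem exists_pieces_of_le_cof (θ : Ordinal.{u}) (μ : Cardinal.{u})
    (hμ0 : ℵ₀ ≤ μ) (hμ : μ ≤ θ.cof) (x₀ : Ordinal.{u}) (hx₀ : x₀ < θ) :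
    ∃ D : Set.Iio μ.ord → Set Ordinal.{u},
      (∀ j j', j ≠ j' → ∀ y, y ∈ D j → y ∉ D j') ∧
      ∀ j, (∀ y ∈ D j, x₀ ≤ y ∧ y < θ) ∧ (∀ x < θ, ∃ y ∈ D j, x ≤ y) := by
  obtain ⟨e, he⟩ := Ordinal.exists_fundamental_sequence θ
  have hcards : #(Set.Iio θ.cof.ord) = #(Set.Iio μ.ord × Set.Iio θ.cof.ord) := by
    have hmul : μ * θ.cof = θ.cof :=
      Cardinal.mul_eq_right (hμ0.trans hμ) hμ ((aleph0_pos.trans_le hμ0).ne')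
    rw [Cardinal.mk_prod, Ordinal.mk_Iio_ordinal, Ordinal.mk_Iio_ordinal,
      Cardinal.card_ord, Cardinal.card_ord, Cardinal.lift_id, Cardinal.lift_id,
      ← Cardinal.lift_mul, hmul]
  let P := (Cardinal.eq.mp hcards).some
  have einj : ∀ i i' : Set.Iio θ.cof.ord, e i.1 i.2 = e i'.1 i'.2 → i = i' := by
    intro i i' hee
    by_contra hne
    rcases lt_or_gt_of_ne (fun h : i.1 = i'.1 => hne (Subtype.ext h)) with h | h
    · exact absurd hee (he.2.1 i.2 i'.2 h).ne
    · exact absurd hee.symm (he.2.1 i'.2 i.2 h).ne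
  refine ⟨fun j => { y | ∃ i : Set.Iio θ.cof.ord, (P i).1 = j ∧ y = e i.1 i.2 ∧ x₀ ≤ y },
    ?_, fun j => ⟨?_, ?_⟩⟩
  · rintro j j' hne y ⟨i, hij, rfl, _⟩ ⟨i', hij', hee, _⟩
    obtain rfl := einj i i' hee
    exact hne (hij ▸ hij')
  · rintro y ⟨i, _, rfl, hx⟩
    exact ⟨hx, he.lt i.2⟩
  · intro x hx
    have hmax : max x x₀ < θ := max_lt hx hx₀
    rw [← he.blsub_eq] at hmax
    obtain ⟨is, his, hle⟩ := Ordinal.lt_blsub_iff.1 hmax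
    by_contra hcon
    push_neg at hcon
    have hall : ∀ i : { i : Set.Iio θ.cof.ord | (P i).1 = j }, i.1.1 < is := by
      intro i
      by_contra hge
      push_neg at hge
      have hy : max x x₀ ≤ e i.1.1 i.1.2 := hle.trans (he.monotone his i.1.2 hge)
      exact absurd ((le_max_left x x₀).trans hy)
        (not_le.2 (hcon (e i.1.1 i.1.2) ⟨i.1, i.2, rfl, (le_max_right x x₀).trans hy⟩))
  -- cardinality contradiction
    have hEq : { i : Set.Iio θ.cof.ord | (P i).1 = j } ≃ Set.Iio θ.cof.ord :=
      { toFun := fun i => (P i.1).2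
        invFun := fun y => ⟨P.symm (j, y), by simp⟩
        left_inv := fun i => by
          obtain ⟨ip, hfib⟩ := i
          apply Subtype.ext
          show P.symm (j, (P ip).2) = ip
          rw [← hfib, Prod.mk.eta, Equiv.symm_apply_apply]
        right_inv := fun y => by simp }
    have hFcard : #{ i : Set.Iio θ.cof.ord | (P i).1 = j } = Cardinal.lift.{u+1} θ.cof := by
      rw [Cardinal.mk_congr hEq, Ordinal.mk_Iio_ordinal, Cardinal.card_ord]
    have hinj : #{ i : Set.Iio θ.cof.ord | (P i).1 = j } ≤ #(Set.Iio is) :=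
      ⟨⟨fun i => ⟨i.1.1, hall i⟩, fun a b hab =>
        Subtype.ext (Subtype.ext (Subtype.mk_eq_mk.1 hab))⟩⟩
    rw [hFcard, Ordinal.mk_Iio_ordinal, Cardinal.lift_le] at hinj
    exact absurd hinj (not_le.2 (Cardinal.lt_ord.1 his))

theorem exists_pieces_of_tails (δ : Ordinal.{u}) (hδ : Order.IsSuccLimit δ)
    (ht : ∀ ε < δ, (δ - ε).card = δ.card) :
    ∃ D : Set.Iio δ.card.ord → Set Ordinal.{u},
      (∀ j j', j ≠ j' → ∀ y, y ∈ D j → y ∉ D j') ∧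
      ∀ j, (∀ y ∈ D j, y < δ) ∧ (∀ x < δ, ∃ y ∈ D j, x ≤ y) := by
  have hcardinf : ℵ₀ ≤ δ.card := aleph0_le_card.2 (omega0_le_of_isSuccLimit hδ)
  rcases eq_or_lt_of_le (Ordinal.cof_le_card δ) with hEq | hLt
  · obtain ⟨D, h1, h2⟩ := exists_pieces_of_le_cof δ δ.card hcardinf hEq.ge 0 hδ.pos
    exact ⟨D, h1, fun j => ⟨fun y hy => ((h2 j).1 y hy).2, (h2 j).2⟩⟩
  · obtain ⟨e, he⟩ := Ordinal.exists_fundamental_sequence δ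
    have holim : Order.IsSuccLimit (δ.cof.ord) := isSuccLimit_ord (aleph0_le_cof.2 hδ)
    set E : Ordinal.{u} → Ordinal.{u} := fun i => if h : i < δ.cof.ord then e i h else δ with hE
    set s : Ordinal.{u} → Ordinal.{u} := fun i => ⨆ i' : Set.Iio i, E i'.1 with hs
    have hEe : ∀ i (h : i < δ.cof.ord), E i = e i h := fun i h => dif_pos h
    have hEmono : ∀ i i', i < i' → i' < δ.cof.ord → E i < E i' := by
      intro i i' h h'
      rw [hEe i (h.trans h'), hEe i' h']
      exact he.2.1 _ _ h
    have hEδ : ∀ i, i < δ.cof.ord → E i < δ := by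
      intro i h
      rw [hEe i h]
      exact he.lt h
    have hsE : ∀ i' i, i' < i → E i' ≤ s i :=
      fun i' i h => Ordinal.le_iSup (fun x : Set.Iio i => E x.1) ⟨i', h⟩
    refine ⟨fun j => { y | ∃ i, i < δ.cof.ord ∧ j.1 < E i - s i ∧ y = s i + j.1 },
      ?_, fun j => ⟨?_, ?_⟩⟩
    · rintro j j' hne y ⟨i, hi, hji, rfl⟩ ⟨i', hi', hji', heq⟩
      have hyE : s i + j.1 < E i := Ordinal.lt_sub.1 hji
      have hyE' : s i' + j'.1 < E i' := Ordinal.lt_sub.1 hji'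
      rcases lt_trichotomy i i' with h | h | h
      · have h1 : s i + j.1 < s i' := hyE.trans_le (hsE i i' h)
        have h2 : s i' ≤ s i + j.1 := heq.symm ▸ le_self_add
        exact absurd h1 (not_lt.2 h2)
      · subst h
        exact hne (Subtype.ext ((add_right_inj (s i)).1 heq))
      · have h1 : s i' + j'.1 < s i := hyE'.trans_le (hsE i' i h)
        have h2 : s i ≤ s i' + j'.1 := heq ▸ le_self_add
        exact absurd h1 (not_lt.2 h2)
    · rintro y ⟨i, hi, hji, rfl⟩
      exact (Ordinal.lt_sub.1 hji).trans (hEδ i hi)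
    · intro x hx
      have hx' : x < Ordinal.blsub _ e := by rw [he.blsub_eq]; exact hx
      obtain ⟨is, his, hxe⟩ := Ordinal.lt_blsub_iff.1 hx'
      have hi₁lt : is + 1 < δ.cof.ord := by
        rw [add_one_eq_succ]; exact holim.succ_lt his
      have hxE : x < E (is + 1) := by
        rw [hEe _ hi₁lt]
        exact hxe.trans_lt (he.2.1 his hi₁lt (lt_add_one is))
      by_contra hcon
      push_neg at hcon
      have hblock : ∀ i, is + 1 < i → (h : i < δ.cof.ord) → (E i - s i).card ≤ j.1.card := by
        intro i h1 h2
        have hnj : ¬ (j.1 < E i - s i) := by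
          intro hj
          have hy : x ≤ s i + j.1 :=
            ((hxE.le.trans (hsE (is + 1) i h1)).trans (le_self_add))
          exact absurd hy (not_le.2 (hcon (s i + j.1) ⟨i, h2, hj, rfl⟩))
        push_neg at hnj
        exact Ordinal.card_le_card hnj
      -- the tail
      have hiyset : ∀ y : Set.Ico (E (is + 1)) δ,
          Set.Nonempty { i | i < δ.cof.ord ∧ y.1 < E i } := by
        intro y
        have hy' : y.1 < Ordinal.blsub _ e := by rw [he.blsub_eq]; exact y.2.2
        obtain ⟨iz, hiz, hyz⟩ := Ordinal.lt_blsub_iff.1 hy'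
        have hiz1 : iz + 1 < δ.cof.ord := by
          rw [add_one_eq_succ]; exact holim.succ_lt hiz
        refine ⟨iz + 1, hiz1, ?_⟩
        rw [hEe _ hiz1]
        exact hyz.trans_lt (he.2.1 hiz hiz1 (lt_add_one iz))
      set iy : Set.Ico (E (is + 1)) δ → Ordinal.{u} :=
        fun y => sInf { i | i < δ.cof.ord ∧ y.1 < E i } with hiydef
      have hiy : ∀ y, iy y < δ.cof.ord ∧ y.1 < E (iy y) := fun y => csInf_mem (hiyset y)
      have hys : ∀ y, s (iy y) ≤ y.1 := by
        intro y
        rw [hs]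
        refine Ordinal.iSup_le_iff.2 ?_
        rintro ⟨i', hi'⟩
        show E i' ≤ y.1
        by_contra hgt
        push_neg at hgt
        have : iy y ≤ i' := csInf_le' ⟨hi'.trans (hiy y).1, hgt⟩
        exact absurd hi' (not_lt.2 this)
      have hi₁y : ∀ y, is + 1 < iy y := by
        intro y
        rcases lt_trichotomy (iy y) (is + 1) with h | h | h
        · have : E (iy y) ≤ E (is + 1) := (hEmono _ _ h hi₁lt).le
          exact absurd (((hiy y).2.trans_le this)) (not_lt.2 y.2.1)
        · have h2 := (hiy y).2
          rw [h] at h2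
          exact absurd h2 (not_lt.2 y.2.1)
        · exact h
      have hinj : #(Set.Ico (E (is + 1)) δ) ≤
          Cardinal.sum (fun i : Set.Ioo (is + 1) δ.cof.ord => #(Set.Ico (s i.1) (E i.1))) := by
        rw [← Cardinal.mk_sigma]
        refine ⟨⟨fun y => ⟨⟨iy y, hi₁y y, (hiy y).1⟩, ⟨y.1, hys y, (hiy y).2⟩⟩, ?_⟩⟩
        intro a b hab
        have := congrArg
          (fun p : (Σ i : Set.Ioo (is + 1) δ.cof.ord, Set.Ico (s i.1) (E i.1)) => p.2.1) hab
        exact Subtype.ext this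
      have htail : #(Set.Ico (E (is + 1)) δ) = Cardinal.lift.{u+1} δ.card := by
        rw [mk_Ico_ordinal, ht (E (is + 1)) (hEδ _ hi₁lt)]
      have hsum : Cardinal.sum
          (fun i : Set.Ioo (is + 1) δ.cof.ord => #(Set.Ico (s i.1) (E i.1)))
          ≤ Cardinal.lift.{u+1} (δ.cof * j.1.card) := by
        calc Cardinal.sum (fun i : Set.Ioo (is + 1) δ.cof.ord => #(Set.Ico (s i.1) (E i.1)))
            ≤ Cardinal.sum (fun _ : Set.Ioo (is + 1) δ.cof.ord =>
              Cardinal.lift.{u+1} j.1.card) := by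
              refine Cardinal.sum_le_sum _ _ fun i => ?_
              rw [mk_Ico_ordinal]
              exact Cardinal.lift_le.2 (hblock i.1 i.2.1 i.2.2)
        _ = #(Set.Ioo (is + 1) δ.cof.ord) * Cardinal.lift.{u+1} j.1.card :=
              Cardinal.sum_const' _ _
        _ ≤ Cardinal.lift.{u+1} δ.cof * Cardinal.lift.{u+1} j.1.card := by
              refine mul_le_mul_left ?_ _
              calc #(Set.Ioo (is + 1) δ.cof.ord) ≤ #(Set.Iio δ.cof.ord) :=
                    Cardinal.mk_le_mk_of_subset Set.Ioo_subset_Iio_self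
              _ = Cardinal.lift.{u+1} δ.cof := by
                    rw [Ordinal.mk_Iio_ordinal, Cardinal.card_ord]
        _ = Cardinal.lift.{u+1} (δ.cof * j.1.card) := by rw [← Cardinal.lift_mul]
      have hfin : Cardinal.lift.{u+1} δ.card ≤ Cardinal.lift.{u+1} (δ.cof * j.1.card) := by
        rw [← htail]; exact hinj.trans hsum
      rw [Cardinal.lift_le] at hfin
      have hlt : δ.cof * j.1.card < δ.card :=
        Cardinal.mul_lt_of_lt hcardinf hLt (Cardinal.lt_ord.1 j.2)
      exact absurd hfin (not_le.2 hlt)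

noncomputable def tyi {o : Ordinal.{u}} (t : o.ToType) : Ordinal.{u} :=
  @Ordinal.typein _ (· < ·) isWellOrder_lt t

theorem tyi_lt {o : Ordinal.{u}} (t : o.ToType) : tyi t < o := by
  have := @Ordinal.typein_lt_type _ (· < ·) isWellOrder_lt t
  rwa [Ordinal.type_toType] at this

noncomputable def enu {o : Ordinal.{u}} (x : Ordinal.{u}) (h : x < o) : o.ToType :=
  @Ordinal.enum _ (· < ·) isWellOrder_lt ⟨x, by rw [Ordinal.type_toType]; exact h⟩

theorem tyi_enu {o : Ordinal.{u}} (x : Ordinal.{u}) (h : x < o) : tyi (enu x h) = x :=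
  @Ordinal.typein_enum _ (· < ·) isWellOrder_lt _ _

theorem tyi_lt_tyi {o : Ordinal.{u}} {a b : o.ToType} : tyi a < tyi b ↔ a < b :=
  @Ordinal.typein_lt_typein _ (· < ·) isWellOrder_lt _ _

theorem mk_sub_toType {o : Ordinal.{u}} (b : o.ToType) :
    #{w : o.ToType // w < b} = (tyi b).card :=
  (@Ordinal.card_typein _ (· < ·) isWellOrder_lt b).symm

theorem pow_le_of_lt_cof (γ' : Ordinal.{u}) (lam : Cardinal.{u})
    (hcof : lam < (ℵ_ γ').ord.cof)
    (hd : ∀ d : Cardinal.{u}, d < ℵ_ γ' → d ^ lam < ℵ_ γ') :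
    (ℵ_ γ') ^ lam ≤ ℵ_ γ' := by
  classical
  have hOlim : Order.IsSuccLimit ((ℵ_ γ').ord) := isSuccLimit_ord (aleph0_le_aleph γ')
  have hTW : (ℵ_ γ') ^ lam = #(lam.ord.ToType → (ℵ_ γ').ord.ToType) := by
    rw [← Cardinal.power_def, mk_toType, mk_toType, card_ord, card_ord]
  have hbnd : ∀ f : lam.ord.ToType → (ℵ_ γ').ord.ToType, ∃ b, ∀ t, f t < b := by
    intro f
    have hsup : (⨆ t, tyi (f t)) < (ℵ_ γ').ord := by
      refine Ordinal.iSup_lt_ord ?_ (fun t => tyi_lt (f t))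
      rw [mk_toType, card_ord]; exact hcof
    have hsup1 : (⨆ t, tyi (f t)) + 1 < (ℵ_ γ').ord := by
      rw [add_one_eq_succ]; exact hOlim.succ_lt hsup
    refine ⟨enu _ hsup1, fun t => ?_⟩
    rw [← tyi_lt_tyi, tyi_enu]
    exact (Ordinal.le_iSup (fun t => tyi (f t)) t).trans_lt (lt_add_one _)
  have key : #(lam.ord.ToType → (ℵ_ γ').ord.ToType) ≤
      Cardinal.sum (fun b : (ℵ_ γ').ord.ToType =>
        #(lam.ord.ToType → {w : (ℵ_ γ').ord.ToType // w < b})) := by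
    rw [← Cardinal.mk_sigma]
    refine ⟨⟨fun f => ⟨(hbnd f).choose, fun t => ⟨f t, (hbnd f).choose_spec t⟩⟩, ?_⟩⟩
    intro f g hfg
    funext t
    exact congrArg (fun p : (Σ b : (ℵ_ γ').ord.ToType,
      (lam.ord.ToType → {w : (ℵ_ γ').ord.ToType // w < b})) => (p.2 t).1) hfg
  have hterms : ∀ b : (ℵ_ γ').ord.ToType,
      #(lam.ord.ToType → {w : (ℵ_ γ').ord.ToType // w < b}) ≤ ℵ_ γ' := by
    intro b
    have h1 : #(lam.ord.ToType → {w : (ℵ_ γ').ord.ToType // w < b})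
        = #{w : (ℵ_ γ').ord.ToType // w < b} ^ lam := by
      rw [← Cardinal.power_def, mk_toType, card_ord]
    have h3 : (tyi b).card < ℵ_ γ' := Cardinal.lt_ord.1 (tyi_lt b)
    rw [h1, mk_sub_toType]
    exact (hd _ h3).le
  have hsum : Cardinal.sum (fun b : (ℵ_ γ').ord.ToType =>
      #(lam.ord.ToType → {w : (ℵ_ γ').ord.ToType // w < b})) ≤ ℵ_ γ' := by
    calc _ ≤ Cardinal.sum (fun _ : (ℵ_ γ').ord.ToType => ℵ_ γ') :=
          Cardinal.sum_le_sum _ _ hterms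
    _ = #((ℵ_ γ').ord.ToType) * ℵ_ γ' := Cardinal.sum_const' _ _
    _ = ℵ_ γ' * ℵ_ γ' := by rw [mk_toType, card_ord]
    _ = ℵ_ γ' := Cardinal.mul_eq_self (aleph0_le_aleph γ')
  rw [hTW]
  exact key.trans hsum

theorem pow_le_pow_cof (γ : Ordinal.{u}) (hγ : Order.IsSuccLimit γ) (lam : Cardinal.{u})
    (hsm : ∀ ν < γ, (ℵ_ ν) ^ lam < ℵ_ γ) :
    (ℵ_ γ) ^ lam ≤ (ℵ_ γ) ^ γ.cof := by
  obtain ⟨e, he⟩ := Ordinal.exists_fundamental_sequence γ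
  have holim : Order.IsSuccLimit (γ.cof.ord) := isSuccLimit_ord (aleph0_le_cof.2 hγ)
  set τ : γ.cof.ord.ToType → Ordinal.{u} := fun t => e (tyi t) (tyi_lt t) with hτ
  have hτγ : ∀ t, τ t < γ := fun t => he.lt _
  have h1 : ℵ_ γ ≤ Cardinal.prod (fun t => ℵ_ (τ t)) := by
    have := lift_aleph_le_prod τ γ hγ ?_
    · rwa [Cardinal.lift_id] at this
    · intro ν hν
      have hν' : ν < Ordinal.blsub _ e := by rw [he.blsub_eq]; exact hν
      obtain ⟨i, hi, hle⟩ := Ordinal.lt_blsub_iff.1 hν'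
      have hi1 : i + 1 < γ.cof.ord := by rw [add_one_eq_succ]; exact holim.succ_lt hi
      have gen : ∀ (x : Ordinal) (hx : x < γ.cof.ord), x = i + 1 → ν < e x hx := by
        rintro x hx rfl
        exact hle.trans_lt (he.2.1 hi hx (lt_add_one i))
      exact ⟨enu _ hi1, gen _ _ (tyi_enu _ hi1)⟩
  calc (ℵ_ γ) ^ lam ≤ (Cardinal.prod fun t => ℵ_ (τ t)) ^ lam :=
        Cardinal.power_le_power_right h1
  _ = Cardinal.prod (fun t => (ℵ_ (τ t)) ^ lam) := prod_power _ _
  _ ≤ Cardinal.prod (fun _ : γ.cof.ord.ToType => ℵ_ γ) :=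
        Cardinal.prod_le_prod _ _ fun t => (hsm _ (hτγ t)).le
  _ = (ℵ_ γ) ^ #(γ.cof.ord.ToType) := Cardinal.prod_const' _ _
  _ = (ℵ_ γ) ^ γ.cof := by rw [mk_toType, card_ord]

set_option maxHeartbeats 1000000 in
theorem partB (α α₁ : Ordinal.{u}) (lam mu : Cardinal.{u})
    (hlam : ℵ₀ ≤ lam) (hmu : ℵ₀ ≤ mu) (hcofα : α.cof ≤ mu)
    (hα₁ : lam.ord ≤ α₁) (hαlim : Order.IsSuccLimit α)
    (key : (ℵ_ α₁) ^ lam * (ℵ_ α) ^ mu < (ℵ_ α) ^ lam) :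
    ∃ (κ : Cardinal.{u}) (γ : Ordinal.{u}),
      κ.IsRegular ∧ ℵ₀ < κ ∧
      (ℵ_ γ).ord.cof = κ ∧
      κ.ord < γ ∧
      (∀ ν : Ordinal.{u}, ν < γ → (ℵ_ ν) ^ κ < ℵ_ γ) ∧
      (ℵ_ (γ + ω)) ^ (ℵ₀ : Cardinal.{u}) < (ℵ_ γ) ^ κ := by
  have hS : {ν : Ordinal.{u} | (ℵ_ α) ^ lam ≤ (ℵ_ ν) ^ lam}.Nonempty := ⟨α, show (ℵ_ α) ^ lam ≤ (ℵ_ α) ^ lam from le_rfl⟩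
  set γ := sInf {ν : Ordinal.{u} | (ℵ_ α) ^ lam ≤ (ℵ_ ν) ^ lam} with hγdef
  have hγmem : (ℵ_ α) ^ lam ≤ (ℵ_ γ) ^ lam := csInf_mem hS
  have hγα : γ ≤ α := csInf_le' (le_rfl : (ℵ_ α) ^ lam ≤ (ℵ_ α) ^ lam)
  have hΓ : (ℵ_ γ) ^ lam = (ℵ_ α) ^ lam :=
    le_antisymm (power_le_power_right (aleph_le_aleph.2 hγα)) hγmem
  have hmin : ∀ ν < γ, (ℵ_ ν) ^ lam < (ℵ_ α) ^ lam := by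
    intro ν hν
    by_contra hc
    push_neg at hc
    have hgle : γ ≤ ν :=
      csInf_le' (show ν ∈ {ν : Ordinal.{u} | (ℵ_ α) ^ lam ≤ (ℵ_ ν) ^ lam} from hc)
    exact absurd hgle (not_le.2 hν)
  have hone : (1 : Cardinal.{u}) ≤ (ℵ_ α) ^ mu :=
    le_trans (one_le_aleph0.trans (aleph0_le_aleph α)) (self_le_power _ (one_le_aleph0.trans hmu))
  have hkey1 : (ℵ_ α₁) ^ lam < (ℵ_ α) ^ lam :=
    lt_of_le_of_lt (le_mul_of_one_le_right zero_le hone) key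
  have hα₁γ : α₁ < γ := by
    by_contra hc
    push_neg at hc
    have h2 : (ℵ_ α) ^ lam ≤ (ℵ_ α₁) ^ lam :=
      hΓ ▸ power_le_power_right (aleph_le_aleph.2 hc)
    exact absurd h2 (not_le.2 hkey1)
  have hkey2 : (ℵ_ α) ^ mu < (ℵ_ α) ^ lam := by
    refine lt_of_le_of_lt ?_ key
    refine le_mul_of_one_le_left zero_le ?_
    exact le_trans (one_le_aleph0.trans (aleph0_le_aleph α₁)) (self_le_power _ (one_le_aleph0.trans hlam))
  have hαlt : ℵ_ α < (ℵ_ α) ^ lam :=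
    lt_of_le_of_lt (self_le_power _ (one_le_aleph0.trans hmu)) hkey2
  have hsm : ∀ ν < γ, (ℵ_ ν) ^ lam < ℵ_ γ := by
    intro ν hν
    by_contra hc
    push_neg at hc
    have h2 : (ℵ_ α) ^ lam ≤ (ℵ_ ν) ^ lam := by
      calc (ℵ_ α) ^ lam = (ℵ_ γ) ^ lam := hΓ.symm
      _ ≤ ((ℵ_ ν) ^ lam) ^ lam := power_le_power_right hc
      _ = (ℵ_ ν) ^ (lam * lam) := (power_mul).symm
      _ = (ℵ_ ν) ^ lam := by rw [Cardinal.mul_eq_self hlam]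
    exact absurd h2 (not_le.2 (hmin ν hν))
  have hlamγ : lam.ord < γ := lt_of_le_of_lt hα₁ hα₁γ
  have hγ0 : 0 < γ := by
    refine lt_of_le_of_lt zero_le hlamγ
  have hlamaleph : lam < ℵ_ γ := by
    calc lam = (lam.ord).card := (card_ord lam).symm
    _ ≤ ℵ_ (lam.ord) := card_le_aleph _
    _ < ℵ_ γ := aleph_lt_aleph.2 hlamγ
  have hcontra : ∀ h : (ℵ_ γ) ^ lam ≤ ℵ_ γ, False := by
    intro h
    have : (ℵ_ α) ^ lam ≤ ℵ_ α := le_trans (hΓ.symm.le.trans h) (aleph_le_aleph.2 hγα)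
    exact absurd this (not_le.2 hαlt)
  have hγlim : Order.IsSuccLimit γ := by
    rcases Ordinal.zero_or_succ_or_isSuccLimit γ with h0 | ⟨ν, hν⟩ | h
    · exact absurd h0 hγ0.ne'
    · exfalso
      rw [eq_comm] at hν
      have hνγ : ν < γ := by rw [hν]; exact Order.lt_succ ν
      have hreg : (ℵ_ γ).IsRegular := by rw [hν]; exact isRegular_aleph_succ ν
      have hcof : lam < (ℵ_ γ).ord.cof := by rw [hreg.cof_eq]; exact hlamaleph
      have hdall : ∀ d : Cardinal.{u}, d < ℵ_ γ → d ^ lam < ℵ_ γ := by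
        intro d hd
        have hdν : d ≤ ℵ_ ν := by
          rw [hν, aleph_succ] at hd
          exact Order.lt_succ_iff.1 hd
        calc d ^ lam ≤ (ℵ_ ν) ^ lam := power_le_power_right hdν
        _ < ℵ_ γ := hsm ν hνγ
      exact hcontra (pow_le_of_lt_cof γ lam hcof hdall)
    · exact h
  have hκreg : ((ℵ_ γ).ord.cof).IsRegular := isRegular_cof (isSuccLimit_ord (aleph0_le_aleph γ))
  have hκγcof : (ℵ_ γ).ord.cof = γ.cof := by rw [ord_aleph]; exact cof_omega hγlim
  have hκlam : (ℵ_ γ).ord.cof ≤ lam := by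
    by_contra hc
    push_neg at hc
    have hdall : ∀ d : Cardinal.{u}, d < ℵ_ γ → d ^ lam < ℵ_ γ := by
      intro d hd
      rcases lt_or_ge d ℵ₀ with hfin | hinf
      · have hd0 : d ≤ ℵ_ 0 := by rw [aleph_zero]; exact hfin.le
        calc d ^ lam ≤ (ℵ_ 0) ^ lam := power_le_power_right hd0
        _ < ℵ_ γ := hsm 0 hγ0
      · obtain ⟨o, rfl⟩ := mem_range_aleph_iff.2 hinf
        exact hsm o (aleph_lt_aleph.1 hd)
    exact hcontra (pow_le_of_lt_cof γ lam hc hdall)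
  have hΓκ : (ℵ_ γ) ^ ((ℵ_ γ).ord.cof) = (ℵ_ α) ^ lam := by
    apply le_antisymm
    · rw [← hΓ]
      exact power_le_power_left (aleph_pos γ).ne' hκlam
    · rw [← hΓ]
      have h2 := pow_le_pow_cof γ hγlim lam hsm
      rwa [← hκγcof] at h2
  have hκℵ₀ : ℵ₀ < (ℵ_ γ).ord.cof := by
    rcases lt_or_eq_of_le hκreg.aleph0_le with h | h
    · exact h
    · exfalso
      have h2 : (ℵ_ α) ^ lam ≤ (ℵ_ α) ^ mu := by
        calc (ℵ_ α) ^ lam = (ℵ_ γ) ^ ((ℵ_ γ).ord.cof) := hΓκ.symm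
        _ = (ℵ_ γ) ^ (ℵ₀ : Cardinal.{u}) := by rw [← h]
        _ ≤ (ℵ_ α) ^ (ℵ₀ : Cardinal.{u}) := power_le_power_right (aleph_le_aleph.2 hγα)
        _ ≤ (ℵ_ α) ^ mu := power_le_power_left (aleph_pos α).ne' hmu
      exact absurd h2 (not_le.2 hkey2)
  have hγα' : γ < α := by
    rcases lt_or_eq_of_le hγα with h | h
    · exact h
    · exfalso
      have h2 : (ℵ_ α) ^ lam ≤ (ℵ_ α) ^ mu := by
        calc (ℵ_ α) ^ lam = (ℵ_ γ) ^ ((ℵ_ γ).ord.cof) := hΓκ.symm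
        _ ≤ (ℵ_ γ) ^ mu := by
              refine power_le_power_left (aleph_pos γ).ne' ?_
              rw [hκγcof, h]
              exact hcofα
        _ ≤ (ℵ_ α) ^ mu := power_le_power_right (aleph_le_aleph.2 hγα)
      exact absurd h2 (not_le.2 hkey2)
  have hγω : γ + ω ≤ α := by
    refine (Ordinal.add_le_iff_of_isSuccLimit isSuccLimit_omega0).2 fun b' hb' => ?_
    obtain ⟨n, rfl⟩ := Ordinal.lt_omega0.1 hb'
    clear hb'
    have hlt : γ + (n : Ordinal.{u}) < α := by
      induction n with
      | zero => simpa using hγα'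
      | succ n IH =>
        have : ((n + 1 : ℕ) : Ordinal.{u}) = (n : Ordinal.{u}) + 1 := by
          push_cast; rfl
        rw [this, ← add_assoc, add_one_eq_succ]
        exact hαlim.succ_lt IH
    exact hlt.le
  refine ⟨(ℵ_ γ).ord.cof, γ, hκreg, hκℵ₀, rfl, ?_, ?_, ?_⟩
  · calc ((ℵ_ γ).ord.cof).ord ≤ lam.ord := ord_le_ord.2 hκlam
    _ ≤ α₁ := hα₁
    _ < γ := hα₁γ
  · intro ν hν
    calc (ℵ_ ν) ^ ((ℵ_ γ).ord.cof) ≤ (ℵ_ ν) ^ lam :=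
          power_le_power_left (aleph_pos ν).ne' hκlam
    _ < ℵ_ γ := hsm ν hν
  · calc (ℵ_ (γ + ω)) ^ (ℵ₀ : Cardinal.{u}) ≤ (ℵ_ α) ^ (ℵ₀ : Cardinal.{u}) :=
          power_le_power_right (aleph_le_aleph.2 hγω)
    _ ≤ (ℵ_ α) ^ mu := power_le_power_left (aleph_pos α).ne' hmu
    _ ≤ (ℵ_ α₁) ^ lam * (ℵ_ α) ^ mu := by
          refine le_mul_of_one_le_left zero_le ?_
          exact le_trans (one_le_aleph0.trans (aleph0_le_aleph α₁))
            (self_le_power _ (one_le_aleph0.trans hlam))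
    _ < (ℵ_ α) ^ lam := key
    _ = (ℵ_ γ) ^ ((ℵ_ γ).ord.cof) := hΓκ.symm


theorem cof_iSup_sigma_le {β : Ordinal.{u}} (σ : Ordinal.{u} → Ordinal.{u}) (hβ : Order.IsSuccLimit β)
    (hm : ∀ ξ η, ξ < η → η < β → σ ξ < σ η) :
    (⨆ ξ : Set.Iio β, σ ξ.1).cof ≤ β.cof := by
  obtain ⟨e, he⟩ := Ordinal.exists_fundamental_sequence β
  have hgβ : ∀ t : β.cof.ord.ToType, e (tyi t) (tyi_lt t) < β := fun t => he.lt _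
  set g : β.cof.ord.ToType → Ordinal.{u} := fun t => σ (e (tyi t) (tyi_lt t)) with hg
  have heq : (⨆ ξ : Set.Iio β, σ ξ.1) = ⨆ t, g t := by
    apply le_antisymm
    · refine Ordinal.iSup_le_iff.2 ?_
      rintro ⟨ξ, hξ⟩
      have hξ' : ξ < Ordinal.blsub _ e := by rw [he.blsub_eq]; exact hξ
      obtain ⟨i, hi, hle⟩ := Ordinal.lt_blsub_iff.1 hξ'
      have gen : ∀ (x : Ordinal.{u}) (hx : x < β.cof.ord), x = i → σ ξ ≤ σ (e x hx) := by
        rintro x hx rfl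
        rcases eq_or_lt_of_le hle with h | h
        · rw [h]
        · exact (hm _ _ h (he.lt hx)).le
      calc σ ξ ≤ g (enu i hi) := gen _ _ (tyi_enu i hi)
      _ ≤ ⨆ t, g t := Ordinal.le_iSup g _
    · refine Ordinal.iSup_le_iff.2 fun t => ?_
      exact Ordinal.le_iSup (fun ξ : Set.Iio β => σ ξ.1) ⟨_, hgβ t⟩
  have hlt : ∀ t, g t < iSup g := by
    intro t
    rw [← heq]
    have h1 : e (tyi t) (tyi_lt t) + 1 < β := by
      rw [add_one_eq_succ]; exact hβ.succ_lt (hgβ t)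
    calc g t < σ (e (tyi t) (tyi_lt t) + 1) := hm _ _ (lt_add_one _) h1
    _ ≤ _ := Ordinal.le_iSup (fun ξ : Set.Iio β => σ ξ.1) ⟨_, h1⟩
  have hfin := Ordinal.cof_iSup_le hlt
  rw [← heq] at hfin
  rwa [mk_toType, card_ord] at hfin

end TarskiAux

open TarskiAux

/-- If Tarski's conjecture fails, then there exist an uncountable regular
cardinal `κ` and an ordinal `γ` such that `ℵ_γ` has cofinality `κ`, `γ > κ`, for every
`ν < γ` one has `ℵ_ν ^ κ < ℵ_γ`, and `ℵ_γ ^ κ > ℵ_{γ+ω} ^ ℵ₀`. -/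
theorem exists_gamma_of_tarski_fails
    (htarski : ∃ (β : Ordinal.{u}) (σ : Ordinal.{u} → Ordinal.{u}) (α : Ordinal.{u}),
      Order.IsSuccLimit β ∧
      (∀ ξ η : Ordinal.{u}, ξ < η → η < β → σ ξ < σ η) ∧
      α = (⨆ ξ : Set.Iio β, σ ξ.1) ∧
      Cardinal.prod (fun ξ : Set.Iio β => ℵ_ (σ ξ.1)) <
        Cardinal.lift.{u + 1} ((ℵ_ α) ^ β.card)) :
    ∃ (κ : Cardinal.{u}) (γ : Ordinal.{u}),
      κ.IsRegular ∧ ℵ₀ < κ ∧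
      (ℵ_ γ).ord.cof = κ ∧
      κ.ord < γ ∧
      (∀ ν : Ordinal.{u}, ν < γ → (ℵ_ ν) ^ κ < ℵ_ γ) ∧
      (ℵ_ (γ + ω)) ^ (ℵ₀ : Cardinal.{u}) < (ℵ_ γ) ^ κ := by
  obtain ⟨β, σ, α, hβlim, hm, hα, hlt⟩ := htarski
  subst hα
  set α := ⨆ ξ : Set.Iio β, σ ξ.1 with hαdef
  have hαlim : Order.IsSuccLimit α := isLimit_iSup_sigma hm hβlim le_rfl
  have hlamβ : ℵ₀ ≤ β.card := aleph0_le_card.2 (omega0_le_of_isSuccLimit hβlim)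
  set f : Set.Iio β → Cardinal.{u} := fun ξ => ℵ_ (σ ξ.1) with hf
  have hf0 : ∀ ξ : Set.Iio β, f ξ ≠ 0 := fun ξ => (aleph_pos _).ne'
  -- a helper producing the inner lower bound from an unbounded-in-θ piece
  have inner : ∀ (S : Set Ordinal.{u}) (α' θ : Ordinal.{u}), θ ≤ β → Order.IsSuccLimit α' →
      α' = (⨆ ξ : Set.Iio θ, σ ξ.1) → (∀ y ∈ S, y < β) → (∀ x < θ, ∃ y ∈ S, x ≤ y) →
      Cardinal.lift.{u+1} (ℵ_ α') ≤
        Cardinal.prod (fun x : {ξ : Set.Iio β // ξ.1 ∈ S} => f x.1) := by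
    intro S α' θ hθβ hα'lim hα'def hSβ hSunb
    refine lift_aleph_le_prod (fun x : {ξ : Set.Iio β // ξ.1 ∈ S} => σ x.1.1) α' hα'lim ?_
    intro ν hν
    rw [hα'def] at hν
    obtain ⟨⟨ξ, hξ⟩, hνξ⟩ := Ordinal.lt_iSup_iff.1 hν
    obtain ⟨y, hyS, hξy⟩ := hSunb ξ hξ
    have hyβ : y < β := hSβ y hyS
    refine ⟨⟨⟨y, hyβ⟩, hyS⟩, ?_⟩
    rcases eq_or_lt_of_le hξy with h | h
    · exact h ▸ hνξ
    · exact hνξ.trans (hm _ _ h hyβ)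
  by_cases hfull : ∀ ε < β, (β - ε).card = β.card
  · -- Case 1: impossible
    exfalso
    obtain ⟨D, hDdisj, hD⟩ := exists_pieces_of_tails β hβlim hfull
    have hbound := prod_le_prod_of_pieces f hf0
      (fun j : Set.Iio β.card.ord => {ξ : Set.Iio β | ξ.1 ∈ D j})
      (fun k k' hkk' i hik hik' => hDdisj k k' hkk' i.1 hik hik')
      (fun _ => Cardinal.lift.{u+1} (ℵ_ α))
      (fun j => inner (D j) α β le_rfl hαlim rfl (hD j).1 (hD j).2)
    have hconst : Cardinal.prod (fun _ : Set.Iio β.card.ord => Cardinal.lift.{u+1} (ℵ_ α))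
        = Cardinal.lift.{u+1} ((ℵ_ α) ^ β.card) := by
      rw [Cardinal.prod_const', Ordinal.mk_Iio_ordinal, Cardinal.card_ord,
        Cardinal.lift_power]
    rw [hconst] at hbound
    exact absurd hlt (not_lt.2 hbound)
  · -- Case 2
    push_neg at hfull
    obtain ⟨ε0, hε₀β, hε₀⟩ := hfull
    have hS : {ε : Ordinal.{u} | ε < β ∧ (β - ε).card ≠ β.card}.Nonempty := ⟨ε0, hε₀β, hε₀⟩
    set δ := sInf {ε : Ordinal.{u} | ε < β ∧ (β - ε).card ≠ β.card} with hδdef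
    obtain ⟨hδβ, hδsmall'⟩ :=
      (csInf_mem hS : δ ∈ {ε : Ordinal.{u} | ε < β ∧ (β - ε).card ≠ β.card})
    rw [← hδdef] at hδβ hδsmall'
    have hδsmall : (β - δ).card < β.card :=
      lt_of_le_of_ne (Ordinal.card_le_card (Ordinal.sub_le_self β δ)) hδsmall'
    have hminδ : ∀ ε < δ, (β - ε).card = β.card := by
      intro ε hε
      by_contra hc
      exact absurd (csInf_le' (show ε ∈ {ε : Ordinal.{u} | ε < β ∧ (β - ε).card ≠ β.card}
        from ⟨hε.trans hδβ, hc⟩)) (not_le.2 hε)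
    have hβδsum : β.card = δ.card + (β - δ).card := by
      conv_lhs => rw [← Ordinal.add_sub_cancel_of_le hδβ.le]
      rw [Ordinal.card_add]
    have hδcard : δ.card = β.card := by
      by_contra hc
      have h1 : δ.card < β.card :=
        lt_of_le_of_ne (Ordinal.card_le_card hδβ.le) hc
      exact absurd hβδsum.symm (ne_of_lt (Cardinal.add_lt_of_lt hlamβ h1 hδsmall))
    have hδlim : Order.IsSuccLimit δ := by
      rcases Ordinal.zero_or_succ_or_isSuccLimit δ with h0 | ⟨ν, hν⟩ | h
      · rw [h0] at hδsmall'
        rw [Ordinal.sub_zero] at hδsmall'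
        exact absurd rfl hδsmall'
      · exfalso
        rw [eq_comm] at hν
        have hνδ : ν < δ := by rw [hν]; exact Order.lt_succ ν
        have hνβ : ν < β := hνδ.trans hδβ
        have heq1 : β - ν = 1 + (β - δ) := by
          have h2 : ν + (β - ν) = ν + (1 + (β - δ)) := by
            rw [Ordinal.add_sub_cancel_of_le hνβ.le, ← add_assoc]
            have : ν + 1 = δ := by rw [add_one_eq_succ, ← hν]
            rw [this, Ordinal.add_sub_cancel_of_le hδβ.le]
          exact (add_right_inj ν).1 h2
        have hcards : β.card = 1 + (β - δ).card := by
          rw [← hminδ ν hνδ, heq1, Ordinal.card_add, Ordinal.card_one]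
        have hinf : ℵ₀ ≤ (β - δ).card := by
          by_contra hcf
          push_neg at hcf
          have : (1 : Cardinal.{u}) + (β - δ).card < ℵ₀ :=
            Cardinal.add_lt_aleph0 Cardinal.one_lt_aleph0 hcf
          rw [← hcards] at this
          exact absurd this (not_lt.2 hlamβ)
        have : (1 : Cardinal.{u}) + (β - δ).card = (β - δ).card :=
          Cardinal.add_eq_right hinf (Cardinal.one_le_aleph0.trans hinf)
        rw [this] at hcards
        exact absurd hcards.symm hδsmall'
      · exact h
    have htails : ∀ ε < δ, (δ - ε).card = δ.card := by
      intro ε hε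
      have hεβ : ε < β := hε.trans hδβ
      have hsplit : β - ε = (δ - ε) + (β - δ) := by
        have h2 : ε + (β - ε) = ε + ((δ - ε) + (β - δ)) := by
          rw [Ordinal.add_sub_cancel_of_le hεβ.le, ← add_assoc,
            Ordinal.add_sub_cancel_of_le hε.le, Ordinal.add_sub_cancel_of_le hδβ.le]
        exact (add_right_inj ε).1 h2
      have hcards : β.card = (δ - ε).card + (β - δ).card := by
        rw [← hminδ ε hε, hsplit, Ordinal.card_add]
      rw [hδcard]
      by_contra hc
      have h1 : (δ - ε).card < β.card := by
        refine lt_of_le_of_ne ?_ hc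
        calc (δ - ε).card ≤ δ.card := Ordinal.card_le_card (Ordinal.sub_le_self δ ε)
        _ = β.card := hδcard
      exact absurd hcards.symm (ne_of_lt (Cardinal.add_lt_of_lt hlamβ h1 hδsmall))
    have hpieces := exists_pieces_of_tails δ hδlim htails
    rw [hδcard] at hpieces
    obtain ⟨D, hDdisj, hD⟩ := hpieces
    have hmuinf : ℵ₀ ≤ β.cof := aleph0_le_cof.2 hβlim
    obtain ⟨E, hEdisj, hE⟩ := exists_pieces_of_le_cof β β.cof hmuinf le_rfl δ hδβ
    set α₁ := ⨆ ξ : Set.Iio δ, σ ξ.1 with hα₁def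
    have hα₁lim : Order.IsSuccLimit α₁ := isLimit_iSup_sigma hm hδlim hδβ.le
    have hδα₁ : δ ≤ α₁ := le_iSup_sigma hm hδlim hδβ.le
    have hα₁ord : β.card.ord ≤ α₁ := by
      refine le_trans ?_ hδα₁
      rw [Cardinal.ord_le, hδcard]
    -- master bound
    have hbound := prod_le_prod_of_pieces f hf0
      (Sum.elim (fun j : Set.Iio β.card.ord => {ξ : Set.Iio β | ξ.1 ∈ D j})
        (fun j : Set.Iio β.cof.ord => {ξ : Set.Iio β | ξ.1 ∈ E j}))
      ?_
      (Sum.elim (fun _ : Set.Iio β.card.ord => Cardinal.lift.{u+1} (ℵ_ α₁))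
        (fun _ : Set.Iio β.cof.ord => Cardinal.lift.{u+1} (ℵ_ α)))
      ?_
    rotate_left
    · -- disjointness
      rintro (j | j) (j' | j') hkk' i hik hik'
      · exact hDdisj j j' (fun h => hkk' (by rw [h])) i.1 hik hik'
      · exact absurd ((hE j').1 i.1 hik').1 (not_le.2 ((hD j).1 i.1 hik))
      · exact absurd ((hE j).1 i.1 hik).1 (not_le.2 ((hD j').1 i.1 hik'))
      · exact hEdisj j j' (fun h => hkk' (by rw [h])) i.1 hik hik'
    · -- inner bounds
      rintro (j | j)
      · exact inner (D j) α₁ δ hδβ.le hα₁lim rfl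
          (fun y hy => ((hD j).1 y hy).trans hδβ) (hD j).2
      · exact inner (E j) α β le_rfl hαlim rfl
          (fun y hy => ((hE j).1 y hy).2)
          (fun x hx => by
            obtain ⟨y, hyE, hxy⟩ := (hE j).2 x hx
            exact ⟨y, hyE, hxy⟩)
    -- compute prod g
    have hg : Cardinal.prod (Sum.elim (fun _ : Set.Iio β.card.ord => Cardinal.lift.{u+1} (ℵ_ α₁))
        (fun _ : Set.Iio β.cof.ord => Cardinal.lift.{u+1} (ℵ_ α)))
        = Cardinal.lift.{u+1} ((ℵ_ α₁) ^ β.card * (ℵ_ α) ^ β.cof) := by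
      rw [prod_sum]
      simp only [Sum.elim_inl, Sum.elim_inr]
      have h1 : Cardinal.prod (fun _ : Set.Iio β.card.ord => Cardinal.lift.{u+1} (ℵ_ α₁))
          = Cardinal.lift.{u+1} ((ℵ_ α₁) ^ β.card) := by
        rw [Cardinal.prod_const', Ordinal.mk_Iio_ordinal, Cardinal.card_ord,
          Cardinal.lift_power]
      have h2 : Cardinal.prod (fun _ : Set.Iio β.cof.ord => Cardinal.lift.{u+1} (ℵ_ α))
          = Cardinal.lift.{u+1} ((ℵ_ α) ^ β.cof) := by
        rw [Cardinal.prod_const', Ordinal.mk_Iio_ordinal, Cardinal.card_ord,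
          Cardinal.lift_power]
      rw [h1, h2, Cardinal.lift_mul]
    rw [hg] at hbound
    have key : (ℵ_ α₁) ^ β.card * (ℵ_ α) ^ β.cof < (ℵ_ α) ^ β.card :=
      Cardinal.lift_lt.1 (hbound.trans_lt hlt)
    exact partB α α₁ β.card β.cof hlamβ hmuinf
      (cof_iSup_sigma_le σ hβlim hm) hα₁ord hαlim key
end

section
/- Let A be a set of infinite regular cardinals and let {B_ν : ν ∈ pcf(A)} be a family of subsets of A such that for every ultrafilter D on A, cf(ΠA/D) equals the least ν ∈ pcf(A) with B_ν ∈ D. Then for every X ⊆ A there exists a finite set F ⊆ pcf(X) such that X ⊆ ⋃_{ν∈F} B_ν. -/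
open Cardinal

universe u

/-- `ΠA` is the set of functions `f` with domain `A` such that `f(λ) < λ` for all `λ ∈ A`;
here such an `f` is represented by an `Ordinal`-valued function on `A` with `f a < a.ord`.
`prodCof A D` is the cofinality of the linear order `ΠA/D` (where `f <_D g` iff
`{λ : f(λ) < g(λ)} ∈ D`), i.e. the least cardinality of a subset of `ΠA` that is cofinal
modulo `D`. -/
noncomputable def prodCof (A : Set Cardinal.{u}) (D : Ultrafilter A) : Cardinal.{u + 1} :=
  sInf { c : Cardinal.{u + 1} |
    ∃ F : Set ((a : A) → Ordinal.{u}),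
      Cardinal.mk F = c ∧
      (∀ f ∈ F, ∀ a : A, f a < (a : Cardinal).ord) ∧
      (∀ g : (a : A) → Ordinal.{u}, (∀ a : A, g a < (a : Cardinal).ord) →
        ∃ f ∈ F, { a : A | g a ≤ f a } ∈ D) }

/-- `pcf(A)` is the set of cofinalities `cf(ΠA/D)` for `D` an ultrafilter on `A`. -/
def pcf (A : Set Cardinal.{u}) : Set Cardinal.{u} :=
  { c | ∃ D : Ultrafilter A, prodCof A D = Cardinal.lift.{u + 1} c }

/-- A family `{B_ν : ν ∈ pcf(A)}` of subsets of `A` is a family of *generators* for `A` if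
for every ultrafilter `D` on `A`, `cf(ΠA/D)` is the least `ν ∈ pcf(A)` with `B_ν ∈ D`. -/
def IsGenerators (A : Set Cardinal.{u}) (B : Cardinal.{u} → Set Cardinal.{u}) : Prop :=
  (∀ ν ∈ pcf A, B ν ⊆ A) ∧
  ∀ D : Ultrafilter A, ∃ ν₀ : Cardinal.{u},
    prodCof A D = Cardinal.lift.{u + 1} ν₀ ∧
    IsLeast { ν | ν ∈ pcf A ∧ { a : A | (a : Cardinal) ∈ B ν } ∈ D } ν₀

open Set in
lemma prodCof_exists_F (A : Set Cardinal.{u}) (D : Ultrafilter A) :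
    ∃ F : Set ((a : A) → Ordinal.{u}),
      Cardinal.mk F = prodCof A D ∧
      (∀ f ∈ F, ∀ a : A, f a < (a : Cardinal).ord) ∧
      (∀ g : (a : A) → Ordinal.{u}, (∀ a : A, g a < (a : Cardinal).ord) →
        ∃ f ∈ F, { a : A | g a ≤ f a } ∈ D) := by
  have hne : { c : Cardinal.{u + 1} |
    ∃ F : Set ((a : A) → Ordinal.{u}),
      Cardinal.mk F = c ∧
      (∀ f ∈ F, ∀ a : A, f a < (a : Cardinal).ord) ∧
      (∀ g : (a : A) → Ordinal.{u}, (∀ a : A, g a < (a : Cardinal).ord) →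
        ∃ f ∈ F, { a : A | g a ≤ f a } ∈ D) }.Nonempty := by
    refine ⟨_, { f | ∀ a : A, f a < (a : Cardinal).ord }, rfl, fun f hf => hf,
      fun g hg => ⟨g, hg, ?_⟩⟩
    have : { a : A | g a ≤ g a } = Set.univ := by ext a; simp
    rw [this]
    exact Filter.univ_mem
  exact csInf_mem hne

lemma prodCof_le (A : Set Cardinal.{u}) (D : Ultrafilter A)
    (F : Set ((a : A) → Ordinal.{u}))
    (h1 : ∀ f ∈ F, ∀ a : A, f a < (a : Cardinal).ord)
    (h2 : ∀ g : (a : A) → Ordinal.{u}, (∀ a : A, g a < (a : Cardinal).ord) →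
        ∃ f ∈ F, { a : A | g a ≤ f a } ∈ D) :
    prodCof A D ≤ Cardinal.mk F :=
  csInf_le' ⟨F, rfl, h1, h2⟩

lemma prodCof_comap {A X : Set Cardinal.{u}} (hXA : X ⊆ A)
    (h0 : ∀ a : A, (0 : Ordinal) < (a : Cardinal).ord)
    (D : Ultrafilter A) (hX : { a : A | (a : Cardinal) ∈ X } ∈ D)
    (inj : Function.Injective (Set.inclusion hXA))
    (large : Set.range (Set.inclusion hXA) ∈ D) :
    prodCof X (D.comap inj large) = prodCof A D := by
  classical
  set ι := Set.inclusion hXA with hι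
  set D' := D.comap inj large with hD'
  apply le_antisymm
  · obtain ⟨F, hF, h1, h2⟩ := prodCof_exists_F A D
    refine le_trans (prodCof_le X D' ((fun f => f ∘ ι) '' F) ?_ ?_) (hF ▸ Cardinal.mk_image_le)
    · rintro _ ⟨f, hf, rfl⟩ x
      exact h1 f hf (ι x)
    · intro g hg
      set G : (a : A) → Ordinal.{u} :=
        fun a => if h : (a : Cardinal) ∈ X then g ⟨a, h⟩ else 0 with hG
      have hGlt : ∀ a : A, G a < (a : Cardinal).ord := by
        intro a
        by_cases h : (a : Cardinal) ∈ X
        · simpa [hG, h] using hg ⟨a, h⟩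
        · simpa [hG, h] using h0 a
      obtain ⟨f, hf, hmem⟩ := h2 G hGlt
      refine ⟨f ∘ ι, ⟨f, hf, rfl⟩, ?_⟩
      rw [hD', Ultrafilter.mem_comap]
      apply Filter.mem_of_superset (Filter.inter_mem hmem hX)
      rintro a ⟨ha1, ha2⟩
      refine ⟨⟨(a : Cardinal), ha2⟩, ?_, Subtype.ext rfl⟩
      have : G a = g ⟨(a : Cardinal), ha2⟩ := dif_pos ha2
      show g _ ≤ f (ι ⟨(a : Cardinal), ha2⟩)
      have hιa : ι ⟨(a : Cardinal), ha2⟩ = a := Subtype.ext rfl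
      rw [hιa, ← this]
      exact ha1
  · obtain ⟨F', hF', h1, h2⟩ := prodCof_exists_F X D'
    refine le_trans (prodCof_le A D
      ((fun f (a : A) => if h : (a : Cardinal) ∈ X then f ⟨a, h⟩ else 0) '' F') ?_ ?_)
      (hF' ▸ Cardinal.mk_image_le)
    · rintro _ ⟨f, hf, rfl⟩ a
      by_cases h : (a : Cardinal) ∈ X
      · simpa [h] using h1 f hf ⟨a, h⟩
      · simpa [h] using h0 a
    · intro g hg
      obtain ⟨f, hf, hmem⟩ := h2 (fun x => g (ι x)) (fun x => hg (ι x))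
      refine ⟨_, ⟨f, hf, rfl⟩, ?_⟩
      rw [hD', Ultrafilter.mem_comap] at hmem
      apply Filter.mem_of_superset hmem
      rintro _ ⟨x, hx, rfl⟩
      have hxX : ((ι x : A) : Cardinal) ∈ X := x.2
      show g (ι x) ≤ if h : ((ι x : A) : Cardinal) ∈ X then f ⟨((ι x : A) : Cardinal), h⟩ else 0
      rw [dif_pos hxX]
      have : (⟨((ι x : A) : Cardinal), hxX⟩ : X) = x := Subtype.ext rfl
      rw [this]
      exact hx

/-- **Lemma 5.** Let `A` be a set of infinite regular cardinals and let
`{B_ν : ν ∈ pcf(A)}` be a family of subsets of `A` such that for every ultrafilter `D` on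
`A`, `cf(ΠA/D)` equals the least `ν ∈ pcf(A)` with `B_ν ∈ D`.  Then for every `X ⊆ A`
there exists a finite set `F ⊆ pcf(X)` such that `X ⊆ ⋃_{ν ∈ F} B_ν`. -/
theorem exists_finite_support (A : Set Cardinal.{u}) (hA : ∀ a ∈ A, a.IsRegular)
    (B : Cardinal.{u} → Set Cardinal.{u}) (hB : IsGenerators A B) :
    ∀ X ⊆ A, ∃ F : Finset Cardinal.{u},
      (F : Set Cardinal.{u}) ⊆ pcf X ∧ X ⊆ ⋃ ν ∈ (F : Set Cardinal.{u}), B ν := by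
  intro X hXA
  by_contra hcon
  push_neg at hcon
  classical
  set SX : Set A := { a : A | (a : Cardinal) ∈ X } with hSX
  set SB : Cardinal.{u} → Set A := fun ν => { a : A | (a : Cardinal) ∈ X ∧ (a : Cardinal) ∉ B ν }
    with hSB
  set S : Set (Set A) := insert SX (SB '' pcf X) with hS
  have hfip : ∀ T : Finset (Set A), (↑T : Set (Set A)) ⊆ S →
      (⋂₀ (↑T : Set (Set A))).Nonempty := by
    intro T hT
    have hsub : (↑T : Set (Set A)) \ {SX} ⊆ SB '' pcf X := by
      rintro s ⟨hs1, hs2⟩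
      rcases hT hs1 with h | h
      · exact absurd h hs2
      · exact h
    obtain ⟨u, hu1, hu2, hu3⟩ := Set.exists_subset_image_finite_and.mp
      ⟨(↑T : Set (Set A)) \ {SX}, hsub, (T.finite_toSet.diff), rfl⟩
    have hFsub : (↑hu2.toFinset : Set Cardinal.{u}) ⊆ pcf X := by
      rw [Set.Finite.coe_toFinset]; exact hu1
    have hnc := hcon hu2.toFinset hFsub
    rw [Set.not_subset] at hnc
    obtain ⟨x, hx, hnx⟩ := hnc
    refine ⟨⟨x, hXA hx⟩, ?_⟩
    intro s hs
    by_cases hsx : s = SX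
    · rw [hsx]; exact hx
    · obtain ⟨ν, hν, rfl⟩ : ∃ ν ∈ u, SB ν = s := by
        rcases (hu3 ▸ (⟨hs, hsx⟩ : s ∈ (↑T : Set (Set A)) \ {SX}) :
          s ∈ SB '' u) with ⟨ν, hν, h⟩
        exact ⟨ν, hν, h⟩
      refine ⟨hx, fun hxB => hnx ?_⟩
      simp only [Set.mem_iUnion]
      exact ⟨ν, by rw [Set.Finite.coe_toFinset]; exact hν, hxB⟩
  obtain ⟨D, hD⟩ := Ultrafilter.exists_ultrafilter_of_finite_inter_nonempty S hfip
  have hX : SX ∈ D := hD (Set.mem_insert _ _)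
  have hBnotin : ∀ ν ∈ pcf X, { a : A | (a : Cardinal) ∈ B ν } ∉ D := by
    intro ν hν hmem
    have hSBν : SB ν ∈ D := hD (Set.mem_insert_of_mem _ ⟨ν, hν, rfl⟩)
    obtain ⟨a, ha1, ha2⟩ := Ultrafilter.nonempty_of_mem (Filter.inter_mem hSBν hmem)
    exact ha1.2 ha2
  obtain ⟨ν₀, hν₀, hleast⟩ := hB.2 D
  have h0 : ∀ a : A, (0 : Ordinal) < (a : Cardinal).ord := by
    intro a
    rw [← Cardinal.ord_zero, Cardinal.ord_lt_ord]
    exact (hA a a.2).pos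
  have large : Set.range (Set.inclusion hXA) ∈ D := by
    rw [Set.range_inclusion]; exact hX
  have hν₀X : ν₀ ∈ pcf X := by
    refine ⟨D.comap (Set.inclusion_injective hXA) large, ?_⟩
    rw [prodCof_comap hXA h0 D hX]
    exact hν₀
  exact hBnotin ν₀ hν₀X hleast.1.2
end

section
/- Let A be a set of infinite regular cardinals with 2^{|A|} < min(A), let Ā = pcf(A), and assume pcf(Ā) = Ā. Let {B_ν : ν ∈ Ā} be a family of generators for Ā that is transitive (ξ ∈ B_ν implies B_ξ ⊆ B_ν), and for each X ⊆ Ā let s(X) be a support of X, i.e., a finite subset of pcf(X) with X ⊆ ⋃_{ν∈s(X)} B_ν. If A = ⋃_{i∈I} A_i, then Ā = ⋃{ pcf(B_ν) : ν ∈ pcf( ⋃_{i∈I} s(pcf(A_i)) ) }. -/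
open Cardinal
open scoped Classical

universe u

namespace PcfAux

variable {X Y : Set Cardinal.{u}}

def Wit (X : Set Cardinal.{u}) (D : Ultrafilter X) (F : Set ((a : X) → Ordinal.{u})) : Prop :=
  (∀ f ∈ F, ∀ a : X, f a < (a : Cardinal).ord) ∧
  (∀ g : (a : X) → Ordinal.{u}, (∀ a : X, g a < (a : Cardinal).ord) →
    ∃ f ∈ F, { a : X | g a ≤ f a } ∈ D)

lemma prodCof_def (X : Set Cardinal.{u}) (D : Ultrafilter X) :
    prodCof X D = sInf { c | ∃ F : Set ((a : X) → Ordinal.{u}), Cardinal.mk F = c ∧ Wit X D F } := rfl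

lemma exists_wit (X : Set Cardinal.{u}) (D : Ultrafilter X) : ∃ F, Wit X D F := by
  refine ⟨{f | ∀ a : X, f a < (a : Cardinal).ord}, fun f hf => hf, fun g hg => ⟨g, hg, ?_⟩⟩
  have h : { a : X | g a ≤ g a } = Set.univ := by ext a; simp
  rw [h]
  exact Filter.univ_mem

lemma prodCof_spec (X : Set Cardinal.{u}) (D : Ultrafilter X) :
    ∃ F : Set ((a : X) → Ordinal.{u}), Cardinal.mk F = prodCof X D ∧ Wit X D F := by
  rw [prodCof_def]
  obtain ⟨F, hF⟩ := exists_wit X D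
  have hne : { c | ∃ F : Set ((a : X) → Ordinal.{u}), Cardinal.mk F = c ∧ Wit X D F }.Nonempty :=
    ⟨_, F, rfl, hF⟩
  exact csInf_mem hne

lemma prodCof_le {D : Ultrafilter X} {F} (hF : Wit X D F) : prodCof X D ≤ Cardinal.mk F := by
  rw [prodCof_def]
  exact csInf_le (OrderBot.bddBelow _) ⟨F, rfl, hF⟩

lemma ord_pos_of_mem (hX : ∀ a ∈ X, a ≠ 0) (b : X) : (0 : Ordinal) < (b : Cardinal).ord :=
  pos_iff_ne_zero.2 fun h0 => hX b b.2 (Cardinal.ord_eq_zero.1 h0)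

lemma prodCof_ne_zero (hX : ∀ a ∈ X, a ≠ 0) (D : Ultrafilter X) : prodCof X D ≠ 0 := by
  obtain ⟨F, hmk, _, hcof⟩ := prodCof_spec X D
  intro h0
  rw [h0, Cardinal.mk_eq_zero_iff] at hmk
  obtain ⟨f, hf, -⟩ := hcof (fun _ => 0) (fun a => ord_pos_of_mem hX a)
  exact hmk.false ⟨f, hf⟩


def incl (hXY : X ⊆ Y) (x : X) : Y := ⟨x.1, hXY x.2⟩

lemma incl_inj (hXY : X ⊆ Y) : Function.Injective (incl hXY) := by
  intro a b h
  have : (incl hXY a).1 = (incl hXY b).1 := congrArg Subtype.val h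
  exact Subtype.ext this

lemma range_incl (hXY : X ⊆ Y) :
    Set.range (incl hXY) = { y : Y | (y : Cardinal) ∈ X } := by
  ext y
  constructor
  · rintro ⟨x, rfl⟩
    exact x.2
  · intro h
    exact ⟨⟨y, h⟩, Subtype.ext rfl⟩

noncomputable def extFun (f : (a : X) → Ordinal.{u}) : (b : Y) → Ordinal.{u} :=
  fun b => if h : (b : Cardinal) ∈ X then f ⟨b, h⟩ else 0

lemma extFun_incl (hXY : X ⊆ Y) (f : (a : X) → Ordinal.{u}) (x : X) :
    extFun (Y := Y) f (incl hXY x) = f x := by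
  rw [extFun, dif_pos (show ((incl hXY x : Y) : Cardinal) ∈ X from x.2)]
  rfl

lemma extFun_bounded (hY : ∀ y ∈ Y, y ≠ 0) (f : (a : X) → Ordinal.{u})
    (hf : ∀ a : X, f a < (a : Cardinal).ord) :
    ∀ b : Y, extFun (Y := Y) f b < (b : Cardinal).ord := by
  intro b
  show (if h : (b : Cardinal) ∈ X then f ⟨b, h⟩ else 0) < (b : Cardinal).ord
  split
  · next h => exact hf ⟨b, h⟩
  · exact ord_pos_of_mem hY b

lemma prodCof_map (hXY : X ⊆ Y) (hY : ∀ y ∈ Y, y ≠ 0) (D : Ultrafilter X) :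
    prodCof Y (D.map (incl hXY)) = prodCof X D := by
  apply le_antisymm
  · obtain ⟨F, hmk, hb, hcof⟩ := prodCof_spec X D
    have hwit : Wit Y (D.map (incl hXY)) (extFun '' F) := by
      constructor
      · rintro f ⟨f₀, hf₀, rfl⟩ b
        exact extFun_bounded hY f₀ (hb f₀ hf₀) b
      · intro g hg
        obtain ⟨f, hf, hset⟩ := hcof (fun x => g (incl hXY x)) (fun x => hg (incl hXY x))
        refine ⟨extFun f, Set.mem_image_of_mem _ hf, ?_⟩
        rw [Ultrafilter.mem_map]
        apply Filter.mem_of_superset hset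
        intro x hx
        simp only [Set.mem_preimage, Set.mem_setOf_eq] at hx ⊢
        rwa [extFun_incl hXY]
    calc prodCof Y (D.map (incl hXY)) ≤ Cardinal.mk (extFun '' F) := prodCof_le hwit
      _ ≤ Cardinal.mk F := Cardinal.mk_image_le
      _ = prodCof X D := hmk
  · obtain ⟨F, hmk, hb, hcof⟩ := prodCof_spec Y (D.map (incl hXY))
    have hwit : Wit X D ((fun f => f ∘ incl hXY) '' F) := by
      constructor
      · rintro f ⟨f₀, hf₀, rfl⟩ x
        exact hb f₀ hf₀ (incl hXY x)
      · intro g hg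
        obtain ⟨f, hf, hset⟩ := hcof (extFun g) (extFun_bounded hY g hg)
        refine ⟨f ∘ incl hXY, Set.mem_image_of_mem _ hf, ?_⟩
        rw [Ultrafilter.mem_map] at hset
        apply Filter.mem_of_superset hset
        intro x hx
        simp only [Set.mem_preimage, Set.mem_setOf_eq] at hx ⊢
        rwa [extFun_incl hXY] at hx
    calc prodCof X D ≤ Cardinal.mk ((fun f => f ∘ incl hXY) '' F) := prodCof_le hwit
      _ ≤ Cardinal.mk F := Cardinal.mk_image_le
      _ = prodCof Y (D.map (incl hXY)) := hmk

lemma pcf_mono (hXY : X ⊆ Y) (hY : ∀ y ∈ Y, y ≠ 0) : pcf X ⊆ pcf Y := by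
  rintro ν ⟨D, hD⟩
  exact ⟨D.map (incl hXY), by rw [prodCof_map hXY hY]; exact hD⟩

lemma mem_pcf_of_mem (hXY : X ⊆ Y) (hY : ∀ y ∈ Y, y ≠ 0) {D : Ultrafilter Y}
    (hmem : { y : Y | (y : Cardinal) ∈ X } ∈ D) {ν : Cardinal.{u}}
    (hD : prodCof Y D = Cardinal.lift.{u + 1} ν) : ν ∈ pcf X := by
  have hrange : Set.range (incl hXY) ∈ D := by rw [range_incl hXY]; exact hmem
  set D₀ := D.comap (incl_inj hXY) hrange with hD₀
  have hmc : D₀.map (incl hXY) = D := by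
    apply Ultrafilter.coe_injective
    rw [Ultrafilter.coe_map, hD₀, Ultrafilter.coe_comap]
    exact Filter.map_comap_of_mem hrange
  exact ⟨D₀, by rw [← prodCof_map hXY hY D₀, hmc]; exact hD⟩

lemma mem_pcf_self (hX0 : ∀ b ∈ X, b ≠ 0) {a : Cardinal.{u}} (ha : a.IsRegular)
    (haX : a ∈ X) : a ∈ pcf X := by
  classical
  set x₀ : X := ⟨a, haX⟩ with hx₀
  refine ⟨pure x₀, le_antisymm ?_ ?_⟩
  · set F : Set ((b : X) → Ordinal.{u}) :=
      Set.range (fun o : Set.Iio a.ord => fun b : X => if b = x₀ then (o : Ordinal) else 0)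
      with hF
    have hwit : Wit X (pure x₀) F := by
      constructor
      · rintro f ⟨o, rfl⟩ b
        dsimp only
        split
        · next h => rw [h]; exact o.2
        · exact ord_pos_of_mem hX0 b
      · intro g hg
        refine ⟨_, Set.mem_range_self (⟨g x₀, hg x₀⟩ : Set.Iio a.ord), ?_⟩
        rw [Ultrafilter.mem_pure]
        show g x₀ ≤ if x₀ = x₀ then g x₀ else 0
        rw [if_pos rfl]
    calc prodCof X (pure x₀) ≤ Cardinal.mk F := prodCof_le hwit
      _ ≤ Cardinal.mk (Set.Iio a.ord) := Cardinal.mk_range_le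
      _ = Cardinal.lift.{u + 1} a := by rw [Ordinal.mk_Iio_ordinal, Cardinal.card_ord]
  · obtain ⟨F, hmk, hb, hcof⟩ := prodCof_spec X (pure x₀)
    rw [← hmk]
    have hub : ∀ o < a.ord, ∃ f : F, o ≤ (f : (b : X) → Ordinal.{u}) x₀ := by
      intro o ho
      have hgb : ∀ b : X, (if b = x₀ then o else 0) < (b : Cardinal).ord := by
        intro b
        split
        · next h => rw [h]; exact ho
        · exact ord_pos_of_mem hX0 b
      obtain ⟨f, hf, hset⟩ := hcof (fun b => if b = x₀ then o else 0) hgb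
      rw [Ultrafilter.mem_pure] at hset
      refine ⟨⟨f, hf⟩, ?_⟩
      have h2 : (if x₀ = x₀ then o else 0) ≤ f x₀ := hset
      rwa [if_pos rfl] at h2
    have hlsub : Ordinal.lsub.{u + 1, u + 1}
        (fun f : F => Ordinal.lift.{u + 1} ((f : (b : X) → Ordinal.{u}) x₀)) =
        Ordinal.lift.{u + 1} a.ord := by
      apply le_antisymm
      · exact Ordinal.lsub_le.{u + 1, u + 1} fun f => Ordinal.lift_lt.2 (hb f f.2 x₀)
      · by_contra hcon
        push_neg at hcon
        obtain ⟨o, ho, heq⟩ := Ordinal.lt_lift_iff.1 hcon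
        obtain ⟨f, hfo⟩ := hub o ho
        have h1 := Ordinal.lt_lsub.{u + 1, u + 1}
          (fun f : F => Ordinal.lift.{u + 1} ((f : (b : X) → Ordinal.{u}) x₀)) f
        have h2 : Ordinal.lift.{u + 1} o ≤
            Ordinal.lift.{u + 1} ((f : (b : X) → Ordinal.{u}) x₀) := Ordinal.lift_le.2 hfo
        rw [heq] at h2
        exact absurd (h2.trans_lt h1) (lt_irrefl _)
    have hcof' := Ordinal.cof_lsub_le.{u + 1}
      (fun f : F => Ordinal.lift.{u + 1} ((f : (b : X) → Ordinal.{u}) x₀))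
    rw [hlsub, ← Ordinal.lift_cof, ha.cof_eq] at hcof'
    exact hcof'

end PcfAux

open PcfAux

/-- **Lemma 7.** Let `A` be a set of infinite regular cardinals with
`2^{|A|} < min(A)`, let `Ā = pcf(A)`, and assume `pcf(Ā) = Ā`.  Let `{B_ν : ν ∈ Ā}` be a
family of generators for `Ā` that is transitive (`ξ ∈ B_ν` implies `B_ξ ⊆ B_ν`), and for
each `X ⊆ Ā` let `s(X)` be a support of `X`, i.e. a finite subset of `pcf(X)` with
`X ⊆ ⋃_{ν ∈ s(X)} B_ν`.  If `A = ⋃_{i ∈ I} A_i`, then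
`Ā = ⋃ {pcf(B_ν) : ν ∈ pcf(⋃_{i ∈ I} s(pcf(A_i)))}`. -/
theorem pcf_eq_iUnion_pcf_generators {I : Type*} (A : Set Cardinal.{u})
    (hA : ∀ a ∈ A, a.IsRegular) (hne : A.Nonempty)
    (hsmall : 2 ^ Cardinal.mk A < Cardinal.lift.{u + 1} (sInf A))
    (hfix : pcf (pcf A) = pcf A)
    (B : Cardinal.{u} → Set Cardinal.{u})
    (hgen : IsGenerators (pcf A) B)
    (htrans : ∀ ν ∈ pcf (pcf A), ∀ ξ ∈ B ν, B ξ ⊆ B ν)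
    (s : Set Cardinal.{u} → Finset Cardinal.{u})
    (hs : ∀ X ⊆ pcf A, ((s X : Set Cardinal.{u}) ⊆ pcf X ∧
      X ⊆ ⋃ ν ∈ (s X : Set Cardinal.{u}), B ν))
    (Ai : I → Set Cardinal.{u}) (hAi : A = ⋃ i, Ai i) :
    pcf A = ⋃ ν ∈ pcf (⋃ i, (s (pcf (Ai i)) : Set Cardinal.{u})), pcf (B ν) := by
  set S : Set Cardinal.{u} := ⋃ i, (s (pcf (Ai i)) : Set Cardinal.{u}) with hSdef
  have hAiA : ∀ i, Ai i ⊆ A := by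
    intro i
    rw [hAi]
    exact Set.subset_iUnion Ai i
  have hAnz : ∀ a ∈ A, a ≠ 0 := fun a ha => (hA a ha).pos.ne'
  have hpcfAnz : ∀ ν ∈ pcf A, ν ≠ 0 := by
    rintro ν ⟨D, hD⟩ h0
    rw [h0, Cardinal.lift_zero] at hD
    exact prodCof_ne_zero hAnz D hD
  have hpcfAiA : ∀ i, pcf (Ai i) ⊆ pcf A := fun i => pcf_mono (hAiA i) hAnz
  have hsi := fun i => hs (pcf (Ai i)) (hpcfAiA i)
  have hSsub : S ⊆ pcf A := by
    intro ν hν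
    obtain ⟨i, hi⟩ := Set.mem_iUnion.1 hν
    have h1 : ν ∈ pcf (pcf (Ai i)) := (hsi i).1 hi
    have h2 : ν ∈ pcf (pcf A) := pcf_mono (hpcfAiA i) hpcfAnz h1
    rwa [hfix] at h2
  have hcover : ∀ x : ↥A, ∃ ν : ↥S, (x : Cardinal) ∈ B ν := by
    intro x
    have hxU : (x : Cardinal) ∈ ⋃ i, Ai i := by rw [← hAi]; exact x.2
    obtain ⟨i, hxi⟩ := Set.mem_iUnion.1 hxU
    have hx_pcf : (x : Cardinal) ∈ pcf (Ai i) :=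
      mem_pcf_self (fun b hb => hAnz b (hAiA i hb)) (hA x x.2) hxi
    obtain ⟨ν, hν, hxB⟩ := Set.mem_iUnion₂.1 ((hsi i).2 hx_pcf)
    exact ⟨⟨ν, Set.mem_iUnion.2 ⟨i, hν⟩⟩, hxB⟩
  apply Set.Subset.antisymm
  · rintro lam ⟨D₀, hD₀⟩
    choose p hp using hcover
    set E₀ : Ultrafilter ↥S := D₀.map p with hE₀
    set E' : Ultrafilter ↥(pcf A) := E₀.map (incl hSsub) with hE'
    obtain ⟨nu, hnueq, hnuleast⟩ := hgen.2 E'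
    obtain ⟨hnupcf, hnuB⟩ := hnuleast.1
    have hnuS : nu ∈ pcf S := ⟨E₀, by rw [← prodCof_map hSsub hpcfAnz E₀]; exact hnueq⟩
    have hBmem : { x : ↥A | (x : Cardinal) ∈ B nu } ∈ D₀ := by
      have h1 : { y : ↥(pcf A) | (y : Cardinal) ∈ B nu } ∈ E' := hnuB
      rw [hE', Ultrafilter.mem_map, hE₀, Ultrafilter.mem_map] at h1
      apply Filter.mem_of_superset h1
      intro x hx
      simp only [Set.mem_preimage, Set.mem_setOf_eq] at hx ⊢
      exact htrans nu hnupcf _ hx (hp x)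
    have hBA : B nu ∩ A ⊆ A := Set.inter_subset_right
    have hlam1 : lam ∈ pcf (B nu ∩ A) := by
      refine mem_pcf_of_mem hBA hAnz ?_ hD₀
      apply Filter.mem_of_superset hBmem
      intro x hx
      exact ⟨hx, x.2⟩
    have hBsub : B nu ⊆ pcf A := hgen.1 nu hnupcf
    have hlam : lam ∈ pcf (B nu) :=
      pcf_mono Set.inter_subset_left (fun b hb => hpcfAnz b (hBsub hb)) hlam1
    exact Set.mem_iUnion₂.2 ⟨nu, hnuS, hlam⟩
  · intro μ hμ
    obtain ⟨ν, hνS, hμB⟩ := Set.mem_iUnion₂.1 hμ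
    have hν2 : ν ∈ pcf (pcf A) := pcf_mono hSsub hpcfAnz hνS
    have hBsub : B ν ⊆ pcf A := hgen.1 ν hν2
    have hfin : μ ∈ pcf (pcf A) := pcf_mono hBsub hpcfAnz hμB
    rwa [hfix] at hfin
end

section
/- Let A be a set of infinite regular cardinals with 2^{|A|} < min(A), let Ā = pcf(A), and assume pcf(Ā) = Ā. Let {B_ν : ν ∈ Ā} be a transitive family of generators for Ā, and for each X ⊆ Ā let s(X) be a support of X (a finite subset of pcf(X) with X ⊆ ⋃_{ν∈s(X)} B_ν). If A = ⋃_{i∈I} A_i, then max(pcf(A)) = max pcf( ⋃_{i∈I} s(pcf(A_i)) ). -/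
open Cardinal

universe u

section Helpers

def DS (A : Set Cardinal.{u}) (D : Ultrafilter A) : Set Cardinal.{u + 1} :=
  { c : Cardinal.{u + 1} |
    ∃ F : Set ((a : A) → Ordinal.{u}),
      Cardinal.mk F = c ∧
      (∀ f ∈ F, ∀ a : A, f a < (a : Cardinal).ord) ∧
      (∀ g : (a : A) → Ordinal.{u}, (∀ a : A, g a < (a : Cardinal).ord) →
        ∃ f ∈ F, { a : A | g a ≤ f a } ∈ D) }
lemma prodCof_eq_sInf (A : Set Cardinal.{u}) (D : Ultrafilter A) :
    prodCof A D = sInf (DS A D) := rfl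
lemma DS_nonempty (A : Set Cardinal.{u}) (D : Ultrafilter A) : (DS A D).Nonempty :=
  ⟨_, {f | ∀ a : A, f a < (a : Cardinal).ord}, rfl, fun f hf => hf,
    fun g hg => ⟨g, hg, by
      have h : { a : A | g a ≤ g a } = Set.univ := by ext a; simp
      rw [h]; exact Filter.univ_mem⟩⟩
lemma prodCof_mem (A : Set Cardinal.{u}) (D : Ultrafilter A) : prodCof A D ∈ DS A D :=
  csInf_mem (DS_nonempty A D)
lemma zero_lt_ord {z : Cardinal.{u}} (hz : z ≠ 0) : (0 : Ordinal.{u}) < z.ord := by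
  rwa [Cardinal.lt_ord, Ordinal.card_zero, pos_iff_ne_zero]

lemma prodCof_ne_zero (A : Set Cardinal.{u})
    (hA : ∀ a : A, (0 : Ordinal.{u}) < (a : Cardinal).ord) (D : Ultrafilter A) :
    prodCof A D ≠ 0 := by
  obtain ⟨F, hmk, hb, hdom⟩ := prodCof_mem A D
  obtain ⟨f, hf, -⟩ := hdom (fun _ => 0) (fun a => hA a)
  rw [← hmk, Cardinal.mk_ne_zero_iff]
  exact ⟨f, hf⟩

lemma prodCof_pure {A : Set Cardinal.{u}} (hA : ∀ a ∈ A, (a : Cardinal).IsRegular)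
    {a : Cardinal.{u}} (ha : a ∈ A) :
    prodCof A (pure ⟨a, ha⟩) = Cardinal.lift.{u + 1} a := by
  have hpos : ∀ y : A, (0 : Ordinal.{u}) < (y : Cardinal).ord :=
    fun y => zero_lt_ord (hA y y.2).pos.ne'
  set x : A := ⟨a, ha⟩ with hx
  rw [prodCof_eq_sInf]
  apply le_antisymm
  · -- upper bound
    refine csInf_le' ⟨Set.range (fun β : Set.Iio a.ord =>
      fun y : A => if (y : Cardinal) = a then β.1 else 0), ?_, ?_, ?_⟩
    · rw [Cardinal.mk_range_eq _ ?_, Ordinal.mk_Iio_ordinal, Cardinal.card_ord]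
      intro β γ h
      have h2 := congrFun h x
      simp only [if_pos rfl] at h2
      exact Subtype.ext (by simpa [hx] using h2)
    · rintro f ⟨β, rfl⟩ y
      by_cases hy : (y : Cardinal) = a
      · simp only [if_pos hy, hy]
        exact β.2
      · simp only [if_neg hy]
        exact hpos y
    · intro g hg
      refine ⟨_, ⟨⟨g x, hg x⟩, rfl⟩, ?_⟩
      rw [Ultrafilter.mem_pure]
      show g x ≤ if (x : Cardinal) = a then g x else 0
      rw [if_pos rfl]
  · -- lower bound
    refine le_csInf (DS_nonempty _ _) ?_
    rintro c ⟨F, rfl, hb, hdom⟩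
    by_contra hlt
    have hlt : Cardinal.mk F < Cardinal.lift.{u + 1} a := not_le.1 hlt
    set S : Set (Set.Iio a.ord) :=
      Set.range (fun f : F => (⟨f.1 x, hb f.1 f.2 x⟩ : Set.Iio a.ord)) with hSdef
    have hS : Cardinal.mk S < Cardinal.lift.{u + 1} a := Cardinal.mk_range_le.trans_lt hlt
    obtain ⟨c₀, hc₀⟩ := Cardinal.lt_univ.1 (hS.trans (Cardinal.lift_lt_univ a))
    have hc₀a : c₀ < a := by rwa [hc₀, Cardinal.lift_lt] at hS
    have hSe : Cardinal.mk S = Cardinal.mk (ULift.{u + 1} c₀.out) := by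
      rw [Cardinal.mk_uLift, Cardinal.mk_out]; exact hc₀
    obtain ⟨e⟩ := Cardinal.eq.1 hSe
    set g : c₀.out → Ordinal.{u} := fun i => (e.symm ⟨i⟩).1.1 with hgdef
    have hglt : ∀ i, g i < a.ord := fun i => (e.symm ⟨i⟩).1.2
    have hsup : iSup g < a.ord := by
      refine Ordinal.iSup_lt_ord ?_ hglt
      rw [Cardinal.mk_out, (hA a ha).cof_eq]
      exact hc₀a
    have hbound : ∀ f : F, f.1 x ≤ iSup g := by
      intro f
      have hmemS : (⟨f.1 x, hb f.1 f.2 x⟩ : Set.Iio a.ord) ∈ S := ⟨f, rfl⟩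
      have h1 : g (e ⟨_, hmemS⟩).down = f.1 x := by
        rw [hgdef]
        show ((e.symm ⟨(e ⟨_, hmemS⟩).down⟩).1 : Set.Iio a.ord).1 = f.1 x
        rw [show (⟨(e ⟨_, hmemS⟩).down⟩ : ULift.{u+1} c₀.out) = e ⟨_, hmemS⟩ from rfl,
          e.symm_apply_apply]
      rw [← h1]
      exact Ordinal.le_iSup g _
    have hGb : ∀ y : A, (if (y : Cardinal) = a then Order.succ (iSup g) else 0) <
        (y : Cardinal).ord := by
      intro y
      by_cases hy : (y : Cardinal) = a
      · rw [if_pos hy, hy]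
        exact (Cardinal.isSuccLimit_ord (hA a ha).aleph0_le).succ_lt hsup
      · rw [if_neg hy]
        exact hpos y
    obtain ⟨f, hf, hmemD⟩ := hdom
      (fun y => if (y : Cardinal) = a then Order.succ (iSup g) else 0) hGb
    have hxmem : (if (x : Cardinal) = a then Order.succ (iSup g) else 0) ≤ f x :=
      Ultrafilter.mem_pure.1 hmemD
    rw [if_pos rfl] at hxmem
    exact absurd (hxmem.trans (hbound ⟨f, hf⟩)) (not_le.2 (Order.lt_succ _))

lemma prodCof_map {X Z : Set Cardinal.{u}} (h : X ⊆ Z)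
    (hZ : ∀ z : Z, (0 : Ordinal.{u}) < (z : Cardinal).ord) (D : Ultrafilter X) :
    prodCof Z (D.map (Set.inclusion h)) = prodCof X D := by
  classical
  set incl : X → Z := Set.inclusion h with hincl
  set ext : ((x : X) → Ordinal.{u}) → ((z : Z) → Ordinal.{u}) :=
    fun f z => if hz : (z : Cardinal) ∈ X then f ⟨z, hz⟩ else 0 with hext
  have hext_incl : ∀ f (x : X), ext f (incl x) = f x := fun f x => dif_pos x.2
  have hinj : Function.Injective ext := by
    intro f f' hff
    funext x
    rw [← hext_incl f x, ← hext_incl f' x, hff]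
  apply le_antisymm
  · obtain ⟨F, hmk, hb, hdom⟩ := prodCof_mem X D
    have hmem : Cardinal.mk (ext '' F) ∈ DS Z (D.map incl) := by
      refine ⟨ext '' F, rfl, ?_, ?_⟩
      · rintro f' ⟨f, hf, rfl⟩ z
        by_cases hz : (z : Cardinal) ∈ X
        · show (if hz : (z : Cardinal) ∈ X then f ⟨z, hz⟩ else 0) < _
          rw [dif_pos hz]
          exact hb f hf ⟨z, hz⟩
        · show (if hz : (z : Cardinal) ∈ X then f ⟨z, hz⟩ else 0) < _
          rw [dif_neg hz]
          exact hZ z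
      · intro g hg
        obtain ⟨f, hf, hD⟩ := hdom (fun x => g (incl x)) (fun x => hg (incl x))
        refine ⟨ext f, Set.mem_image_of_mem _ hf, ?_⟩
        rw [Ultrafilter.mem_map]
        have heq : incl ⁻¹' { z : Z | g z ≤ ext f z } = { x : X | g (incl x) ≤ f x } := by
          ext x
          simp only [Set.mem_preimage, Set.mem_setOf_eq, hext_incl]
        rwa [heq]
    calc sInf (DS Z (D.map incl)) ≤ Cardinal.mk (ext '' F) := csInf_le' hmem
      _ = Cardinal.mk F := Cardinal.mk_image_eq hinj
      _ = prodCof X D := hmk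
  · obtain ⟨F, hmk, hb, hdom⟩ := prodCof_mem Z (D.map incl)
    have hmem : Cardinal.mk ((fun f => f ∘ incl) '' F) ∈ DS X D := by
      refine ⟨_, rfl, ?_, ?_⟩
      · rintro f' ⟨f, hf, rfl⟩ x
        exact hb f hf (incl x)
      · intro g hg
        have hgb : ∀ z : Z, ext g z < (z : Cardinal).ord := by
          intro z
          by_cases hz : (z : Cardinal) ∈ X
          · show (if hz : (z : Cardinal) ∈ X then g ⟨z, hz⟩ else 0) < _
            rw [dif_pos hz]
            exact hg ⟨z, hz⟩
          · show (if hz : (z : Cardinal) ∈ X then g ⟨z, hz⟩ else 0) < _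
            rw [dif_neg hz]
            exact hZ z
        obtain ⟨f, hf, hD⟩ := hdom (ext g) hgb
        rw [Ultrafilter.mem_map] at hD
        refine ⟨f ∘ incl, Set.mem_image_of_mem _ hf, ?_⟩
        have heq : incl ⁻¹' { z : Z | ext g z ≤ f z } = { x : X | g x ≤ (f ∘ incl) x } := by
          ext x
          simp only [Set.mem_preimage, Set.mem_setOf_eq, hext_incl, Function.comp]
        rwa [heq] at hD
    calc prodCof X D ≤ Cardinal.mk ((fun f => f ∘ incl) '' F) := csInf_le' hmem
      _ ≤ Cardinal.mk F := Cardinal.mk_image_le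
      _ = prodCof Z (D.map incl) := hmk

lemma pcf_mono {X Z : Set Cardinal.{u}} (h : X ⊆ Z)
    (hZ : ∀ z : Z, (0 : Ordinal.{u}) < (z : Cardinal).ord) : pcf X ⊆ pcf Z := by
  rintro c ⟨D, hD⟩
  exact ⟨D.map (Set.inclusion h), by rw [prodCof_map h hZ, hD]⟩

end Helpers

/-- **Corollary of Lemma 7.** Let `A` be a set of infinite regular cardinals
with `2^{|A|} < min(A)`, let `Ā = pcf(A)`, and assume `pcf(Ā) = Ā`.  Let `{B_ν : ν ∈ Ā}`
be a transitive family of generators for `Ā`, and for each `X ⊆ Ā` let `s(X)` be a support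
of `X`.  If `A = ⋃_{i ∈ I} A_i`, then `max(pcf(A)) = max pcf(⋃_{i ∈ I} s(pcf(A_i)))`
(both maxima exist). -/
theorem max_pcf_eq_max_pcf_supports {I : Type*} (A : Set Cardinal.{u})
    (hA : ∀ a ∈ A, a.IsRegular) (hne : A.Nonempty)
    (hsmall : 2 ^ Cardinal.mk A < Cardinal.lift.{u + 1} (sInf A))
    (hfix : pcf (pcf A) = pcf A)
    (B : Cardinal.{u} → Set Cardinal.{u})
    (hgen : IsGenerators (pcf A) B)
    (htrans : ∀ ν ∈ pcf (pcf A), ∀ ξ ∈ B ν, B ξ ⊆ B ν)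
    (s : Set Cardinal.{u} → Finset Cardinal.{u})
    (hs : ∀ X ⊆ pcf A, ((s X : Set Cardinal.{u}) ⊆ pcf X ∧
      X ⊆ ⋃ ν ∈ (s X : Set Cardinal.{u}), B ν))
    (Ai : I → Set Cardinal.{u}) (hAi : A = ⋃ i, Ai i) :
    ∃ m : Cardinal.{u}, IsGreatest (pcf A) m ∧
      IsGreatest (pcf (⋃ i, (s (pcf (Ai i)) : Set Cardinal.{u}))) m := by
  have hApos : ∀ y : A, (0 : Ordinal.{u}) < (y : Cardinal).ord :=
    fun y => zero_lt_ord (hA y y.2).pos.ne'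
  have hApcf : A ⊆ pcf A := fun a ha => ⟨pure ⟨a, ha⟩, prodCof_pure hA ha⟩
  have hPpos : ∀ y : (pcf A), (0 : Ordinal.{u}) < (y : Cardinal).ord := by
    rintro ⟨y, D, hD⟩
    refine zero_lt_ord fun h0 => ?_
    exact prodCof_ne_zero A hApos D
      (by rw [hD, show y = 0 from h0, Cardinal.lift_zero])
  obtain ⟨hsA1, hsA2⟩ := hs (pcf A) subset_rfl
  have hsA1' : (s (pcf A) : Set Cardinal.{u}) ⊆ pcf A := by
    have h := hsA1; rwa [hfix] at h
  obtain ⟨μ0, hμ0⟩ := hne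
  have hsne : (s (pcf A)).Nonempty := by
    obtain ⟨ν, hν, -⟩ := Set.mem_iUnion₂.1 (hsA2 (hApcf hμ0))
    exact ⟨ν, hν⟩
  set m := (s (pcf A)).max' hsne with hm
  have hmmem : m ∈ pcf A := hsA1' ((s (pcf A)).max'_mem hsne)
  -- upper bound
  have hub : ∀ μ ∈ pcf A, μ ≤ m := by
    intro μ hμ
    have hμ2 : μ ∈ pcf (pcf A) := by rw [hfix]; exact hμ
    obtain ⟨E, hE⟩ := hμ2
    obtain ⟨ν₀, hν₀E, hν₀least⟩ := hgen.2 E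
    have hν₀μ : ν₀ = μ := Cardinal.lift_injective (hν₀E.symm.trans hE)
    have hUmem : (⋃ ν ∈ (s (pcf A) : Set Cardinal.{u}),
        { a : (pcf A) | (a : Cardinal) ∈ B ν }) ∈ E := by
      refine Filter.mem_of_superset Filter.univ_mem ?_
      rintro ⟨a, haA⟩ -
      obtain ⟨ν, hν1, hν2⟩ := Set.mem_iUnion₂.1 (hsA2 haA)
      exact Set.mem_iUnion₂.2 ⟨ν, hν1, hν2⟩
    obtain ⟨ν, hν1, hν2⟩ :=
      (Ultrafilter.finite_biUnion_mem_iff (Finset.finite_toSet _)).1 hUmem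
    have hle : ν₀ ≤ ν := hν₀least.2 ⟨by rw [hfix]; exact hsA1' hν1, hν2⟩
    calc μ = ν₀ := hν₀μ.symm
      _ ≤ ν := hle
      _ ≤ m := (s (pcf A)).le_max' ν hν1
  -- part 2
  set Y : Set Cardinal.{u} := ⋃ i, (s (pcf (Ai i)) : Set Cardinal.{u}) with hY
  have hAiA : ∀ i, Ai i ⊆ A := fun i => hAi ▸ Set.subset_iUnion Ai i
  have hpcfAi : ∀ i, pcf (Ai i) ⊆ pcf A := fun i => pcf_mono (hAiA i) hApos
  have hYsub : Y ⊆ pcf A := by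
    rintro ν hν
    obtain ⟨i, hi⟩ := Set.mem_iUnion.1 hν
    rw [← hfix]
    exact pcf_mono (hpcfAi i) hPpos ((hs (pcf (Ai i)) (hpcfAi i)).1 hi)
  have hpcfY : pcf Y ⊆ pcf A := fun c hc => by
    rw [← hfix]; exact pcf_mono hYsub hPpos hc
  obtain ⟨hsY1, hsY2⟩ := hs Y hYsub
  have hAcov : ∀ a : A, ∃ ξ ∈ (s Y : Set Cardinal.{u}), (a : Cardinal) ∈ B ξ := by
    rintro ⟨a, haA⟩
    obtain ⟨i, hi⟩ := Set.mem_iUnion.1 (hAi ▸ haA)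
    have ha1 : a ∈ pcf (Ai i) :=
      ⟨pure ⟨a, hi⟩, prodCof_pure (fun b hb => hA b (hAiA i hb)) hi⟩
    obtain ⟨ν, hν1, hν2⟩ := Set.mem_iUnion₂.1 ((hs (pcf (Ai i)) (hpcfAi i)).2 ha1)
    have hνY : ν ∈ Y := Set.mem_iUnion.2 ⟨i, hν1⟩
    obtain ⟨ξ, hξ1, hξ2⟩ := Set.mem_iUnion₂.1 (hsY2 hνY)
    refine ⟨ξ, hξ1, ?_⟩
    have hξpcf : ξ ∈ pcf (pcf A) := by rw [hfix]; exact hpcfY (hsY1 hξ1)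
    exact htrans ξ hξpcf ν hξ2 hν2
  obtain ⟨U, hU⟩ := id hmmem
  have hUmem : (⋃ ξ ∈ (s Y : Set Cardinal.{u}), { a : A | (a : Cardinal) ∈ B ξ }) ∈ U := by
    refine Filter.mem_of_superset Filter.univ_mem ?_
    rintro a -
    obtain ⟨ξ, hξ1, hξ2⟩ := hAcov a
    exact Set.mem_iUnion₂.2 ⟨ξ, hξ1, hξ2⟩
  obtain ⟨ξ, hξ1, hξ2⟩ :=
    (Ultrafilter.finite_biUnion_mem_iff (Finset.finite_toSet _)).1 hUmem
  set E := U.map (Set.inclusion hApcf) with hE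
  have hEeq : prodCof (pcf A) E = Cardinal.lift.{u + 1} m := by
    rw [hE, prodCof_map hApcf hPpos, hU]
  have hBξE : { a : (pcf A) | (a : Cardinal) ∈ B ξ } ∈ E := by
    rw [hE, Ultrafilter.mem_map]
    exact hξ2
  obtain ⟨ν₀, hν₀E, hν₀least⟩ := hgen.2 E
  have hν₀m : ν₀ = m := Cardinal.lift_injective (hν₀E.symm.trans hEeq)
  have hξY : ξ ∈ pcf Y := hsY1 hξ1
  have h1 : m ≤ ξ := by
    rw [← hν₀m]
    exact hν₀least.2 ⟨by rw [hfix]; exact hpcfY hξY, hBξE⟩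
  have h2 : ξ ≤ m := hub ξ (hpcfY hξY)
  have hξm : ξ = m := le_antisymm h2 h1
  exact ⟨m, ⟨hmmem, hub⟩, ⟨hξm ▸ hξY, fun μ hμ => hub μ (hpcfY hμ)⟩⟩
end
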